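/- arXiv:1911.00403 — 7 statements merged into one kernel-verified Lean document; each statement's English description precedes it below -/
import Mathlib

section
/- Let n be a sufficiently large power of two and m = n+1. Consider the random restriction ρ generated as follows: pigeons i = 1, 2, …, m are processed in order; independently with probability 1/4, pigeon i is assigned a hole chosen uniformly at random among the holes of [n] not yet assigned to an earlier pigeon, and otherwise pigeon i is left unassigned. Let T be a term over the variables P_{i,k} of BinPHP^{n+1}_n that mentions at least n/2 pigeons. Say that T evaluates to zero under ρ if for some literal P_{i,k}^b of T, pigeon i is assigned by ρ and the k-th bit of the binary representation of its assigned hole equals 1−b. Then the probability that T does not evaluate to zero under ρ is at most (5/6)^{n/16}. -/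
/-- A *term*: a partial assignment of Boolean values to variables (a conjunction of
literals in which no variable occurs both positively and negatively).
The empty term `⊤` is `fun _ => none`. -/
def SATerm (V : Type) := V → Option Bool

/-- Extend a term by the literal `x^b`. -/
def SATerm.extend {V : Type} [DecidableEq V] (D : SATerm V) (x : V) (b : Bool) :
    SATerm V := fun y => if y = x then some b else D y

/-- The value `v(D ∧ x^b)`, with the convention that it is `0` whenever `D` contains the
literal complementary to `x^b`. -/
def evalLit {V : Type} [DecidableEq V] (v : SATerm V → ℝ) (D : SATerm V)
    (x : V) (b : Bool) : ℝ :=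
  if D x = some (!b) then 0 else v (D.extend x b)

/-- The set of variables occurring in a term. -/
def SATerm.vars {V : Type} (D : SATerm V) : Set V := {x | D x ≠ none}

/-- The number of literals of a term. -/
noncomputable def SATerm.size {V : Type} (D : SATerm V) : ℕ := D.vars.ncard
/-- The big disjunction `⋁_{k=1}^{r} P_{i,k}^{1−a_k}` saying that pigeon `i` does *not*
go to hole `a` (where `a_1…a_r` is the binary representation of `a`). -/
def holeClause (m r : ℕ) (i : Fin m) (a : ℕ) : List ((Fin m × Fin r) × Bool) :=
  (List.finRange r).map fun k => ((i, k), !(a.testBit k.val))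

/-- The binary pigeonhole principle `BinPHP^m_n` (with `r = log₂ n` address bits):
for every hole `a ∈ [n]` and all distinct pigeons `i ≠ i'`, the clause
`⋁_k P_{i,k}^{1−a_k} ∨ ⋁_k P_{i',k}^{1−a_k}`. -/
def BinPHP (m n r : ℕ) : Set (List ((Fin m × Fin r) × Bool)) :=
  {C | ∃ i i' : Fin m, ∃ a : Fin n,
      i ≠ i' ∧ C = holeClause m r i a.val ++ holeClause m r i' a.val}

/-- The set of pigeons mentioned by a term. -/
def mentions {m r : ℕ} (T : SATerm (Fin m × Fin r)) : Set (Fin m) :=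
  {i | ∃ k : Fin r, T (i, k) ≠ none}

/-- The number of pigeons `j < i` assigned a hole by the restriction `ρ`. -/
def assignedBefore {m n : ℕ} (ρ : Fin m → Option (Fin n)) (i : Fin m) : ℕ :=
  (Finset.univ.filter fun j => j < i ∧ (ρ j).isSome).card

/-- The probability weight contributed by pigeon `i` in the sequential random
restriction: with probability `1/4` pigeon `i` is assigned a hole chosen uniformly among
the holes not yet assigned to an earlier pigeon (each particular such hole having
probability `(1/4)·(n − #assigned earlier)⁻¹`), and otherwise (probability `3/4`) it is
left unassigned. -/
noncomputable def stepWeight {m : ℕ} (n : ℕ) (ρ : Fin m → Option (Fin n)) (i : Fin m) : ℝ :=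
  match ρ i with
  | none => 3 / 4
  | some _ => (1 / 4) * ((n : ℝ) - (assignedBefore ρ i : ℝ))⁻¹

/-- A restriction is a partial matching: no two pigeons get the same hole. -/
def IsPartialMatching {m n : ℕ} (ρ : Fin m → Option (Fin n)) : Prop :=
  ∀ i j a, ρ i = some a → ρ j = some a → i = j

open Classical in
/-- The probability of the outcome `ρ` under the sequential random restriction. -/
noncomputable def restrProb {m : ℕ} (n : ℕ) (ρ : Fin m → Option (Fin n)) : ℝ :=
  if IsPartialMatching ρ then ∏ i, stepWeight n ρ i else 0

/-- `T` evaluates to zero under `ρ`: for some literal `P_{i,k}^b` of `T`, pigeon `i` is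
assigned by `ρ` and the `k`-th bit of the binary representation of its hole is `1−b`. -/
def EvaluatesToZero {m n r : ℕ} (T : SATerm (Fin m × Fin r))
    (ρ : Fin m → Option (Fin n)) : Prop :=
  ∃ (i : Fin m) (k : Fin r) (b : Bool) (h : Fin n),
    T (i, k) = some b ∧ ρ i = some h ∧ h.val.testBit k.val = !b

/-! Process the pigeons one at a time. A pigeon mentioned by `T` has at most `n/2` holes
consistent with `T`, since one literal already fixes a bit of the hole. As long as at most `3n/8`
holes are taken, such a pigeon is therefore left unassigned or sent to a consistent hole with
probability at most `3/4 + (1/4)·(n/2)/(5n/8) = 19/20`, and with at least `n/2` mentioned pigeons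
this gives `(19/20)^(n/2)`. That more than `3n/8` pigeons are assigned is unlikely by Markov's
inequality for `2^#assigned`, whose expectation is at most `(5/4)^(n+1)`. -/

open Finset

lemma card_filter_univ_castSucc {m : ℕ} (p : Fin (m + 1) → Prop) [DecidablePred p] :
    #{i | p i} = #{i : Fin m | p i.castSucc} + if p (Fin.last m) then 1 else 0 := by
  simp only [card_filter, Fin.sum_univ_castSucc]

lemma sum_snoc {m : ℕ} {α M : Type*} [Fintype α] [AddCommMonoid M] (g : (Fin (m + 1) → α) → M) :
    ∑ f, g f = ∑ f : Fin m → α, ∑ x, g (Fin.snoc f x) := by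
  rw [← (Fin.snocEquiv fun _ => α).sum_comp, Fintype.sum_prod_type, sum_comm]
  rfl

lemma sum_filter_le_sum_filter_add_sum_filter {ι M : Type*} [AddCommMonoid M] [PartialOrder M]
    [IsOrderedAddMonoid M] {s : Finset ι} {f : ι → M} (hf : ∀ i, 0 ≤ f i) {p q r : ι → Prop}
    [DecidablePred p] [DecidablePred q] [DecidablePred r] (h : ∀ i, p i → q i ∨ r i) :
    ∑ i ∈ s.filter p, f i ≤ ∑ i ∈ s.filter q, f i + ∑ i ∈ s.filter r, f i := by
  simp only [sum_filter, ← sum_add_distrib]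
  refine sum_le_sum fun i _ => ?_
  by_cases hp : p i
  · rcases h i hp with hq | hr
    · simpa [hp, hq] using le_add_of_nonneg_right (by split_ifs <;> simp [hf])
    · simpa [hp, hr] using le_add_of_nonneg_left (by split_ifs <;> simp [hf])
  · simpa [hp] using add_nonneg (by split_ifs <;> simp [hf]) (by split_ifs <;> simp [hf])

lemma two_mul_card_filter_testBit {r : ℕ} (k : Fin r) (b : Bool) :
    2 * #{a : Fin (2 ^ r) | a.val.testBit k = b} = 2 ^ r := by
  let flip : Fin (2 ^ r) → Fin (2 ^ r) := fun a =>
    ⟨a ^^^ 2 ^ (k : ℕ), Nat.xor_lt_two_pow a.2 (Nat.pow_lt_pow_right one_lt_two k.2)⟩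
  have hflip : ∀ a, flip (flip a) = a := fun a => Fin.ext (by simp [flip])
  have hbit : ∀ a, (flip a).val.testBit k = !a.val.testBit k := fun a => by
    simp [flip, Nat.testBit_xor, Nat.testBit_two_pow_self]
  have hswap :
      #{a : Fin (2 ^ r) | a.val.testBit k = b} = #{a : Fin (2 ^ r) | ¬a.val.testBit k = b} :=
    card_nbij' flip flip (fun a => by simp [hbit])
      (fun a => by simpa [hbit] using Bool.eq_not_iff.2)
      (fun a _ => hflip a) (fun a _ => hflip a)
  have hsum := card_filter_add_card_filter_not (s := (univ : Finset (Fin (2 ^ r))))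
    (fun a => a.val.testBit k = b)
  simp only [card_univ, Fintype.card_fin] at hsum
  omega

section Restriction

variable {m n : ℕ}

def assignedCount (ρ : Fin m → Option (Fin n)) : ℕ := #{j | (ρ j).isSome}

def usedHoles (ρ : Fin m → Option (Fin n)) : Finset (Fin n) := {a | ∃ j, ρ j = some a}

lemma assignedBefore_le_assignedCount (ρ : Fin m → Option (Fin n)) (i : Fin m) :
    assignedBefore ρ i ≤ assignedCount ρ :=
  card_le_card fun j => by simp +contextual

lemma IsPartialMatching.assignedCount_le_card_usedHoles {ρ : Fin m → Option (Fin n)}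
    (hρ : IsPartialMatching ρ) : assignedCount ρ ≤ #(usedHoles ρ) := by
  calc assignedCount ρ = #((univ.filter fun j => (ρ j).isSome).image ρ) := by
        refine (card_image_of_injOn fun j hj j' _ hjj' => ?_).symm
        obtain ⟨a, ha⟩ := Option.isSome_iff_exists.1 (mem_filter.1 hj).2
        exact hρ j j' a ha (hjj' ▸ ha)
    _ ≤ #((usedHoles ρ).map Function.Embedding.some) := card_le_card fun x hx => by
        obtain ⟨j, hj, rfl⟩ := mem_image.1 hx
        obtain ⟨a, ha⟩ := Option.isSome_iff_exists.1 (mem_filter.1 hj).2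
        simpa [usedHoles, ha] using ⟨j, ha⟩
    _ = #(usedHoles ρ) := card_map _

lemma IsPartialMatching.assignedCount_le {ρ : Fin m → Option (Fin n)}
    (hρ : IsPartialMatching ρ) : assignedCount ρ ≤ n :=
  hρ.assignedCount_le_card_usedHoles.trans ((card_le_univ _).trans_eq (Fintype.card_fin n))

lemma IsPartialMatching.card_compl_usedHoles_le {ρ : Fin m → Option (Fin n)}
    (hρ : IsPartialMatching ρ) : (#(usedHoles ρ)ᶜ : ℝ) ≤ n - assignedCount ρ := by
  have := hρ.assignedCount_le_card_usedHoles
  have := card_le_univ (usedHoles ρ)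
  rw [card_compl, Fintype.card_fin] at *
  rw [Nat.cast_sub this]
  gcongr

lemma restrProb_nonneg (ρ : Fin m → Option (Fin n)) : 0 ≤ restrProb n ρ := by
  unfold restrProb
  split_ifs with hρ
  · refine prod_nonneg fun i _ => ?_
    have : (assignedBefore ρ i : ℝ) ≤ n := by
      exact_mod_cast (assignedBefore_le_assignedCount ρ i).trans hρ.assignedCount_le
    unfold stepWeight
    split
    · norm_num
    · exact mul_nonneg (by norm_num) (inv_nonneg.2 (sub_nonneg.2 this))
  · exact le_rfl

lemma restrProb_mul_le_mul {ρ : Fin m → Option (Fin n)} {a b : ℝ}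
    (h : IsPartialMatching ρ → a ≤ b) : restrProb n ρ * a ≤ restrProb n ρ * b := by
  by_cases hρ : IsPartialMatching ρ
  · exact mul_le_mul_of_nonneg_left (h hρ) (restrProb_nonneg ρ)
  · simp [restrProb, hρ]

variable (ρ : Fin m → Option (Fin n)) (x : Option (Fin n))

lemma assignedBefore_snoc_castSucc (i : Fin m) :
    assignedBefore (Fin.snoc ρ x : Fin (m + 1) → _) i.castSucc = assignedBefore ρ i := by
  simp [assignedBefore, card_filter_univ_castSucc, (Fin.castSucc_lt_last i).not_gt]

lemma assignedBefore_snoc_last :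
    assignedBefore (Fin.snoc ρ x : Fin (m + 1) → _) (Fin.last m) = assignedCount ρ := by
  simp [assignedBefore, assignedCount, card_filter_univ_castSucc, Fin.castSucc_lt_last]

lemma assignedCount_snoc :
    assignedCount (Fin.snoc ρ x : Fin (m + 1) → _) = assignedCount ρ + x.isSome.toNat := by
  cases x <;> simp [assignedCount, card_filter_univ_castSucc]

lemma stepWeight_snoc_castSucc (i : Fin m) :
    stepWeight n (Fin.snoc ρ x : Fin (m + 1) → _) i.castSucc = stepWeight n ρ i := by
  unfold stepWeight
  rw [Fin.snoc_castSucc, assignedBefore_snoc_castSucc]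

lemma isPartialMatching_snoc :
    IsPartialMatching (Fin.snoc ρ x : Fin (m + 1) → _) ↔
      IsPartialMatching ρ ∧ ∀ a, x = some a → a ∉ usedHoles ρ := by
  simp only [usedHoles, mem_filter, mem_univ, true_and, not_exists]
  constructor
  · intro h
    refine ⟨fun i j a hi hj => Fin.castSucc_injective m (h _ _ a ?_ ?_), fun a hx j hj => ?_⟩
    · simpa using hi
    · simpa using hj
    · exact (Fin.castSucc_lt_last j).ne (h _ _ a (by simpa using hj) (by simpa using hx))
  · rintro ⟨h, hx⟩ i j a hi hj
    induction i using Fin.lastCases <;> induction j using Fin.lastCases <;>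
      simp only [Fin.snoc_castSucc, Fin.snoc_last] at hi hj
    case last.last => rfl
    case last.cast j => exact (hx a hi j hj).elim
    case cast.last i => exact (hx a hj i hi).elim
    case cast.cast i j => exact congrArg _ (h i j a hi hj)

end Restriction

section Transition

variable {m n : ℕ}

/-- The probability that the next pigeon receives `x`, given the assignment `ρ` of the earlier
ones. -/
noncomputable def transitionProb (ρ : Fin m → Option (Fin n)) : Option (Fin n) → ℝ
  | none => 3 / 4
  | some a => if a ∈ usedHoles ρ then 0 else 1 / 4 * ((n : ℝ) - assignedCount ρ)⁻¹

lemma restrProb_snoc (ρ : Fin m → Option (Fin n)) (x : Option (Fin n)) :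
    restrProb n (Fin.snoc ρ x : Fin (m + 1) → _) = restrProb n ρ * transitionProb ρ x := by
  unfold restrProb
  by_cases hρ : IsPartialMatching ρ
  · by_cases hx : ∀ a, x = some a → a ∉ usedHoles ρ
    · rw [if_pos ((isPartialMatching_snoc ρ x).2 ⟨hρ, hx⟩), if_pos hρ, Fin.prod_univ_castSucc]
      simp only [stepWeight_snoc_castSucc]
      congr 1
      cases x <;> simp_all [stepWeight, assignedBefore_snoc_last, transitionProb]
    · obtain ⟨a, rfl, ha⟩ : ∃ a, x = some a ∧ a ∈ usedHoles ρ := by simpa using hx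
      rw [if_neg fun h => hx ((isPartialMatching_snoc ρ _).1 h).2]
      simp [transitionProb, ha]
  · rw [if_neg fun h => hρ ((isPartialMatching_snoc ρ x).1 h).1, if_neg hρ, zero_mul]

variable {ρ : Fin m → Option (Fin n)}

lemma IsPartialMatching.transitionProb_nonneg (hρ : IsPartialMatching ρ) (x : Option (Fin n)) :
    0 ≤ transitionProb ρ x := by
  have : (assignedCount ρ : ℝ) ≤ n := by exact_mod_cast hρ.assignedCount_le
  unfold transitionProb
  split
  · norm_num
  · split_ifs
    · exact le_rfl
    · exact mul_nonneg (by norm_num) (inv_nonneg.2 (sub_nonneg.2 this))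

lemma transitionProb_none : transitionProb ρ none = 3 / 4 := rfl

lemma IsPartialMatching.sum_transitionProb_some_le (hρ : IsPartialMatching ρ) :
    ∑ a, transitionProb ρ (some a) ≤ 1 / 4 := by
  have hfree := hρ.card_compl_usedHoles_le
  have hsum : ∑ a, transitionProb ρ (some a)
      = 1 / 4 * (#(usedHoles ρ)ᶜ / ((n : ℝ) - assignedCount ρ)) := by
    simp [transitionProb, sum_ite, filter_not, compl_eq_univ_sdiff, div_eq_mul_inv, mul_left_comm]
  rw [hsum]
  exact mul_le_of_le_one_right (by norm_num)
    (div_le_one_of_le₀ hfree ((Nat.cast_nonneg _).trans hfree))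

lemma IsPartialMatching.sum_transitionProb_mul_pow_le (hρ : IsPartialMatching ρ) {l : ℝ}
    (hl : 0 ≤ l) : ∑ x, transitionProb ρ x * l ^ x.isSome.toNat ≤ (3 + l) / 4 := by
  rw [Fintype.sum_option, transitionProb_none]
  simp only [Option.isSome_none, Option.isSome_some, Bool.toNat_false, Bool.toNat_true, pow_zero,
    pow_one, ← sum_mul]
  nlinarith [hρ.sum_transitionProb_some_le]

lemma sum_restrProb_mul_pow_assignedCount_le {l : ℝ} (hl : 0 ≤ l) :
    ∀ m, ∑ ρ : Fin m → Option (Fin n), restrProb n ρ * l ^ assignedCount ρ ≤ ((3 + l) / 4) ^ m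
  | 0 => by simp [restrProb, IsPartialMatching, assignedCount]
  | m + 1 => calc
      _ = ∑ ρ : Fin m → Option (Fin n), restrProb n ρ *
            (l ^ assignedCount ρ * ∑ x, transitionProb ρ x * l ^ x.isSome.toNat) := by
          rw [sum_snoc]
          simp only [restrProb_snoc, assignedCount_snoc, pow_add, mul_sum]
          exact sum_congr rfl fun ρ _ => sum_congr rfl fun x _ => by ring
      _ ≤ ∑ ρ : Fin m → Option (Fin n), restrProb n ρ * (l ^ assignedCount ρ * ((3 + l) / 4)) :=
          sum_le_sum fun ρ _ => restrProb_mul_le_mul fun hρ =>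
            mul_le_mul_of_nonneg_left (hρ.sum_transitionProb_mul_pow_le hl) (by positivity)
      _ = (∑ ρ : Fin m → Option (Fin n), restrProb n ρ * l ^ assignedCount ρ) * ((3 + l) / 4) := by
          simp only [sum_mul, mul_assoc]
      _ ≤ ((3 + l) / 4) ^ (m + 1) := by
          rw [pow_succ]
          gcongr
          exact sum_restrProb_mul_pow_assignedCount_le hl m

end Transition

section Bounds

variable {m n : ℕ}

lemma sum_restrProb_lt_assignedCount_le {l : ℝ} (hl : 1 ≤ l) (m t : ℕ) :
    ∑ ρ ∈ univ.filter (fun ρ : Fin m → Option (Fin n) => t < assignedCount ρ), restrProb n ρ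
      ≤ ((3 + l) / 4) ^ m / l ^ (t + 1) := by
  rw [le_div_iff₀ (by positivity), sum_mul]
  calc _ ≤ ∑ ρ ∈ univ.filter (fun ρ : Fin m → Option (Fin n) => t < assignedCount ρ),
          restrProb n ρ * l ^ assignedCount ρ :=
        sum_le_sum fun ρ hρ => mul_le_mul_of_nonneg_left
          (pow_le_pow_right₀ hl (mem_filter.1 hρ).2) (restrProb_nonneg ρ)
    _ ≤ ∑ ρ : Fin m → Option (Fin n), restrProb n ρ * l ^ assignedCount ρ :=
        sum_le_sum_of_subset_of_nonneg (filter_subset _ _) fun ρ _ _ =>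
          mul_nonneg (restrProb_nonneg ρ) (by positivity)
    _ ≤ _ := sum_restrProb_mul_pow_assignedCount_le (by linarith) m

def RespectsHoles (A : Fin m → Finset (Fin n)) (ρ : Fin m → Option (Fin n)) : Prop :=
  ∀ i, ∀ a ∈ ρ i, a ∈ A i

instance (A : Fin m → Finset (Fin n)) : DecidablePred (RespectsHoles A) := fun _ => by
  unfold RespectsHoles
  infer_instance

lemma respectsHoles_snoc (A : Fin (m + 1) → Finset (Fin n)) (ρ : Fin m → Option (Fin n))
    (x : Option (Fin n)) :
    RespectsHoles A (Fin.snoc ρ x : Fin (m + 1) → _) ↔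
      RespectsHoles (fun i => A i.castSucc) ρ ∧ ∀ a ∈ x, a ∈ A (Fin.last m) := by
  simp [RespectsHoles, Fin.forall_fin_succ']

/-- An upper bound for the probability that the next pigeon is left unassigned or sent into `S`,
valid while at most `t` pigeons are assigned. -/
noncomputable def survivalFactor (n t : ℕ) (S : Finset (Fin n)) : ℝ :=
  3 / 4 + 1 / 4 * min 1 (#S / ((n : ℝ) - t))

lemma survivalFactor_nonneg {t : ℕ} (ht : t ≤ n) (S : Finset (Fin n)) :
    0 ≤ survivalFactor n t S := by
  have : 0 ≤ min 1 (#S / ((n : ℝ) - t)) :=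
    le_min zero_le_one (div_nonneg (Nat.cast_nonneg _) (sub_nonneg.2 (by exact_mod_cast ht)))
  unfold survivalFactor
  linarith

lemma IsPartialMatching.sum_transitionProb_ite_le_survivalFactor {ρ : Fin m → Option (Fin n)}
    (hρ : IsPartialMatching ρ) (S : Finset (Fin n)) {t : ℕ} (ht : t < n)
    (hc : assignedCount ρ ≤ t) :
    ∑ x : Option (Fin n), (if ∀ a ∈ x, a ∈ S then transitionProb ρ x else 0)
      ≤ survivalFactor n t S := by
  rw [Fintype.sum_option, if_pos (by simp), transitionProb_none, survivalFactor,
    mul_min_of_nonneg _ _ (by norm_num), mul_one]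
  simp only [Option.mem_def, Option.some.injEq, forall_eq', Fintype.sum_ite_mem]
  gcongr
  refine le_min ((sum_le_sum_of_subset_of_nonneg (subset_univ S) fun a _ _ =>
    hρ.transitionProb_nonneg _).trans hρ.sum_transitionProb_some_le) ?_
  have hc' : (assignedCount ρ : ℝ) ≤ t := by exact_mod_cast hc
  have hnt : (0 : ℝ) < n - t := sub_pos.2 (by exact_mod_cast ht)
  calc ∑ a ∈ S, transitionProb ρ (some a) ≤ #S • (1 / 4 * ((n : ℝ) - t)⁻¹) :=
        sum_le_card_nsmul _ _ _ fun a _ => by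
          dsimp only [transitionProb]
          split_ifs
          · positivity
          · gcongr
    _ = 1 / 4 * (#S / ((n : ℝ) - t)) := by rw [nsmul_eq_mul]; ring

lemma sum_snoc_respectsHoles_le {t : ℕ} (ht : t < n) (A : Fin (m + 1) → Finset (Fin n))
    (ρ : Fin m → Option (Fin n)) :
    ∑ x, (if RespectsHoles A (Fin.snoc ρ x : Fin (m + 1) → _) ∧
        assignedCount (Fin.snoc ρ x : Fin (m + 1) → _) ≤ t
      then restrProb n (Fin.snoc ρ x : Fin (m + 1) → _) else 0)
      ≤ (if RespectsHoles (fun i => A i.castSucc) ρ ∧ assignedCount ρ ≤ t then restrProb n ρ else 0)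
        * survivalFactor n t (A (Fin.last m)) := by
  simp only [respectsHoles_snoc, assignedCount_snoc]
  split_ifs with hρ
  · calc _ ≤ ∑ x, restrProb n ρ * (if ∀ a ∈ x, a ∈ A (Fin.last m) then transitionProb ρ x else 0) :=
          sum_le_sum fun x _ => by
            split_ifs with h hx hx
            exacts [(restrProb_snoc ρ x).le, (hx h.1.2).elim,
              restrProb_snoc ρ x ▸ restrProb_nonneg _, by simp]
      _ ≤ _ := by
          rw [← mul_sum]
          exact restrProb_mul_le_mul fun hm => hm.sum_transitionProb_ite_le_survivalFactor _ ht hρ.2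
  · refine (sum_eq_zero fun x _ => if_neg fun h => hρ ⟨h.1.1, ?_⟩).le.trans_eq (zero_mul _).symm
    exact (Nat.le_add_right _ _).trans h.2

lemma sum_restrProb_respectsHoles_le {t : ℕ} (ht : t < n) :
    ∀ {m} (A : Fin m → Finset (Fin n)),
      ∑ ρ ∈ univ.filter (fun ρ => RespectsHoles A ρ ∧ assignedCount ρ ≤ t), restrProb n ρ
        ≤ ∏ i, survivalFactor n t (A i)
  | 0, A => by simp [restrProb, IsPartialMatching, RespectsHoles, assignedCount]
  | m + 1, A => by
    rw [sum_filter, sum_snoc, Fin.prod_univ_castSucc]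
    calc _ ≤ ∑ ρ : Fin m → Option (Fin n),
          (if RespectsHoles (fun i => A i.castSucc) ρ ∧ assignedCount ρ ≤ t
            then restrProb n ρ else 0) * survivalFactor n t (A (Fin.last m)) :=
          sum_le_sum fun ρ _ => sum_snoc_respectsHoles_le ht A ρ
      _ = (∑ ρ ∈ univ.filter (fun ρ => RespectsHoles (fun i => A i.castSucc) ρ ∧
            assignedCount ρ ≤ t), restrProb n ρ) * survivalFactor n t (A (Fin.last m)) := by
          rw [sum_filter, sum_mul]
      _ ≤ _ := mul_le_mul_of_nonneg_right (sum_restrProb_respectsHoles_le ht _)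
          (survivalFactor_nonneg ht.le _)

lemma survivalFactor_le_one {t : ℕ} (S : Finset (Fin n)) : survivalFactor n t S ≤ 1 := by
  unfold survivalFactor
  linarith [min_le_left 1 (#S / ((n : ℝ) - t))]

lemma survivalFactor_le_of_two_mul_card_le {t : ℕ} {S : Finset (Fin n)} (hn : 0 < n)
    (hS : 2 * #S ≤ n) (ht : 8 * t ≤ 3 * n) : survivalFactor n t S ≤ 19 / 20 := by
  have hS' : (#S : ℝ) ≤ n / 2 := by rw [le_div_iff₀ two_pos]; exact_mod_cast (mul_comm 2 #S ▸ hS)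
  have ht' : (n : ℝ) * (5 / 8) ≤ n - t := by
    linarith [show (8 * t : ℝ) ≤ 3 * n by exact_mod_cast ht]
  have hn' : (0 : ℝ) < n := by exact_mod_cast hn
  calc survivalFactor n t S ≤ 3 / 4 + 1 / 4 * (#S / ((n : ℝ) - t)) := by
        unfold survivalFactor; gcongr; exact min_le_right _ _
    _ ≤ 3 / 4 + 1 / 4 * ((n / 2) / (n * (5 / 8))) := by gcongr
    _ = 19 / 20 := by field_simp; norm_num

lemma sum_restrProb_respectsHoles_le_pow {t : ℕ} (ht : t < n) (A : Fin m → Finset (Fin n))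
    (M : Finset (Fin m)) {c : ℝ} (hM : ∀ i ∈ M, survivalFactor n t (A i) ≤ c) :
    ∑ ρ ∈ univ.filter (fun ρ => RespectsHoles A ρ ∧ assignedCount ρ ≤ t), restrProb n ρ
      ≤ c ^ #M := by
  refine (sum_restrProb_respectsHoles_le ht A).trans ?_
  calc ∏ i, survivalFactor n t (A i) ≤ ∏ i, if i ∈ M then c else 1 :=
        prod_le_prod (fun i _ => survivalFactor_nonneg ht.le _) fun i _ => by
          split_ifs with hi
          exacts [hM i hi, survivalFactor_le_one _]
    _ = c ^ #M := by rw [Fintype.prod_ite_mem, prod_const]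

end Bounds

section Terms

variable {m n r : ℕ}

def consistentHoles (T : SATerm (Fin m × Fin r)) (i : Fin m) : Finset (Fin n) :=
  {a | ∀ k b, T (i, k) = some b → a.val.testBit k = b}

lemma not_evaluatesToZero_iff (T : SATerm (Fin m × Fin r)) (ρ : Fin m → Option (Fin n)) :
    ¬EvaluatesToZero T ρ ↔ RespectsHoles (consistentHoles T) ρ := by
  simp only [RespectsHoles, consistentHoles, Option.mem_def, mem_filter, mem_univ, true_and]
  constructor
  · intro h i a ha k b hb
    by_contra hne
    exact h ⟨i, k, b, a, hb, ha, Bool.eq_not_iff.2 hne⟩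
  · rintro h ⟨i, k, b, a, hb, ha, hbit⟩
    exact Bool.eq_not_iff.1 hbit (h i a ha k b hb)

lemma two_mul_card_consistentHoles_le (hn : n = 2 ^ r) {T : SATerm (Fin m × Fin r)} {i : Fin m}
    (hi : i ∈ mentions T) : 2 * #(consistentHoles T i : Finset (Fin n)) ≤ n := by
  subst hn
  obtain ⟨k, hk⟩ := hi
  obtain ⟨b, hb⟩ := Option.ne_none_iff_exists'.1 hk
  calc 2 * #(consistentHoles T i) ≤ 2 * #{a : Fin (2 ^ r) | a.val.testBit k = b} := by
        gcongr
        intro a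
        simp only [consistentHoles, mem_filter, mem_univ, true_and]
        exact fun h => h k b hb
    _ = 2 ^ r := two_mul_card_filter_testBit k b

end Terms

lemma nineteen_twentieths_pow_add_le_five_sixths_pow (q : ℕ) (hq : 4 ≤ q) :
    (19 / 20 : ℝ) ^ (8 * q) + (5 / 4) ^ (16 * q + 1) / 2 ^ (6 * q + 1) ≤ (5 / 6) ^ q := by
  have key : ∀ c : ℝ, 0 ≤ c → c ≤ 1 → c ^ q ≤ c ^ 4 := fun c h0 h1 => pow_le_pow_of_le_one h0 h1 hq
  have h1 : (19 / 20 : ℝ) ^ (8 * q) = (6 / 5 * (19 / 20) ^ 8) ^ q * (5 / 6) ^ q := by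
    rw [← mul_pow, pow_mul]; norm_num
  have h2 : (5 / 4 : ℝ) ^ (16 * q + 1) / 2 ^ (6 * q + 1) = 5 / 8 * ((5 / 4) ^ 16 / 2 ^ 6) ^ q := by
    rw [pow_succ, pow_succ, pow_mul, pow_mul, div_pow ((5 / 4 : ℝ) ^ 16)]
    ring
  have h3 : ((5 / 4 : ℝ) ^ 16 / 2 ^ 6) ^ q
      = (6 / 5 * ((5 / 4) ^ 16 / 2 ^ 6)) ^ q * (5 / 6) ^ q := by
    rw [← mul_pow]; norm_num
  have ha := key (6 / 5 * (19 / 20) ^ 8) (by norm_num) (by norm_num)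
  have hb := key (6 / 5 * ((5 / 4) ^ 16 / 2 ^ 6)) (by norm_num) (by norm_num)
  have h56 : (0 : ℝ) < (5 / 6) ^ q := by positivity
  rw [h1, h2, h3]
  nlinarith

open Classical in
/-- For sufficiently large powers of two `n` (with `r = log₂ n` and `m = n+1` pigeons),
any term `T` over the variables of `BinPHP^{n+1}_n` mentioning at least `n/2` pigeons
fails to evaluate to zero under the sequential random restriction with probability at
most `(5/6)^{n/16}`. -/
theorem wide_term_killed_whp :
    ∃ N : ℕ, ∀ n, N ≤ n → ∀ r : ℕ, n = 2 ^ r →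
      ∀ T : SATerm (Fin (n + 1) × Fin r),
        (n : ℝ) / 2 ≤ ((mentions T).ncard : ℝ) →
        ∑ ρ ∈ Finset.univ.filter
            (fun ρ : Fin (n + 1) → Option (Fin n) => ¬ EvaluatesToZero T ρ),
          restrProb n ρ ≤ (5 / 6 : ℝ) ^ ((n : ℝ) / 16) := by
  refine ⟨64, fun n hn r hr T hT => ?_⟩
  obtain ⟨q, rfl⟩ : 16 ∣ n := by
    have : 2 ^ 3 < 2 ^ r := hr ▸ by omega
    exact hr ▸ Nat.pow_dvd_pow 2 ((Nat.pow_lt_pow_iff_right one_lt_two).1 this)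
  have hM : 8 * q ≤ #(mentions T).toFinset := by
    rw [← Set.ncard_eq_toFinset_card']
    exact_mod_cast (by push_cast at hT ⊢; linarith : ((8 * q : ℕ) : ℝ) ≤ (mentions T).ncard)
  have hfactor : ∀ i ∈ (mentions T).toFinset,
      survivalFactor (16 * q) (6 * q) (consistentHoles T i) ≤ 19 / 20 := fun i hi =>
    survivalFactor_le_of_two_mul_card_le (by omega)
      (two_mul_card_consistentHoles_le hr (Set.mem_toFinset.1 hi)) (by omega)
  calc _ ≤ ∑ ρ ∈ univ.filter (fun ρ => RespectsHoles (consistentHoles T) ρ ∧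
          assignedCount ρ ≤ 6 * q), restrProb (16 * q) ρ
        + ∑ ρ ∈ univ.filter (fun ρ => 6 * q < assignedCount ρ), restrProb (16 * q) ρ :=
        sum_filter_le_sum_filter_add_sum_filter restrProb_nonneg fun ρ h =>
          (le_or_gt _ _).imp (⟨(not_evaluatesToZero_iff T ρ).1 h, ·⟩) id
    _ ≤ (19 / 20) ^ (8 * q) + (5 / 4) ^ (16 * q + 1) / 2 ^ (6 * q + 1) := by
        gcongr
        · exact (sum_restrProb_respectsHoles_le_pow (by omega) _ _ hfactor).trans
            (pow_le_pow_of_le_one (by norm_num) (by norm_num) hM)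
        · exact (sum_restrProb_lt_assignedCount_le one_le_two _ _).trans_eq (by norm_num)
    _ ≤ (5 / 6) ^ q := nineteen_twentieths_pow_add_le_five_sixths_pow q (by omega)
    _ = (5 / 6 : ℝ) ^ (((16 * q : ℕ) : ℝ) / 16) := by
        rw [← Real.rpow_natCast]; push_cast; ring_nf
end

section
/- Let n be a sufficiently large power of two. Every SA refutation of BinPHP^{n+1}_n (every infeasible finite subset of its SA lifted system) contains at least (6/5)^{n/16} − 1 distinct terms. -/
/-- A constraint of the Sherali--Adams lifted system of a CNF (clauses are lists of
literals; a literal is a pair of a variable and a polarity). -/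
inductive SACon (V : Type) where
  | top : SACon V
  | negation (D : SATerm V) (x : V) : SACon V
  | bound (D : SATerm V) (x : V) (b : Bool) : SACon V
  | clause (D : SATerm V) (C : List (V × Bool)) : SACon V

/-- What it means for `v` to satisfy a constraint of the SA lifted system of the CNF `F`:
(i) `v(⊤) = 1`; (ii) `v(D∧x) + v(D∧¬x) = v(D)` for `x` not occurring in `D`;
(iii) `0 ≤ v(D∧l) ≤ v(D)`; (iv) `v(D∧l₁) + … + v(D∧lₜ) ≥ v(D)` for every clause
`l₁∨…∨lₜ` of `F`. -/
def SACon.holds {V : Type} [DecidableEq V] (F : Set (List (V × Bool)))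
    (v : SATerm V → ℝ) : SACon V → Prop
  | .top => v (fun _ => none) = 1
  | .negation D x => D x = none →
      v (D.extend x true) + v (D.extend x false) = v D
  | .bound D x b => 0 ≤ evalLit v D x b ∧ evalLit v D x b ≤ v D
  | .clause D C => C ∈ F → v D ≤ (C.map fun l => evalLit v D l.1 l.2).sum

/-- The terms occurring in a constraint. -/
def SACon.termsOf {V : Type} [DecidableEq V] : SACon V → Set (SATerm V)
  | .top => {fun _ => none}
  | .negation D x => {D, D.extend x true, D.extend x false}
  | .bound D x b => {D, D.extend x b}
  | .clause D C => insert D {T | ∃ l ∈ C, T = D.extend l.1 l.2}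
/-!
For a partial matching `E` of pigeons to holes, value a term `D` by `0` if it contradicts `E`,
and otherwise by the probability that a uniformly random injective placement of the unmatched
pigeons mentioned by `D` into the holes left free by `E` agrees with `D`. This ratio does not
change when further unmentioned pigeons are placed, so all terms of one constraint can be
evaluated over a common set of placed pigeons, where the SA constraints become counting
identities; a hole clause holds because its two pigeons cannot share the hole. Hence the
valuation satisfies every constraint whose terms mention few unmatched pigeons compared with
the number of free holes.

Write `n = 16 t`, embed the pigeons into `Fin (24 t)` and match pigeon `p` to hole `π p` when
`π p < 14 t`, for a uniformly random permutation `π`. A term mentioning at least `t` pigeons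
stays consistent with probability at most `(18 t)^t / (24 t)(24 t - 1)⋯(23 t + 1) < (5/6)^t`,
since for each of its pigeons at most `8 t` of the `14 t` matching slots agree with a given
address bit. So if the refutation has fewer than `(6/5)^t` terms, some `π` kills every term
mentioning at least `t` pigeons while leaving `2 t` holes free, and its valuation satisfies the
whole refutation.
-/

open Finset

namespace SATerm

variable {V : Type} [DecidableEq V]

@[simp] lemma extend_apply_self (D : SATerm V) (x : V) (b : Bool) : D.extend x b x = some b := by
  simp [extend]

lemma extend_apply_of_ne (D : SATerm V) {x y : V} (b : Bool) (h : y ≠ x) :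
    D.extend x b y = D y := by
  simp [extend, h]

lemma extend_eq_self {D : SATerm V} {x : V} {b : Bool} (h : D x = some b) : D.extend x b = D := by
  funext y
  by_cases hy : y = x
  · simp [extend, hy, h]
  · simp [extend, hy]

lemma termsOf_finite (c : SACon V) : c.termsOf.Finite := by
  rcases c with _ | ⟨D, x⟩ | ⟨D, x, b⟩ | ⟨D, C⟩
  · exact Set.finite_singleton _
  · exact ((Set.finite_singleton _).insert _).insert _
  · exact (Set.finite_singleton _).insert _
  · refine Set.Finite.insert _ ((C.finite_toSet.image fun l => D.extend l.1 l.2).subset ?_)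
    rintro T ⟨l, hl, rfl⟩
    exact ⟨l, hl, rfl⟩

end SATerm

lemma evalLit_eq_of_eq_some {V : Type} [DecidableEq V] (v : SATerm V → ℝ) {D : SATerm V}
    {x : V} {b : Bool} (h : D x = some b) : evalLit v D x b = v D := by
  simp [evalLit, h, SATerm.extend_eq_self h]

lemma evalLit_nonneg {V : Type} [DecidableEq V] {v : SATerm V → ℝ} (hv : ∀ D, 0 ≤ v D)
    (D : SATerm V) (x : V) (b : Bool) : 0 ≤ evalLit v D x b := by
  unfold evalLit
  split
  · exact le_rfl
  · exact hv _

lemma mem_holeClause {m r : ℕ} {i p : Fin m} {a : ℕ} {k : Fin r} {b : Bool} :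
    ((p, k), b) ∈ holeClause m r i a ↔ p = i ∧ b = !a.testBit k := by
  simp [holeClause, eq_comm]

lemma nodup_holeClause_append {m r : ℕ} {i i' : Fin m} (hii : i ≠ i') (a : ℕ) :
    (holeClause m r i a ++ holeClause m r i' a).Nodup := by
  have hnd : ∀ j, (holeClause m r j a).Nodup := fun j =>
    (List.nodup_finRange r).map fun k k' h => by simpa using congrArg (·.1.2) h
  refine (hnd i).append (hnd i') ?_
  rintro ⟨⟨p, k⟩, b⟩ h h'
  exact hii ((mem_holeClause.mp h).1.symm.trans (mem_holeClause.mp h').1)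

lemma exists_testBit_ne_of_lt {r x y : ℕ} (hx : x < 2 ^ r) (hy : y < 2 ^ r) (hxy : x ≠ y) :
    ∃ k : Fin r, x.testBit k ≠ y.testBit k := by
  obtain ⟨k, hk⟩ := Nat.exists_testBit_ne_of_ne hxy
  refine ⟨⟨k, ?_⟩, hk⟩
  by_contra! hrk
  have hpow := Nat.pow_le_pow_right two_pos hrk
  rw [Nat.testBit_lt_two_pow (hx.trans_le hpow), Nat.testBit_lt_two_pow (hy.trans_le hpow)] at hk
  exact hk rfl

/-- Flipping bit `k` swaps the two halves of `[0, 2 ^ r)`. -/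
lemma card_filter_testBit_eq {r k : ℕ} (hk : k < r) (c : Bool) :
    #{x ∈ range (2 ^ r) | x.testBit k = c} = 2 ^ (r - 1) := by
  have hflip : ∀ c : Bool, #{x ∈ range (2 ^ r) | x.testBit k = c} ≤
      #{x ∈ range (2 ^ r) | x.testBit k = !c} := by
    intro c
    refine card_le_card_of_injOn (· ^^^ 2 ^ k) (fun x hx => ?_)
      fun x _ y _ hxy => Nat.xor_left_injective hxy
    simp only [coe_filter, mem_range, Set.mem_ofPred_eq] at hx ⊢
    refine ⟨Nat.xor_lt_two_pow hx.1 (Nat.pow_lt_pow_right one_lt_two hk), ?_⟩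
    simp [Nat.testBit_two_pow_self, hx.2]
  have hsum := card_filter_add_card_filter_not (s := range (2 ^ r)) (fun x => x.testBit k = c)
  rw [card_range, filter_congr fun x _ => Bool.eq_not.symm] at hsum
  have hr : 2 ^ r = 2 * 2 ^ (r - 1) := by
    rw [← pow_succ']
    congr 1
    omega
  have := hflip (!c)
  rw [Bool.not_not] at this
  linarith [hflip c]

instance {m r : ℕ} (D : SATerm (Fin m × Fin r)) : DecidablePred (· ∈ mentions D) :=
  fun p => inferInstanceAs (Decidable (∃ k : Fin r, D (p, k) ≠ none))

lemma mentions_extend {m r : ℕ} (D : SATerm (Fin m × Fin r)) (p : Fin m) (k : Fin r)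
    (b : Bool) : mentions (D.extend (p, k) b) = insert p (mentions D) := by
  ext q
  by_cases hq : q = p
  · subst hq
    exact iff_of_true ⟨k, by simp⟩ (Set.mem_insert _ _)
  · have hne : ∀ k', (q, k') ≠ (p, k) := fun k' h => hq (congrArg Prod.fst h)
    simp [mentions, hq, SATerm.extend_apply_of_ne _ _ (hne _)]

lemma notMem_mentions {m r : ℕ} {D : SATerm (Fin m × Fin r)} {p : Fin m} :
    p ∉ mentions D ↔ ∀ k, D (p, k) = none := by
  simp [mentions]

structure PartialMatching (m n : ℕ) where
  hole : Fin m → Option (Fin n)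
  inj : ∀ p p' h, hole p = some h → hole p' = some h → p = p'

namespace PartialMatching

section Definitions

variable {m n r : ℕ} (E : PartialMatching m n)

def freeHoles : Finset (Fin n) := {h | ∀ p, E.hole p ≠ some h}

def Consistent (D : SATerm (Fin m × Fin r)) : Prop :=
  ∀ p k c h, E.hole p = some h → D (p, k) = some c → h.val.testBit k = c

instance (D : SATerm (Fin m × Fin r)) : Decidable (E.Consistent D) := by
  unfold Consistent
  infer_instance

def unmatchedMentions (D : SATerm (Fin m × Fin r)) : Finset (Fin m) :=
  {p ∈ (mentions D).toFinset | E.hole p = none}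

structure IsPlacement (Q : Finset (Fin m)) (D : SATerm (Fin m × Fin r))
    (τ : Fin m → Option (Fin n)) : Prop where
  isSome_iff : ∀ p, (τ p).isSome ↔ p ∈ Q
  inj : ∀ p p' h, τ p = some h → τ p' = some h → p = p'
  mem_freeHoles : ∀ p h, τ p = some h → h ∈ E.freeHoles
  testBit_eq : ∀ p k c h, D (p, k) = some c → τ p = some h → h.val.testBit k = c

noncomputable def placements (Q : Finset (Fin m)) (D : SATerm (Fin m × Fin r)) :
    Finset (Fin m → Option (Fin n)) := by
  classical exact {τ | E.IsPlacement Q D τ}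

/-- The denominator is the number of all injective placements of `Q` into the free holes. -/
noncomputable def placementRatio (Q : Finset (Fin m)) (D : SATerm (Fin m × Fin r)) : ℝ :=
  #(E.placements Q D) / (#E.freeHoles).descFactorial #Q

noncomputable def valuation (D : SATerm (Fin m × Fin r)) : ℝ :=
  if E.Consistent D then E.placementRatio (E.unmatchedMentions D) D else 0

end Definitions

variable {m n r : ℕ} {E : PartialMatching m n} {Q R : Finset (Fin m)}
  {D D' : SATerm (Fin m × Fin r)} {τ : Fin m → Option (Fin n)} {p : Fin m} {k : Fin r}
  {h : Fin n}

lemma mem_placements : τ ∈ E.placements Q D ↔ E.IsPlacement Q D τ := by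
  simp [placements]

namespace IsPlacement

lemma mem_of_eq_some (hτ : E.IsPlacement Q D τ) (hp : τ p = some h) : p ∈ Q :=
  (hτ.isSome_iff p).mp (by simp [hp])

lemma eq_none (hτ : E.IsPlacement Q D τ) (hp : p ∉ Q) : τ p = none :=
  Option.not_isSome_iff_eq_none.mp fun h => hp ((hτ.isSome_iff p).mp h)

lemma exists_eq_some (hτ : E.IsPlacement Q D τ) (hp : p ∈ Q) : ∃ h, τ p = some h :=
  Option.isSome_iff_exists.mp ((hτ.isSome_iff p).mpr hp)

lemma of_agreeOn (hτ : E.IsPlacement Q D τ) (hDD' : ∀ q ∈ Q, ∀ k, D' (q, k) = D (q, k)) :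
    E.IsPlacement Q D' τ where
  isSome_iff := hτ.isSome_iff
  inj := hτ.inj
  mem_freeHoles := hτ.mem_freeHoles
  testBit_eq q k c h hc hq := hτ.testBit_eq q k c h (hDD' q (hτ.mem_of_eq_some hq) k ▸ hc) hq

lemma card_range (hτ : E.IsPlacement Q D τ) :
    #({h | ∃ q, τ q = some h} : Finset (Fin n)) = #Q := by
  symm
  refine Finset.card_bij (fun q hq => (τ q).get ((hτ.isSome_iff q).mpr hq)) ?_ ?_ ?_
  · intro q _
    simp
  · intro q _ q' _ hqq'
    exact hτ.inj q q' _ (Option.some_get _).symm (by rw [hqq']; exact (Option.some_get _).symm)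
  · intro h hh
    obtain ⟨q, hq⟩ := (mem_filter.mp hh).2
    exact ⟨q, hτ.mem_of_eq_some hq, by simp [hq]⟩

end IsPlacement

lemma placements_extend_of_notMem (hp : p ∉ Q) (b : Bool) :
    E.placements Q (D.extend (p, k) b) = E.placements Q D := by
  have hagree : ∀ q ∈ Q, ∀ k', (D.extend (p, k) b) (q, k') = D (q, k') := fun q hq k' =>
    SATerm.extend_apply_of_ne _ _ fun h => hp ((Prod.mk.inj h).1 ▸ hq)
  ext τ
  simp only [mem_placements]
  exact ⟨fun hτ => hτ.of_agreeOn fun q hq k' => (hagree q hq k').symm,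
    fun hτ => hτ.of_agreeOn hagree⟩

lemma placements_extend (hx : D (p, k) = none) (b : Bool) :
    E.placements Q (D.extend (p, k) b) =
      {τ ∈ E.placements Q D | ∀ h, τ p = some h → h.val.testBit k = b} := by
  ext τ
  simp only [mem_filter, mem_placements]
  constructor
  · intro hτ
    refine ⟨⟨hτ.isSome_iff, hτ.inj, hτ.mem_freeHoles, fun q k' c h hc hq => ?_⟩,
      fun h hp => hτ.testBit_eq p k b h (by simp) hp⟩
    refine hτ.testBit_eq q k' c h ?_ hq
    rwa [SATerm.extend_apply_of_ne]
    intro hqk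
    obtain ⟨rfl, rfl⟩ := Prod.mk.inj hqk
    simp [hx] at hc
  · rintro ⟨hτ, hb⟩
    refine ⟨hτ.isSome_iff, hτ.inj, hτ.mem_freeHoles, fun q k' c h hc hq => ?_⟩
    by_cases hqk : (q, k') = (p, k)
    · obtain ⟨rfl, rfl⟩ := Prod.mk.inj hqk
      simp only [SATerm.extend_apply_self, Option.some.injEq] at hc
      exact hc ▸ hb h hq
    · exact hτ.testBit_eq q k' c h (by rwa [SATerm.extend_apply_of_ne _ _ hqk] at hc) hq

lemma card_placements_extend_le (hx : D (p, k) = none) (b : Bool) :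
    #(E.placements Q (D.extend (p, k) b)) ≤ #(E.placements Q D) := by
  rw [placements_extend hx]
  exact card_filter_le _ _

lemma card_placements_extend_add (hp : p ∈ Q) (hx : D (p, k) = none) :
    #(E.placements Q (D.extend (p, k) true)) + #(E.placements Q (D.extend (p, k) false)) =
      #(E.placements Q D) := by
  rw [placements_extend hx, placements_extend hx,
    ← card_filter_add_card_filter_not (s := E.placements Q D)
    (fun τ => ∀ h, τ p = some h → h.val.testBit k = true)]
  congr 2
  refine filter_congr fun τ hτ => ?_
  obtain ⟨h, hh⟩ := (mem_placements.mp hτ).exists_eq_some hp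
  simp [hh]

open Function

lemma IsPlacement.update_none (hτ : E.IsPlacement (insert p Q) D τ) (hp : p ∉ Q) :
    E.IsPlacement Q D (update τ p none) where
  isSome_iff q := by
    by_cases hq : q = p
    · simp [hq, hp]
    · simp [hq, hτ.isSome_iff]
  inj q q' h hq hq' := by
    simp only [update_apply] at hq hq'
    split_ifs at hq hq'
    exact hτ.inj q q' h hq hq'
  mem_freeHoles q h hq := by
    simp only [update_apply] at hq
    split_ifs at hq
    exact hτ.mem_freeHoles q h hq
  testBit_eq q k c h hc hq := by
    simp only [update_apply] at hq
    split_ifs at hq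
    exact hτ.testBit_eq q k c h hc hq

lemma IsPlacement.update_some (hτ : E.IsPlacement Q D τ)
    (hD : ∀ k, D (p, k) = none) (hfree : h ∈ E.freeHoles) (hnew : ∀ q, τ q ≠ some h) :
    E.IsPlacement (insert p Q) D (update τ p (some h)) where
  isSome_iff q := by
    by_cases hq : q = p
    · simp [hq]
    · simp [hq, hτ.isSome_iff]
  inj q q' h' hq hq' := by
    simp only [update_apply] at hq hq'
    split_ifs at hq hq' with h₁ h₂ h₂
    · exact h₁.trans h₂.symm
    · exact absurd (Option.some_inj.mp hq ▸ hq') (hnew q')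
    · exact absurd (Option.some_inj.mp hq' ▸ hq) (hnew q)
    · exact hτ.inj q q' h' hq hq'
  mem_freeHoles q h' hq := by
    simp only [update_apply] at hq
    split_ifs at hq
    · exact Option.some_inj.mp hq ▸ hfree
    · exact hτ.mem_freeHoles q h' hq
  testBit_eq q k c h' hc hq := by
    simp only [update_apply] at hq
    split_ifs at hq with hqp
    · simp [hqp, hD] at hc
    · exact hτ.testBit_eq q k c h' hc hq

lemma card_fiber_update_none (hτ : E.IsPlacement Q D τ) (hp : p ∉ Q)
    (hD : ∀ k, D (p, k) = none) :
    #{τ' ∈ E.placements (insert p Q) D | update τ' p none = τ} = #E.freeHoles - #Q := by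
  have hfiber : {τ' ∈ E.placements (insert p Q) D | update τ' p none = τ} =
      ({h ∈ E.freeHoles | ∀ q, τ q ≠ some h}).image (fun h => update τ p (some h)) := by
    ext τ'
    simp only [mem_filter, mem_image, mem_placements]
    constructor
    · rintro ⟨hτ', rfl⟩
      obtain ⟨h, hh⟩ := hτ'.exists_eq_some (mem_insert_self p Q)
      refine ⟨h, ⟨hτ'.mem_freeHoles p h hh, fun q hq => ?_⟩, by simp [← hh]⟩
      by_cases hqp : q = p
      · simp [hqp] at hq
      · exact hqp (hτ'.inj q p h (by simpa [hqp] using hq) hh)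
    · rintro ⟨h, ⟨hfree, hnew⟩, rfl⟩
      exact ⟨hτ.update_some hD hfree hnew, by simp [← hτ.eq_none hp]⟩
  have hrange : {h ∈ E.freeHoles | ∀ q, τ q ≠ some h} =
      E.freeHoles \ ({h | ∃ q, τ q = some h} : Finset (Fin n)) := by
    ext h
    simp
  rw [hfiber,
    card_image_of_injective _ fun _ _ h => Option.some_injective _ (update_injective τ p h),
    hrange, card_sdiff_of_subset, hτ.card_range]
  intro h hh
  obtain ⟨q, hq⟩ := (mem_filter.mp hh).2
  exact hτ.mem_freeHoles q h hq

lemma card_placements_insert (hp : p ∉ Q) (hD : ∀ k, D (p, k) = none) :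
    #(E.placements (insert p Q) D) = #(E.placements Q D) * (#E.freeHoles - #Q) := by
  rw [card_eq_sum_card_fiberwise (f := fun τ' => update τ' p none) (t := E.placements Q D)
    fun τ' hτ' => mem_placements.mpr ((mem_placements.mp hτ').update_none hp),
    sum_const_nat fun τ hτ => card_fiber_update_none (mem_placements.mp hτ) hp hD]

lemma placementRatio_extend_of_notMem (hp : p ∉ Q) (b : Bool) :
    E.placementRatio Q (D.extend (p, k) b) = E.placementRatio Q D := by
  rw [placementRatio, placementRatio, placements_extend_of_notMem hp]

lemma placementRatio_insert (hp : p ∉ Q) (hD : ∀ k, D (p, k) = none) (hQ : #Q < #E.freeHoles) :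
    E.placementRatio (insert p Q) D = E.placementRatio Q D := by
  have hpos : (0 : ℝ) < (#E.freeHoles - #Q : ℕ) := by exact_mod_cast Nat.sub_pos_of_lt hQ
  rw [placementRatio, placementRatio, card_placements_insert hp hD, card_insert_of_notMem hp,
    Nat.descFactorial_succ]
  push_cast
  rw [mul_comm (#(E.placements Q D) : ℝ), mul_div_mul_left _ _ hpos.ne']

lemma placementRatio_union (hR : ∀ p ∈ R, ∀ k, D (p, k) = none)
    (hcard : #(Q ∪ R) ≤ #E.freeHoles) :
    E.placementRatio (Q ∪ R) D = E.placementRatio Q D := by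
  induction R using Finset.induction_on with
  | empty => rw [union_empty]
  | insert a R _ ih =>
    have ih' := ih (fun p hp => hR p (mem_insert_of_mem hp))
    rw [union_insert] at hcard ⊢
    by_cases haQR : a ∈ Q ∪ R
    · rw [insert_eq_of_mem haQR] at hcard ⊢
      exact ih' hcard
    · rw [card_insert_of_notMem haQR] at hcard
      rw [placementRatio_insert haQR (hR a (mem_insert_self a R)) (by omega), ih' (by omega)]

lemma valuation_of_consistent (hc : E.Consistent D) :
    E.valuation D = E.placementRatio (E.unmatchedMentions D) D := by
  simp [valuation, hc]

lemma valuation_of_not_consistent (hc : ¬ E.Consistent D) : E.valuation D = 0 := by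
  simp [valuation, hc]

lemma valuation_nonneg (D : SATerm (Fin m × Fin r)) : 0 ≤ E.valuation D := by
  by_cases hc : E.Consistent D
  · rw [valuation_of_consistent hc, placementRatio]
    positivity
  · rw [valuation_of_not_consistent hc]

lemma valuation_eq_placementRatio (hc : E.Consistent D) (hQ : E.unmatchedMentions D ⊆ Q)
    (hQE : ∀ p ∈ Q, E.hole p = none) (hcard : #Q ≤ #E.freeHoles) :
    E.valuation D = E.placementRatio Q D := by
  have hR : ∀ p ∈ Q \ E.unmatchedMentions D, ∀ k, D (p, k) = none := by
    intro p hp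
    obtain ⟨hpQ, hpL⟩ := mem_sdiff.mp hp
    refine notMem_mentions.mp fun hpD => hpL ?_
    simp [unmatchedMentions, hpD, hQE p hpQ]
  rw [valuation_of_consistent hc, ← placementRatio_union hR (by rwa [union_sdiff_of_subset hQ]),
    union_sdiff_of_subset hQ]

lemma unmatchedMentions_extend_of_hole_eq_none (hp : E.hole p = none) (b : Bool) :
    E.unmatchedMentions (D.extend (p, k) b) = insert p (E.unmatchedMentions D) := by
  simp [unmatchedMentions, mentions_extend, filter_insert, hp]

lemma unmatchedMentions_extend_of_hole_eq_some (hp : E.hole p = some h) (b : Bool) :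
    E.unmatchedMentions (D.extend (p, k) b) = E.unmatchedMentions D := by
  simp [unmatchedMentions, mentions_extend, filter_insert, hp]

lemma consistent_extend_of_hole_eq_none (hp : E.hole p = none) (b : Bool) :
    E.Consistent (D.extend (p, k) b) ↔ E.Consistent D := by
  have hne : ∀ q k' h, E.hole q = some h → (q, k') ≠ (p, k) := fun q k' h hq hqk => by
    simp [(Prod.mk.inj hqk).1, hp] at hq
  refine forall_congr' fun q => forall_congr' fun k' => forall_congr' fun c =>
    forall_congr' fun h => forall_congr' fun hq => ?_
  rw [SATerm.extend_apply_of_ne _ _ (hne q k' h hq)]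

lemma consistent_extend_of_hole_eq_some (hp : E.hole p = some h) (hx : D (p, k) = none)
    (b : Bool) : E.Consistent (D.extend (p, k) b) ↔ E.Consistent D ∧ h.val.testBit k = b := by
  constructor
  · intro hc
    refine ⟨fun q k' c h' hq hqk => hc q k' c h' hq ?_, hc p k b h hp (by simp)⟩
    rwa [SATerm.extend_apply_of_ne]
    intro hqk'
    obtain ⟨rfl, rfl⟩ := Prod.mk.inj hqk'
    simp [hx] at hqk
  · rintro ⟨hc, hb⟩ q k' c h' hq hqk
    by_cases hqk' : (q, k') = (p, k)
    · obtain ⟨rfl, rfl⟩ := Prod.mk.inj hqk'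
      simp only [SATerm.extend_apply_self, Option.some.injEq] at hqk
      rw [hp, Option.some.injEq] at hq
      rw [← hq, ← hqk, hb]
    · exact hc q k' c h' hq (by rwa [SATerm.extend_apply_of_ne _ _ hqk'] at hqk)

lemma valuation_extend_of_hole_eq_some (hp : E.hole p = some h) (hx : D (p, k) = none)
    (b : Bool) :
    E.valuation (D.extend (p, k) b) = if h.val.testBit k = b then E.valuation D else 0 := by
  have hpL : p ∉ E.unmatchedMentions D := by simp [unmatchedMentions, hp]
  by_cases hc : E.Consistent D ∧ h.val.testBit k = b
  · rw [valuation_of_consistent ((consistent_extend_of_hole_eq_some hp hx b).mpr hc),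
      unmatchedMentions_extend_of_hole_eq_some hp, placementRatio_extend_of_notMem hpL,
      if_pos hc.2, valuation_of_consistent hc.1]
  · rw [valuation_of_not_consistent (mt (consistent_extend_of_hole_eq_some hp hx b).mp hc)]
    split_ifs with hb
    · exact (valuation_of_not_consistent fun hc' => hc ⟨hc', hb⟩).symm
    · rfl

lemma hole_eq_none_of_mem_unmatchedMentions (hp : p ∈ E.unmatchedMentions D) : E.hole p = none :=
  (mem_filter.mp hp).2

lemma valuation_eq_placementRatio_insert (hp : E.hole p = none) (hc : E.Consistent D)
    (hcard : #(E.unmatchedMentions D) < #E.freeHoles) :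
    E.valuation D = E.placementRatio (insert p (E.unmatchedMentions D)) D := by
  refine valuation_eq_placementRatio hc (subset_insert _ _) (fun q hq => ?_)
    ((card_insert_le _ _).trans hcard)
  rcases mem_insert.mp hq with rfl | hq
  · exact hp
  · exact hole_eq_none_of_mem_unmatchedMentions hq

lemma valuation_extend_eq_placementRatio (hp : E.hole p = none) (hc : E.Consistent D)
    (b : Bool) :
    E.valuation (D.extend (p, k) b) =
      E.placementRatio (insert p (E.unmatchedMentions D)) (D.extend (p, k) b) := by
  rw [← unmatchedMentions_extend_of_hole_eq_none hp b]
  exact valuation_of_consistent ((consistent_extend_of_hole_eq_none hp b).mpr hc)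

lemma valuation_extend_add {x : Fin m × Fin r} (hx : D x = none)
    (hnarrow : E.Consistent D → #(E.unmatchedMentions D) < #E.freeHoles) :
    E.valuation (D.extend x true) + E.valuation (D.extend x false) = E.valuation D := by
  obtain ⟨p, k⟩ := x
  cases hp : E.hole p with
  | none =>
    by_cases hc : E.Consistent D
    · rw [valuation_extend_eq_placementRatio hp hc,
        valuation_extend_eq_placementRatio hp hc,
        valuation_eq_placementRatio_insert hp hc (hnarrow hc), placementRatio, placementRatio,
        placementRatio, ← add_div, ← Nat.cast_add,
        card_placements_extend_add (mem_insert_self _ _) hx]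
    · simp [valuation_of_not_consistent, consistent_extend_of_hole_eq_none hp, hc]
  | some h =>
    rw [valuation_extend_of_hole_eq_some hp hx, valuation_extend_of_hole_eq_some hp hx]
    cases h.val.testBit k <;> simp

lemma valuation_extend_le {x : Fin m × Fin r} (hx : D x = none)
    (hnarrow : E.Consistent D → #(E.unmatchedMentions D) < #E.freeHoles) (b : Bool) :
    E.valuation (D.extend x b) ≤ E.valuation D := by
  obtain ⟨p, k⟩ := x
  cases hp : E.hole p with
  | none =>
    by_cases hc : E.Consistent D
    · rw [valuation_extend_eq_placementRatio hp hc,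
        valuation_eq_placementRatio_insert hp hc (hnarrow hc), placementRatio, placementRatio]
      exact div_le_div_of_nonneg_right (by exact_mod_cast card_placements_extend_le hx b)
        (by positivity)
    · simp [valuation_of_not_consistent, consistent_extend_of_hole_eq_none hp, hc]
  | some h =>
    rw [valuation_extend_of_hole_eq_some hp hx]
    split_ifs
    exacts [le_rfl, valuation_nonneg D]

lemma evalLit_valuation_of_hole_eq_some (hc : E.Consistent D) (hp : E.hole p = some h)
    {b : Bool} (hb : h.val.testBit k = b) : evalLit E.valuation D (p, k) b = E.valuation D := by
  cases hx : D (p, k) with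
  | none => simp [evalLit, hx, valuation_extend_of_hole_eq_some hp hx, hb]
  | some c =>
    rw [evalLit_eq_of_eq_some _ (hx.trans (congrArg some ((hc p k c h hp hx).symm.trans hb)))]

lemma IsPlacement.eq_of_occupies (hτ : E.IsPlacement Q D τ) {j j' : Fin m}
    (hj : E.hole j = some h ∨ τ j = some h) (hj' : E.hole j' = some h ∨ τ j' = some h) :
    j = j' := by
  have hfree : ∀ q, τ q = some h → ∀ q', E.hole q' ≠ some h := fun q hq =>
    (mem_filter.mp (hτ.mem_freeHoles q h hq)).2
  rcases hj with hj | hj <;> rcases hj' with hj' | hj'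
  · exact E.inj j j' h hj hj'
  · exact absurd hj (hfree j' hj' j)
  · exact absurd hj' (hfree j hj j')
  · exact hτ.inj j j' h hj hj'

lemma IsPlacement.exists_hole_ne (hτ : E.IsPlacement Q D τ) {i i' : Fin m} (hii : i ≠ i')
    (a : Fin n) (hQ : ∀ j, (j = i ∨ j = i') → E.hole j = none → j ∈ Q)
    (hmatched : ∀ j, (j = i ∨ j = i') → ∀ h, E.hole j = some h → h = a) :
    ∃ j, (j = i ∨ j = i') ∧ E.hole j = none ∧ ∃ h, τ j = some h ∧ h ≠ a := by
  by_contra! hall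
  have hocc : ∀ j, (j = i ∨ j = i') → E.hole j = some a ∨ τ j = some a := by
    intro j hj
    cases hE : E.hole j with
    | none =>
      obtain ⟨h, hh⟩ := hτ.exists_eq_some (hQ j hj hE)
      exact Or.inr (hall j hj hE h hh ▸ hh)
    | some h => exact Or.inl (congrArg some (hmatched j hj h hE))
  exact hii (hτ.eq_of_occupies (hocc i (Or.inl rfl)) (hocc i' (Or.inr rfl)))

/-- Every placement satisfies the clause through an unmatched pigeon of the clause, since the
two pigeons cannot both sit in hole `a`. -/
lemma placements_subset_biUnion_holeClause (hn : n ≤ 2 ^ r) {i i' : Fin m} (hii : i ≠ i')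
    (a : Fin n) (hQ : ∀ j, (j = i ∨ j = i') → E.hole j = none → j ∈ Q)
    (hmatched : ∀ j, (j = i ∨ j = i') → ∀ h, E.hole j = some h → h = a)
    (hlit : ∀ l ∈ holeClause m r i a ++ holeClause m r i' a, D l.1 ≠ some l.2) :
    E.placements Q D ⊆
      {l ∈ (holeClause m r i a ++ holeClause m r i' a).toFinset |
        E.hole l.1.1 = none ∧ D l.1 = none}.biUnion
      fun l => E.placements Q (D.extend l.1 l.2) := by
  intro τ hτ
  have hτ' := mem_placements.mp hτ
  obtain ⟨j, hj, hjE, h, hτj, hha⟩ := hτ'.exists_hole_ne hii a hQ hmatched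
  obtain ⟨k, hk⟩ :=
    exists_testBit_ne_of_lt (h.2.trans_le hn) (a.2.trans_le hn) (Fin.val_ne_of_ne hha)
  have hmem : ((j, k), !a.val.testBit k) ∈ holeClause m r i a ++ holeClause m r i' a := by
    rcases hj with rfl | rfl <;> simp [mem_holeClause]
  have hbit : h.val.testBit k = !a.val.testBit k := Bool.eq_not_of_ne hk
  have hDjk : D (j, k) = none := by
    cases hD : D (j, k) with
    | none => rfl
    | some c =>
      exact absurd (hD.trans (congrArg some ((hτ'.testBit_eq j k c h hD hτj).symm.trans hbit)))
        (hlit _ hmem)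
  refine mem_biUnion.mpr ⟨_, mem_filter.mpr ⟨List.mem_toFinset.mpr hmem, hjE, hDjk⟩, ?_⟩
  rw [placements_extend hDjk]
  exact mem_filter.mpr ⟨hτ, fun h' hh' => Option.some_inj.mp (hh'.symm.trans hτj) ▸ hbit⟩

lemma valuation_le_sum_of_placements_subset (hc : E.Consistent D)
    (hQ : E.unmatchedMentions D ⊆ Q) (hQE : ∀ p ∈ Q, E.hole p = none)
    (hcard : #Q ≤ #E.freeHoles)
    {L : Finset ((Fin m × Fin r) × Bool)} (hL : ∀ l ∈ L, l.1.1 ∈ Q ∧ D l.1 = none)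
    (hcover : E.placements Q D ⊆ L.biUnion fun l => E.placements Q (D.extend l.1 l.2)) :
    E.valuation D ≤ ∑ l ∈ L, evalLit E.valuation D l.1 l.2 := by
  have hlit : ∀ l ∈ L,
      evalLit E.valuation D l.1 l.2 = E.placementRatio Q (D.extend l.1 l.2) := by
    rintro ⟨⟨p, k⟩, b⟩ hl
    obtain ⟨hpQ, hx⟩ := hL _ hl
    have hp := hQE p hpQ
    rw [evalLit, if_neg (by simp [hx])]
    refine valuation_eq_placementRatio ((consistent_extend_of_hole_eq_none hp b).mpr hc) ?_
      hQE hcard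
    rw [unmatchedMentions_extend_of_hole_eq_none hp]
    exact insert_subset hpQ hQ
  rw [sum_congr rfl hlit, valuation_eq_placementRatio hc hQ hQE hcard]
  simp only [placementRatio, ← sum_div]
  gcongr
  exact_mod_cast (card_le_card hcover).trans card_biUnion_le

lemma valuation_le_sum_holeClause_of_unsettled (hn : n ≤ 2 ^ r) {i i' : Fin m} (hii : i ≠ i')
    (a : Fin n) (hc : E.Consistent D) (hnarrow : #(E.unmatchedMentions D) + 2 ≤ #E.freeHoles)
    (hlit : ∀ l ∈ holeClause m r i a ++ holeClause m r i' a, D l.1 ≠ some l.2)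
    (hmatched : ∀ j, (j = i ∨ j = i') → ∀ h, E.hole j = some h → h = a) :
    E.valuation D ≤ ((holeClause m r i a ++ holeClause m r i' a).map
      fun l => evalLit E.valuation D l.1 l.2).sum := by
  set Q := E.unmatchedMentions D ∪ {j ∈ ({i, i'} : Finset (Fin m)) | E.hole j = none}
  have hQE : ∀ p ∈ Q, E.hole p = none := by
    intro p hp
    rcases mem_union.mp hp with hp | hp
    exacts [hole_eq_none_of_mem_unmatchedMentions hp, (mem_filter.mp hp).2]
  have hcard : #Q ≤ #E.freeHoles := by
    refine (card_union_le _ _).trans (le_trans ?_ hnarrow)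
    gcongr
    exact (card_filter_le _ _).trans card_le_two
  have hQ : ∀ j, (j = i ∨ j = i') → E.hole j = none → j ∈ Q := fun j hj hjE =>
    mem_union_right _ (mem_filter.mpr ⟨by rcases hj with rfl | rfl <;> simp, hjE⟩)
  refine (valuation_le_sum_of_placements_subset hc subset_union_left hQE hcard ?_
    (placements_subset_biUnion_holeClause hn hii a hQ hmatched hlit)).trans ?_
  · rintro ⟨⟨p, k⟩, b⟩ hl
    obtain ⟨hl, hpE, hx⟩ := mem_filter.mp hl
    refine ⟨hQ p ?_ hpE, hx⟩
    rcases List.mem_append.mp (List.mem_toFinset.mp hl) with hl | hl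
    exacts [Or.inl (mem_holeClause.mp hl).1, Or.inr (mem_holeClause.mp hl).1]
  · rw [← List.sum_toFinset _ (nodup_holeClause_append hii a)]
    exact sum_le_sum_of_subset_of_nonneg (filter_subset _ _)
      fun l _ _ => evalLit_nonneg valuation_nonneg D l.1 l.2

lemma valuation_le_sum_holeClause (hn : n ≤ 2 ^ r) {i i' : Fin m} (hii : i ≠ i') (a : Fin n)
    (hnarrow : E.Consistent D → #(E.unmatchedMentions D) + 2 ≤ #E.freeHoles) :
    E.valuation D ≤ ((holeClause m r i a ++ holeClause m r i' a).map
      fun l => evalLit E.valuation D l.1 l.2).sum := by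
  set C := holeClause m r i a ++ holeClause m r i' a
  have hnonneg : ∀ x ∈ C.map fun l => evalLit E.valuation D l.1 l.2, 0 ≤ x := by
    intro x hx
    obtain ⟨l, -, rfl⟩ := List.mem_map.mp hx
    exact evalLit_nonneg valuation_nonneg D l.1 l.2
  have hsingle : ∀ l ∈ C, evalLit E.valuation D l.1 l.2 = E.valuation D →
      E.valuation D ≤ (C.map fun l => evalLit E.valuation D l.1 l.2).sum := fun l hl heq =>
    heq ▸ List.single_le_sum hnonneg _ (List.mem_map_of_mem hl)
  by_cases hc : E.Consistent D
  swap
  · rw [valuation_of_not_consistent hc]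
    exact List.sum_nonneg hnonneg
  by_cases hlit : ∃ l ∈ C, D l.1 = some l.2
  · obtain ⟨l, hl, hDl⟩ := hlit
    exact hsingle l hl (evalLit_eq_of_eq_some _ hDl)
  by_cases hmatched : ∃ j, (j = i ∨ j = i') ∧ ∃ h, E.hole j = some h ∧ h ≠ a
  · obtain ⟨j, hj, h, hjh, hha⟩ := hmatched
    obtain ⟨k, hk⟩ :=
      exists_testBit_ne_of_lt (h.2.trans_le hn) (a.2.trans_le hn) (Fin.val_ne_of_ne hha)
    refine hsingle ((j, k), !a.val.testBit k) ?_
      (evalLit_valuation_of_hole_eq_some hc hjh (Bool.eq_not_of_ne hk))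
    rcases hj with rfl | rfl <;> simp [C, mem_holeClause]
  push Not at hlit hmatched
  exact valuation_le_sum_holeClause_of_unsettled hn hii a hc (hnarrow hc) hlit hmatched

lemma valuation_eq_one (hD : ∀ x, D x = none) : E.valuation D = 1 := by
  have hc : E.Consistent D := fun p k c h _ hpk => by simp [hD] at hpk
  have hL : E.unmatchedMentions D = ∅ :=
    filter_eq_empty_iff.mpr fun p hp =>
      absurd (Set.mem_toFinset.mp hp) (notMem_mentions.mpr fun k => hD _)
  have hP : E.placements ∅ D = {fun _ => none} := by
    ext τ
    rw [mem_placements, mem_singleton]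
    constructor
    · intro hτ
      funext p
      exact hτ.eq_none (notMem_empty p)
    · rintro rfl
      exact ⟨by simp, by simp, by simp, by simp⟩
  simp [valuation_of_consistent hc, hL, placementRatio, hP]

lemma evalLit_valuation_le {x : Fin m × Fin r}
    (hnarrow : E.Consistent D → #(E.unmatchedMentions D) < #E.freeHoles) (b : Bool) :
    evalLit E.valuation D x b ≤ E.valuation D := by
  unfold evalLit
  split_ifs with hx
  · exact valuation_nonneg D
  cases hDx : D x with
  | none => exact valuation_extend_le hDx hnarrow b
  | some c =>
    obtain rfl : c = b := by
      cases b <;> cases c <;> simp_all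
    rw [SATerm.extend_eq_self hDx]

theorem holds_valuation (hn : n ≤ 2 ^ r) (c : SACon (Fin m × Fin r))
    (hnarrow : ∀ D ∈ c.termsOf,
      E.Consistent D → #(E.unmatchedMentions D) + 2 ≤ #E.freeHoles) :
    c.holds (BinPHP m n r) E.valuation := by
  rcases c with _ | ⟨D, x⟩ | ⟨D, x, b⟩ | ⟨D, C⟩
  · exact valuation_eq_one fun _ => rfl
  · have hD := hnarrow D (by simp [SACon.termsOf])
    exact fun hx => valuation_extend_add hx fun hc => by linarith [hD hc]
  · have hD := hnarrow D (by simp [SACon.termsOf])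
    exact ⟨evalLit_nonneg valuation_nonneg D x b,
      evalLit_valuation_le (fun hc => by linarith [hD hc]) b⟩
  · rintro ⟨i, i', a, hii, rfl⟩
    exact valuation_le_sum_holeClause hn hii a (hnarrow D (by simp [SACon.termsOf]))

end PartialMatching

section AvoidingPermutations

variable {α β : Type*} [Fintype α] [DecidableEq α] [DecidableEq β]

lemma card_filter_perm_apply_notMem (π : Equiv.Perm α) (B : Finset α) :
    #{z | π z ∉ B} = Fintype.card α - #B := by
  have : ({z | π z ∉ B} : Finset α) = Bᶜ.map π.symm.toEmbedding := by
    ext z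
    simp [mem_map_equiv]
  rw [this, card_map, card_compl]

/-- The swap trick: composing a permutation avoiding `B` on `insert a s` with the
transposition of `f a` and a point `z ∉ f '' s` gives a permutation avoiding `B` on `s` that
sends `z` outside `B a`, and this is injective in the pair. -/
lemma card_avoiding_perms_insert_mul_le (f : β ↪ α) (B : β → Finset α) {a : β}
    {s : Finset β} (ha : a ∉ s) :
    #{π : Equiv.Perm α | ∀ x ∈ insert a s, π (f x) ∉ B x} * (Fintype.card α - #s) ≤
      #{π : Equiv.Perm α | ∀ x ∈ s, π (f x) ∉ B x} * (Fintype.card α - #(B a)) := by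
  set new : Finset (Equiv.Perm α) := {π | ∀ x ∈ insert a s, π (f x) ∉ B x}
  set prev : Finset (Equiv.Perm α) := {π | ∀ x ∈ s, π (f x) ∉ B x}
  calc _ = #(new ×ˢ (s.map f)ᶜ) := by
        rw [card_product, card_compl, card_map]
    _ ≤ #(prev.sigma fun π => ({z | π z ∉ B a} : Finset α)) := by
        refine card_le_card_of_injOn (fun p => ⟨(Equiv.swap (f a) p.2).trans p.1, p.2⟩) ?_ ?_
        · rintro ⟨π', z⟩ hp
          simp only [new, coe_product, Set.mem_prod, mem_coe, mem_filter, mem_univ, true_and,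
            mem_compl, mem_map, not_exists, not_and, forall_mem_insert] at hp
          obtain ⟨⟨hπa, hπs⟩, hz⟩ := hp
          simp only [coe_sigma, Set.mem_sigma_iff, mem_coe, mem_filter, mem_univ, true_and,
            prev, Equiv.trans_apply]
          refine ⟨fun x hx => ?_, mem_filter.mpr ⟨mem_univ _, by simpa using hπa⟩⟩
          rw [Equiv.swap_apply_of_ne_of_ne (f.injective.ne (by rintro rfl; exact ha hx))
            fun h => hz x hx h]
          exact hπs x hx
        · rintro ⟨π₁, z₁⟩ - ⟨π₂, z₂⟩ - h
          simp only [Sigma.mk.inj_iff, heq_eq_eq] at h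
          obtain ⟨hπ, rfl⟩ := h
          refine Prod.ext ?_ rfl
          ext y
          simpa using congrArg (· (Equiv.swap (f a) z₁ y)) hπ
    _ = #prev * (Fintype.card α - #(B a)) := by
        rw [card_sigma, sum_congr rfl fun π _ => card_filter_perm_apply_notMem π (B a),
          sum_const, smul_eq_mul]

/-- Counting form of: a uniformly random permutation sends each `f x`, `x ∈ s`, outside `B x`
with probability at most `∏ₓ (|α| - |B x|) / (|α| (|α| - 1) ⋯ (|α| - |s| + 1))`. -/
lemma card_avoiding_perms_mul_descFactorial_le (f : β ↪ α) (B : β → Finset α)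
    (s : Finset β) :
    #{π : Equiv.Perm α | ∀ x ∈ s, π (f x) ∉ B x} * (Fintype.card α).descFactorial #s ≤
      (Fintype.card α).factorial * ∏ x ∈ s, (Fintype.card α - #(B x)) := by
  induction s using Finset.induction_on with
  | empty => simp [Fintype.card_perm]
  | insert a s ha ih =>
    set N := Fintype.card α
    set new : Finset (Equiv.Perm α) := {π | ∀ x ∈ insert a s, π (f x) ∉ B x}
    set prev : Finset (Equiv.Perm α) := {π | ∀ x ∈ s, π (f x) ∉ B x}
    rw [card_insert_of_notMem ha, Nat.descFactorial_succ, prod_insert ha]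
    calc _ = #new * (N - #s) * N.descFactorial #s := by ring
      _ ≤ #prev * (N - #(B a)) * N.descFactorial #s :=
          Nat.mul_le_mul_right _ (card_avoiding_perms_insert_mul_le f B ha)
      _ = #prev * N.descFactorial #s * (N - #(B a)) := by ring
      _ ≤ N.factorial * (∏ x ∈ s, (N - #(B x))) * (N - #(B a)) := Nat.mul_le_mul_right _ ih
      _ = _ := by ring

end AvoidingPermutations

section PermMatching

variable {m n r K M : ℕ}

def permMatching (hmK : m ≤ K) (hMn : M ≤ n) (π : Equiv.Perm (Fin K)) :
    PartialMatching m n where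
  hole p := if h : (π (Fin.castLE hmK p) : ℕ) < M then some ⟨_, h.trans_le hMn⟩ else none
  inj p p' h hp hp' := by
    split_ifs at hp hp'
    simp only [Option.some.injEq] at hp hp'
    exact Fin.castLE_injective hmK (π.injective (Fin.ext (Fin.mk.inj (hp.trans hp'.symm))))

lemma card_freeHoles_permMatching (hmK : m ≤ K) (hMn : M ≤ n) (π : Equiv.Perm (Fin K)) :
    n - M ≤ #(permMatching hmK hMn π).freeHoles := by
  calc n - M = #{h : Fin n | ¬ (h : ℕ) < M} := by
        rw [filter_not, card_sdiff_of_subset (filter_subset _ _), card_univ, Fintype.card_fin,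
          Fin.card_filter_val_lt, min_eq_right hMn]
    _ ≤ _ := by
        refine card_le_card fun h hh => mem_filter.mpr ⟨mem_univ _, fun p hp => ?_⟩
        simp only [permMatching] at hp
        split_ifs at hp with hpM
        simp only [Option.some.injEq] at hp
        exact (mem_filter.mp hh).2 (hp ▸ hpM)

def badSlots (M : ℕ) (D : SATerm (Fin m × Fin r)) (p : Fin m) : Finset (Fin K) :=
  {z | (z : ℕ) < M ∧ ∃ k c, D (p, k) = some c ∧ (z : ℕ).testBit k ≠ c}

lemma PartialMatching.Consistent.notMem_badSlots {hmK : m ≤ K} {hMn : M ≤ n}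
    {π : Equiv.Perm (Fin K)} {D : SATerm (Fin m × Fin r)}
    (hc : (permMatching hmK hMn π).Consistent D) (p : Fin m) :
    π (Fin.castLE hmK p) ∉ badSlots M D p := by
  intro hbad
  obtain ⟨hM, k, c, hpk, hne⟩ := (mem_filter.mp hbad).2
  exact hne (hc p k c ⟨_, hM.trans_le hMn⟩ (by simp [permMatching, hM]) hpk)

lemma card_badSlots_ge (hM : M ≤ 2 ^ r) (hMK : M ≤ K) {D : SATerm (Fin m × Fin r)}
    {p : Fin m} (hp : p ∈ mentions D) : M - 2 ^ (r - 1) ≤ #(badSlots (K := K) M D p) := by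
  obtain ⟨k, hk⟩ := hp
  obtain ⟨c, hc⟩ := Option.ne_none_iff_exists'.mp hk
  set A : Finset (Fin K) := {z | (z : ℕ) < M}
  set Ac : Finset (Fin K) := {z | (z : ℕ) < M ∧ (z : ℕ).testBit k = c}
  have hAc : #Ac ≤ 2 ^ (r - 1) := by
    rw [← card_filter_testBit_eq k.2 c]
    refine card_le_card_of_injOn Fin.val (fun z hz => ?_) (Fin.val_injective.injOn)
    simp only [Ac, coe_filter, mem_univ, true_and, Set.mem_ofPred_eq, mem_range] at hz ⊢
    exact ⟨hz.1.trans_le hM, hz.2⟩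
  have hA : #A = M := by
    rw [Fin.card_filter_val_lt, min_eq_right hMK]
  calc M - 2 ^ (r - 1) ≤ #A - #Ac := by omega
    _ ≤ #(A \ Ac) := le_card_sdiff _ _
    _ ≤ _ := by
        refine card_le_card fun z hz => ?_
        simp only [A, Ac, mem_sdiff, mem_filter, mem_univ, true_and, not_and] at hz
        exact mem_filter.mpr ⟨mem_univ _, hz.1, k, c, hc, hz.2 hz.1⟩

end PermMatching

section Restriction

variable {m n r K M t : ℕ}

lemma card_consistent_perms_mul_descFactorial_le (hmK : m ≤ K) (hMn : M ≤ n) (hM : M ≤ 2 ^ r)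
    (hMK : M ≤ K) {D : SATerm (Fin m × Fin r)} (ht : t ≤ #(mentions D).toFinset) :
    #{π : Equiv.Perm (Fin K) | (permMatching hmK hMn π).Consistent D} * K.descFactorial t ≤
      K.factorial * (K - (M - 2 ^ (r - 1))) ^ t := by
  obtain ⟨s, hs, rfl⟩ := exists_subset_card_eq ht
  have havoid := card_avoiding_perms_mul_descFactorial_le (Fin.castLEEmb hmK)
    (badSlots (K := K) M D) s
  rw [Fintype.card_fin] at havoid
  refine le_trans ?_ (havoid.trans ?_)
  · gcongr with π
    exact fun hc p _ => hc.notMem_badSlots p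
  · gcongr
    refine prod_le_pow_card _ _ _ fun p hp => ?_
    have := card_badSlots_ge (K := K) hM hMK (Set.mem_toFinset.mp (hs hp))
    omega

lemma exists_perm_forall_not_consistent (hmK : m ≤ K) (hMn : M ≤ n) (hM : M ≤ 2 ^ r)
    (hMK : M ≤ K) (W : Finset (SATerm (Fin m × Fin r)))
    (hW : ∀ D ∈ W, t ≤ #(mentions D).toFinset)
    (hsmall : #W * (K - (M - 2 ^ (r - 1))) ^ t < K.descFactorial t) :
    ∃ π : Equiv.Perm (Fin K), ∀ D ∈ W, ¬ (permMatching hmK hMn π).Consistent D := by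
  by_contra! hall
  have hcover : (univ : Finset (Equiv.Perm (Fin K))) ⊆
      W.biUnion fun D => {π | (permMatching hmK hMn π).Consistent D} := fun π _ => by
    obtain ⟨D, hD, hc⟩ := hall π
    exact mem_biUnion.mpr ⟨D, hD, mem_filter.mpr ⟨mem_univ _, hc⟩⟩
  have hle : K.factorial * K.descFactorial t ≤
      K.factorial * (#W * (K - (M - 2 ^ (r - 1))) ^ t) := calc
    _ = #(univ : Finset (Equiv.Perm (Fin K))) * K.descFactorial t := by
        rw [card_univ, Fintype.card_perm, Fintype.card_fin]
    _ ≤ (∑ D ∈ W, #{π : Equiv.Perm (Fin K) | (permMatching hmK hMn π).Consistent D}) *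
        K.descFactorial t := by
        gcongr
        exact (card_le_card hcover).trans card_biUnion_le
    _ ≤ ∑ _D ∈ W, K.factorial * (K - (M - 2 ^ (r - 1))) ^ t := by
        rw [sum_mul]
        exact sum_le_sum fun D hD =>
          card_consistent_perms_mul_descFactorial_le hmK hMn hM hMK (hW D hD)
    _ = _ := by
        rw [sum_const, smul_eq_mul]
        ring
  exact absurd (Nat.le_of_mul_le_mul_left hle (Nat.factorial_pos K)) (not_le.mpr hsmall)

lemma holds_valuation_permMatching (hmK : m ≤ K) (hMn : M ≤ n) (hn : n ≤ 2 ^ r)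
    (ht : t + 1 ≤ n - M) (π : Equiv.Perm (Fin K)) (c : SACon (Fin m × Fin r))
    (hwide : ∀ D ∈ c.termsOf, t ≤ #(mentions D).toFinset →
      ¬ (permMatching hmK hMn π).Consistent D) :
    c.holds (BinPHP m n r) (permMatching hmK hMn π).valuation := by
  refine PartialMatching.holds_valuation hn c fun D hD hc => ?_
  have hnarrow : #(mentions D).toFinset < t := by
    by_contra! h
    exact hwide D hD h hc
  have hunmatched : #((permMatching hmK hMn π).unmatchedMentions D) ≤ #(mentions D).toFinset :=
    card_le_card (filter_subset _ _)
  have hfree := card_freeHoles_permMatching hmK hMn π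
  omega

end Restriction

lemma mul_pow_lt_descFactorial {w t : ℕ} (hw : (w : ℝ) < (6 / 5) ^ t) :
    w * (18 * t) ^ t < (24 * t).descFactorial t := by
  rcases t.eq_zero_or_pos with rfl | ht
  · norm_num at hw ⊢
    exact_mod_cast hw
  have h23 : (23 * t) ^ t ≤ (24 * t).descFactorial t :=
    (Nat.pow_le_pow_left (by omega) t).trans (Nat.pow_sub_le_descFactorial _ _)
  refine lt_of_lt_of_le ?_ h23
  have : (w : ℝ) * (18 * t) ^ t < (23 * t) ^ t := calc
    (w : ℝ) * (18 * t) ^ t < (6 / 5) ^ t * (18 * t) ^ t :=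
        mul_lt_mul_of_pos_right hw (by positivity)
    _ = (108 / 5 * t) ^ t := by
        rw [← mul_pow]
        ring_nf
    _ ≤ (23 * t) ^ t := by
        gcongr
        norm_num
  exact_mod_cast this

lemma exists_two_pow_eq_sixteen_mul {r : ℕ} (hr : 5 ≤ r) :
    ∃ t, 2 ^ r = 16 * t ∧ 2 ≤ t ∧ 2 ^ (r - 1) = 8 * t := by
  obtain ⟨s, rfl⟩ := Nat.exists_eq_add_of_le hr
  refine ⟨2 ^ (s + 1), by ring, Nat.le_self_pow (by omega) 2, ?_⟩
  rw [show 5 + s - 1 = 3 + (s + 1) by omega, pow_add]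
  norm_num

/-- For all sufficiently large powers of two `n`, every SA refutation of
`BinPHP^{n+1}_n` contains at least `(6/5)^{n/16} − 1` distinct terms. -/
theorem binPHP_SA_size_lower_bound :
    ∃ N : ℕ, ∀ n, N ≤ n → ∀ r : ℕ, n = 2 ^ r →
      ∀ S : Set (SACon (Fin (n + 1) × Fin r)), S.Finite →
        (¬ ∃ v : SATerm (Fin (n + 1) × Fin r) → ℝ,
            ∀ c ∈ S, c.holds (BinPHP (n + 1) n r) v) →
        ((6 / 5 : ℝ) ^ ((n : ℝ) / 16) - 1 ≤ ((⋃ c ∈ S, c.termsOf).ncard : ℝ)) := by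
  refine ⟨2 ^ 5, fun n hN r hn S hS hinfeasible => ?_⟩
  obtain ⟨t, hnt, ht, hrt⟩ := exists_two_pow_eq_sixteen_mul
    ((Nat.pow_le_pow_iff_right one_lt_two).mp (hn ▸ hN))
  subst hn
  by_contra! hsmall
  have hT := hS.biUnion fun c _ => SATerm.termsOf_finite c
  set W := {D ∈ hT.toFinset | t ≤ #(mentions D).toFinset}
  have hW : (#W : ℝ) < (6 / 5) ^ t := by
    have hWT : #W ≤ (⋃ c ∈ S, c.termsOf).ncard :=
      (card_filter_le _ _).trans (Set.ncard_eq_toFinset_card _ hT).ge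
    have hexp : ((2 ^ r : ℕ) : ℝ) / 16 = t := by
      rw [hnt, Nat.cast_mul]
      ring
    rw [hexp, Real.rpow_natCast] at hsmall
    linarith [(Nat.cast_le (α := ℝ)).mpr hWT]
  have hmK : 2 ^ r + 1 ≤ 24 * t := by omega
  have hMn : 14 * t ≤ 2 ^ r := by omega
  obtain ⟨π, hπ⟩ := exists_perm_forall_not_consistent hmK hMn hMn (by omega) W
    (fun D hD => (mem_filter.mp hD).2)
    (by rw [hrt, show 24 * t - (14 * t - 8 * t) = 18 * t by omega]
        exact mul_pow_lt_descFactorial hW)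
  refine hinfeasible ⟨_, fun c hc => holds_valuation_permMatching hmK hMn le_rfl (by omega) π c
    fun D hD hwide => hπ D (mem_filter.mpr ⟨?_, hwide⟩)⟩
  exact hT.mem_toFinset.mpr (Set.mem_biUnion hc hD)
end

section
/- Let n be a power of two with r = log₂ n ≥ 1, and let m > n. Choose independently, for each pigeon i ∈ [m], a uniformly random pair ω_i ∈ [r] × {0,1}. Let T be a term over the variables P_{i,k} of BinPHP^m_n that mentions exactly n' pigeons, and say T evaluates to zero if for some literal P_{i,k}^b of T we have ω_i = (k, 1−b). Then the probability that T does not evaluate to zero is at most (1 − 1/(2r))^{n'}, which is at most e^{−n'/(2r)}. -/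
open Classical in
/-- Choose independently, for each pigeon `i ∈ [m]`, a uniformly random pair
`ω_i ∈ [r] × {0,1}` (a bit position set to a value). If `T` mentions exactly `n'`
pigeons, then the probability that `T` does not evaluate to zero (i.e. that no literal
`P_{i,k}^b` of `T` has `ω_i = (k, 1−b)`) is at most `(1 − 1/(2r))^{n'} ≤ e^{−n'/(2r)}`. -/
theorem weak_restriction_kills_term (n r m n' : ℕ) (hr : 1 ≤ r) (hn : n = 2 ^ r)
    (hm : n < m) (T : SATerm (Fin m × Fin r)) (hT : (mentions T).ncard = n') :
    ((Finset.univ.filter fun ω : Fin m → Fin r × Bool =>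
          ¬ ∃ (i : Fin m) (k : Fin r) (b : Bool),
              T (i, k) = some b ∧ ω i = (k, !b)).card : ℝ) / ((2 * r : ℝ) ^ m)
        ≤ (1 - 1 / (2 * (r : ℝ))) ^ n' ∧
      (1 - 1 / (2 * (r : ℝ))) ^ n' ≤ Real.exp (-(n' : ℝ) / (2 * (r : ℝ))) := by
  classical
  have hr0 : (0:ℝ) < 2 * (r:ℝ) := by
    have : (1:ℝ) ≤ (r:ℝ) := by exact_mod_cast hr
    linarith
  constructor
  · -- main counting bound
    set bad : Fin m → Fin r × Bool := fun i =>
      if h : ∃ k b, T (i, k) = some b then (h.choose, !h.choose_spec.choose)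
      else (⟨0, hr⟩, true) with hbaddef
    have hbad : ∀ i ∈ mentions T, T (i, (bad i).1) = some (!(bad i).2) := by
      intro i hi
      obtain ⟨k, hk⟩ := hi
      obtain ⟨b, hb⟩ := Option.ne_none_iff_exists'.mp hk
      have h : ∃ k b, T (i, k) = some b := ⟨k, b, hb⟩
      simp only [hbaddef, dif_pos h, Bool.not_not]
      exact h.choose_spec.choose_spec
    set M : Finset (Fin m) := (mentions T).toFinset with hM
    have hMcard : M.card = n' := by
      rw [← hT]; exact (Set.ncard_eq_toFinset_card' _).symm
    have hn'm : n' ≤ m := by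
      rw [← hMcard]
      simpa using Finset.card_le_univ M
    set S : Fin m → Finset (Fin r × Bool) := fun i =>
      if i ∈ M then Finset.univ.erase (bad i) else Finset.univ with hS
    have hsub : (Finset.univ.filter fun ω : Fin m → Fin r × Bool =>
          ¬ ∃ (i : Fin m) (k : Fin r) (b : Bool),
              T (i, k) = some b ∧ ω i = (k, !b)) ⊆ Fintype.piFinset S := by
      intro ω hω
      rw [Finset.mem_filter] at hω
      rw [Fintype.mem_piFinset]
      intro i
      simp only [hS]
      split_ifs with hi
      · refine Finset.mem_erase.mpr ⟨?_, Finset.mem_univ _⟩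
        intro heq
        have hi' : i ∈ mentions T := by rwa [hM, Set.mem_toFinset] at hi
        exact hω.2 ⟨i, (bad i).1, !(bad i).2, hbad i hi', by simp [heq]⟩
      · exact Finset.mem_univ _
    have hcard : ∀ i, (S i).card = if i ∈ M then 2 * r - 1 else 2 * r := by
      intro i
      simp only [hS]
      split_ifs with hi
      · rw [Finset.card_erase_of_mem (Finset.mem_univ _)]
        simp [Fintype.card_prod]
        omega
      · simp [Fintype.card_prod]
        omega
    have e1 : ∏ i ∈ M, (S i).card = (2 * r - 1) ^ n' := by
      have h' : ∀ i ∈ M, (S i).card = 2 * r - 1 := fun i hi => by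
        rw [hcard i, if_pos hi]
      calc ∏ i ∈ M, (S i).card = ∏ _i ∈ M, (2 * r - 1) := Finset.prod_congr rfl h'
        _ = (2 * r - 1) ^ n' := by rw [Finset.prod_const, hMcard]
    have e2 : ∏ i ∈ Mᶜ, (S i).card = (2 * r) ^ (m - n') := by
      have h' : ∀ i ∈ Mᶜ, (S i).card = 2 * r := fun i hi => by
        rw [hcard i, if_neg (Finset.mem_compl.mp hi)]
      calc ∏ i ∈ Mᶜ, (S i).card = ∏ _i ∈ Mᶜ, (2 * r) := Finset.prod_congr rfl h'
        _ = (2 * r) ^ (m - n') := by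
            rw [Finset.prod_const, Finset.card_compl, hMcard, Fintype.card_fin]
    have hcount : (Finset.univ.filter fun ω : Fin m → Fin r × Bool =>
          ¬ ∃ (i : Fin m) (k : Fin r) (b : Bool),
              T (i, k) = some b ∧ ω i = (k, !b)).card
            ≤ (2 * r - 1) ^ n' * (2 * r) ^ (m - n') := by
      calc _ ≤ (Fintype.piFinset S).card := Finset.card_le_card hsub
        _ = ∏ i, (S i).card := Fintype.card_piFinset S
        _ = (∏ i ∈ M, (S i).card) * ∏ i ∈ Mᶜ, (S i).card :=
            (Finset.prod_mul_prod_compl M _).symm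
        _ = (2 * r - 1) ^ n' * (2 * r) ^ (m - n') := by rw [e1, e2]
    rw [div_le_iff₀ (by positivity)]
    have h1 : (1 - 1 / (2 * (r:ℝ))) = (2 * (r:ℝ) - 1) / (2 * (r:ℝ)) := by
      field_simp
    have hc : ((2 * r - 1 : ℕ) : ℝ) = 2 * (r:ℝ) - 1 := by
      have h2 : 1 ≤ 2 * r := le_trans hr (Nat.le_mul_of_pos_left r (by norm_num))
      rw [Nat.cast_sub h2]
      push_cast
      ring
    calc ((Finset.univ.filter fun ω : Fin m → Fin r × Bool =>
          ¬ ∃ (i : Fin m) (k : Fin r) (b : Bool),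
              T (i, k) = some b ∧ ω i = (k, !b)).card : ℝ)
        ≤ (((2 * r - 1) ^ n' * (2 * r) ^ (m - n') : ℕ) : ℝ) := by exact_mod_cast hcount
      _ = (2 * (r:ℝ) - 1) ^ n' * (2 * (r:ℝ)) ^ (m - n') := by
          rw [Nat.cast_mul, Nat.cast_pow, Nat.cast_pow, hc]
          push_cast
          ring
      _ = (1 - 1 / (2 * (r:ℝ))) ^ n' * (2 * (r:ℝ)) ^ m := by
          rw [h1, div_pow, div_mul_eq_mul_div, eq_div_iff (by positivity : (0:ℝ) < (2 * (r:ℝ)) ^ n').ne',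
            mul_assoc, ← pow_add, Nat.sub_add_cancel hn'm]
  · have hx : (1 - 1 / (2 * (r:ℝ))) ≤ Real.exp (-(1 / (2 * (r:ℝ)))) := by
      have := Real.add_one_le_exp (-(1 / (2 * (r:ℝ))))
      linarith
    have h0 : (0:ℝ) ≤ 1 - 1 / (2 * (r:ℝ)) := by
      have h2 : 1 / (2 * (r:ℝ)) ≤ 1 := by
        rw [div_le_one hr0]
        have : (1:ℝ) ≤ (r:ℝ) := by exact_mod_cast hr
        linarith
      linarith
    calc (1 - 1 / (2 * (r:ℝ))) ^ n' ≤ (Real.exp (-(1 / (2 * (r:ℝ))))) ^ n' :=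
          pow_le_pow_left₀ h0 hx n'
      _ = Real.exp (-(n':ℝ) / (2 * (r:ℝ))) := by
          rw [← Real.exp_nat_mul]
          congr 1
          ring
end

section
/- Let n ≥ 1 and m = n + 1. In the polynomial ring ℝ[P_{i,j} : i ∈ [m], j ∈ [n]], there exist finitely many pairs (p_t, q_t), where each p_t is a polynomial with nonnegative coefficients and each q_t is one of the axiom polynomials Σ_{j=1}^{n} P_{i,j} − 1 (i ∈ [m]), 1 − P_{i,j} − P_{i',j} (i ≠ i' ∈ [m], j ∈ [n]), P_{i,j}, or 1 − P_{i,j}, together with finitely many polynomials r_s, such that every ML(p_t q_t) and every ML(r_s²) has degree at most 2 and Σ_t ML(p_t q_t) + Σ_s ML(r_s²) = −1. That is, the unary pigeonhole principle PHP^{n+1}_n has an SA+Squares refutation of degree 2. -/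
open MvPolynomial in
/-- Multilinearization: the unique multilinear polynomial agreeing with `p` on all 0/1
assignments, obtained by replacing every power `x^k` with `k ≥ 1` by `x`. -/
noncomputable def ML {σ : Type} (p : MvPolynomial σ ℝ) : MvPolynomial σ ℝ :=
  ∑ s ∈ p.support,
    monomial (Finsupp.mapRange (fun e => min e 1) (by simp) s) (p.coeff s)

open MvPolynomial in
/-- The axiom polynomials of the unary pigeonhole principle `PHP^m_n`: the pigeon
axioms `Σ_j P_{i,j} − 1`, the hole axioms `1 − P_{i,j} − P_{i',j}` (`i ≠ i'`), and the
bounding axioms `P_{i,j}` and `1 − P_{i,j}`. -/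
def phpAxiom (m n : ℕ) (q : MvPolynomial (Fin m × Fin n) ℝ) : Prop :=
  (∃ i : Fin m, q = (∑ j : Fin n, X (i, j)) - 1) ∨
  (∃ (i i' : Fin m) (j : Fin n), i ≠ i' ∧ q = 1 - X (i, j) - X (i', j)) ∨
  (∃ x : Fin m × Fin n, q = X x) ∨
  (∃ x : Fin m × Fin n, q = 1 - X x)

/-!
Summing the pigeon axioms gives `Σ_{i,j} P_{i,j} - (n + 1)`. For each hole `j`,
`ML((1 - Σ_i P_{i,j})²) = 1 - Σ_i P_{i,j} + Σ_{i ≠ i'} P_{i,j} P_{i',j}`; the linear terms of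
these squares cancel those of the pigeon axioms, and their cross terms are cancelled by the hole
axioms multiplied by `P_{i,j} P_{i',j}`, because
`ML(P_{i,j} P_{i',j} (1 - P_{i,j} - P_{i',j})) = -P_{i,j} P_{i',j}`.
What remains is `n - (n + 1) = -1`.
-/

open MvPolynomial Finset

section Multilinearization

variable {σ : Type}

lemma ML_eq_mapDomainLinearMap (p : MvPolynomial σ ℝ) :
    ML p = AddMonoidAlgebra.mapDomainLinearMap ℝ ℝ
      (Finsupp.mapRange (fun e => min e 1) (by simp) : (σ →₀ ℕ) → σ →₀ ℕ) p := by
  conv_rhs => rw [p.as_sum]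
  rw [map_sum, ML]
  refine sum_congr rfl fun s _ => ?_
  rw [← single_eq_monomial s, AddMonoidAlgebra.mapDomainLinearMap_single, single_eq_monomial]

lemma ML_add (p q : MvPolynomial σ ℝ) : ML (p + q) = ML p + ML q := by
  simp only [ML_eq_mapDomainLinearMap, map_add]

lemma ML_sub (p q : MvPolynomial σ ℝ) : ML (p - q) = ML p - ML q := by
  simp only [ML_eq_mapDomainLinearMap, map_sub]

lemma ML_sum {ι : Type*} (s : Finset ι) (f : ι → MvPolynomial σ ℝ) :
    ML (∑ i ∈ s, f i) = ∑ i ∈ s, ML (f i) := by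
  simp only [ML_eq_mapDomainLinearMap, map_sum]

lemma ML_monomial (s : σ →₀ ℕ) (c : ℝ) :
    ML (monomial s c) = monomial (s.mapRange (fun e => min e 1) (by simp)) c := by
  rw [ML_eq_mapDomainLinearMap, ← single_eq_monomial,
    AddMonoidAlgebra.mapDomainLinearMap_single, single_eq_monomial]

lemma ML_one : ML (1 : MvPolynomial σ ℝ) = 1 := by
  rw [← C_1, C_apply, ML_monomial, Finsupp.mapRange_zero]

lemma ML_X_pow (a : σ) {k : ℕ} (hk : k ≠ 0) : ML (X a ^ k : MvPolynomial σ ℝ) = X a := by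
  rw [X_pow_eq_monomial, ML_monomial, Finsupp.mapRange_single, Nat.min_eq_right (by omega)]
  rfl

lemma ML_X (a : σ) : ML (X a : MvPolynomial σ ℝ) = X a := by
  simpa using ML_X_pow a one_ne_zero

lemma ML_X_pow_mul_X_pow {a b : σ} (hab : a ≠ b) {j k : ℕ} (hj : j ≠ 0) (hk : k ≠ 0) :
    ML (X a ^ j * X b ^ k : MvPolynomial σ ℝ) = X a * X b := by
  classical
  have hsquash : (Finsupp.single a j + Finsupp.single b k).mapRange (fun e => min e 1) (by simp)
      = Finsupp.single a 1 + Finsupp.single b 1 := by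
    ext x
    simp only [Finsupp.mapRange_apply, Finsupp.add_apply, Finsupp.single_apply]
    split_ifs <;> grind
  rw [X_pow_eq_monomial, X_pow_eq_monomial, monomial_mul, ML_monomial, hsquash, ← monomial_mul]
  rfl

lemma ML_X_mul_X {a b : σ} (hab : a ≠ b) : ML (X a * X b : MvPolynomial σ ℝ) = X a * X b := by
  simpa using ML_X_pow_mul_X_pow hab one_ne_zero one_ne_zero

lemma ML_X_mul_X_mul_one_sub_X_sub_X {a b : σ} (hab : a ≠ b) :
    ML (X a * X b * (1 - X a - X b) : MvPolynomial σ ℝ) = -(X a * X b) := by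
  have hexpand : (X a * X b * (1 - X a - X b) : MvPolynomial σ ℝ)
      = X a ^ 1 * X b ^ 1 - X a ^ 2 * X b ^ 1 - X b ^ 2 * X a ^ 1 := by ring
  rw [hexpand, ML_sub, ML_sub, ML_X_pow_mul_X_pow hab one_ne_zero one_ne_zero,
    ML_X_pow_mul_X_pow hab two_ne_zero one_ne_zero,
    ML_X_pow_mul_X_pow hab.symm two_ne_zero one_ne_zero]
  ring

lemma ML_one_sub_sum_X_sq {ι : Type*} [DecidableEq ι] {v : ι → σ} (hv : Function.Injective v)
    (s : Finset ι) :
    ML ((1 - ∑ i ∈ s, X (v i)) ^ 2 : MvPolynomial σ ℝ)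
      = 1 - ∑ i ∈ s, X (v i) + ∑ x ∈ s.offDiag, X (v x.1) * X (v x.2) := by
  have hsq : (∑ i ∈ s, X (v i)) * ∑ i ∈ s, X (v i)
      = ∑ i ∈ s, X (v i) ^ 2 + ∑ x ∈ s.offDiag, (X (v x.1) * X (v x.2) : MvPolynomial σ ℝ) := by
    rw [sum_mul_sum, ← sum_product', ← diag_union_offDiag, sum_union (disjoint_diag_offDiag _),
      sum_diag]
    simp only [sq]
  have hexpand : ((1 - ∑ i ∈ s, X (v i)) ^ 2 : MvPolynomial σ ℝ)
      = 1 - ∑ i ∈ s, X (v i) - ∑ i ∈ s, X (v i) + ∑ i ∈ s, X (v i) ^ 2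
        + ∑ x ∈ s.offDiag, X (v x.1) * X (v x.2) := by
    linear_combination hsq
  have hoff : ∀ x ∈ s.offDiag, v x.1 ≠ v x.2 := fun x hx => hv.ne (mem_offDiag.1 hx).2.2
  rw [hexpand, ML_add, ML_add, ML_sub, ML_sub, ML_one, ML_sum, ML_sum, ML_sum,
    sum_congr rfl fun x hx => ML_X_mul_X (hoff x hx)]
  simp only [ML_X, ML_X_pow _ two_ne_zero]
  ring

end Multilinearization

section TotalDegree

variable {σ R : Type*} [CommSemiring R]

lemma one_mem_restrictTotalDegree (d : ℕ) :
    (1 : MvPolynomial σ R) ∈ restrictTotalDegree σ R d := by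
  rw [mem_restrictTotalDegree, totalDegree_one]
  exact Nat.zero_le d

lemma X_mem_restrictTotalDegree [Nontrivial R] (a : σ) {d : ℕ} (hd : 1 ≤ d) :
    (X a : MvPolynomial σ R) ∈ restrictTotalDegree σ R d := by
  rw [mem_restrictTotalDegree]
  exact (totalDegree_X a).trans_le hd

lemma X_mul_X_mem_restrictTotalDegree [Nontrivial R] (a b : σ) :
    (X a * X b : MvPolynomial σ R) ∈ restrictTotalDegree σ R 2 := by
  rw [mem_restrictTotalDegree]
  exact (totalDegree_mul _ _).trans (by rw [totalDegree_X, totalDegree_X])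

end TotalDegree

def IsSASquaresRefutation {σ ι κ : Type} [Fintype ι] [Fintype κ]
    (IsAxiom : MvPolynomial σ ℝ → Prop) (d : ℕ) (p q : ι → MvPolynomial σ ℝ)
    (r : κ → MvPolynomial σ ℝ) : Prop :=
  (∀ t, ∀ s, 0 ≤ (p t).coeff s) ∧
  (∀ t, IsAxiom (q t)) ∧
  (∀ t, (ML (p t * q t)).totalDegree ≤ d) ∧
  (∀ s, (ML (r s ^ 2)).totalDegree ≤ d) ∧
  (∑ t, ML (p t * q t)) + (∑ s, ML (r s ^ 2)) = -1

lemma IsSASquaresRefutation.exists_fin {σ ι κ : Type} [Fintype ι] [Fintype κ]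
    {IsAxiom : MvPolynomial σ ℝ → Prop} {d : ℕ} {p q : ι → MvPolynomial σ ℝ}
    {r : κ → MvPolynomial σ ℝ} (h : IsSASquaresRefutation IsAxiom d p q r) :
    ∃ (K L : ℕ) (p q : Fin K → MvPolynomial σ ℝ) (r : Fin L → MvPolynomial σ ℝ),
      IsSASquaresRefutation IsAxiom d p q r := by
  obtain ⟨hp, hq, hpq, hr, hsum⟩ := h
  set e := (Fintype.equivFin ι).symm
  set e' := (Fintype.equivFin κ).symm
  refine ⟨_, _, p ∘ e, q ∘ e, r ∘ e', fun t => hp (e t), fun t => hq (e t),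
    fun t => hpq (e t), fun s => hr (e' s), ?_⟩
  simp only [Function.comp_apply, e.sum_comp (fun t => ML (p t * q t)),
    e'.sum_comp (fun s => ML (r s ^ 2)), hsum]

section Pigeonhole

variable (m n : ℕ)

abbrev PHPCertIndex := Fin m ⊕ Fin n × (univ : Finset (Fin m)).offDiag

noncomputable def phpCertMultiplier : PHPCertIndex m n → MvPolynomial (Fin m × Fin n) ℝ
  | .inl _ => 1
  | .inr (j, x) => X (x.1.1, j) * X (x.1.2, j)

noncomputable def phpCertAxiom : PHPCertIndex m n → MvPolynomial (Fin m × Fin n) ℝ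
  | .inl i => ∑ j, X (i, j) - 1
  | .inr (j, x) => 1 - X (x.1.1, j) - X (x.1.2, j)

noncomputable def phpCertSquare (j : Fin n) : MvPolynomial (Fin m × Fin n) ℝ :=
  1 - ∑ i, X (i, j)

variable {m n}

lemma phpCertMultiplier_coeff_nonneg (t : PHPCertIndex m n) (s : Fin m × Fin n →₀ ℕ) :
    0 ≤ (phpCertMultiplier m n t).coeff s := by
  classical
  rcases t with _ | ⟨j, x⟩
  · rw [phpCertMultiplier, coeff_one]
    split_ifs <;> norm_num
  · rw [phpCertMultiplier, X, X, monomial_mul, coeff_monomial]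
    split_ifs <;> norm_num

lemma phpAxiom_phpCertAxiom (t : PHPCertIndex m n) : phpAxiom m n (phpCertAxiom m n t) := by
  rcases t with i | ⟨j, x⟩
  · exact Or.inl ⟨i, rfl⟩
  · exact Or.inr (Or.inl ⟨x.1.1, x.1.2, j, (mem_offDiag.1 x.2).2.2, rfl⟩)

lemma ML_phpCert_inl (i : Fin m) :
    ML (phpCertMultiplier m n (Sum.inl i) * phpCertAxiom m n (Sum.inl i))
      = ∑ j, X (i, j) - 1 := by
  simp only [phpCertMultiplier, phpCertAxiom, one_mul, ML_sub, ML_sum, ML_X, ML_one]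

lemma ML_phpCert_inr (j : Fin n) (x : (univ : Finset (Fin m)).offDiag) :
    ML (phpCertMultiplier m n (Sum.inr (j, x)) * phpCertAxiom m n (Sum.inr (j, x)))
      = -(X (x.1.1, j) * X (x.1.2, j)) := by
  have hne : (x.1.1, j) ≠ (x.1.2, j) := fun h => (mem_offDiag.1 x.2).2.2 (congrArg Prod.fst h)
  exact ML_X_mul_X_mul_one_sub_X_sub_X hne

lemma ML_phpCertSquare_sq (j : Fin n) :
    ML (phpCertSquare m n j ^ 2)
      = (1 : MvPolynomial (Fin m × Fin n) ℝ) - ∑ i, X (i, j)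
        + ∑ x ∈ (univ : Finset (Fin m)).offDiag, X (x.1, j) * X (x.2, j) :=
  ML_one_sub_sum_X_sq (Prod.mk_left_injective j) univ

lemma sum_ML_phpCert :
    (∑ t, ML (phpCertMultiplier m n t * phpCertAxiom m n t)) + ∑ j, ML (phpCertSquare m n j ^ 2)
      = (n - m : MvPolynomial (Fin m × Fin n) ℝ) := by
  have hcomm : ∑ i : Fin m, ∑ j : Fin n, (X (i, j) : MvPolynomial (Fin m × Fin n) ℝ)
      = ∑ j, ∑ i, X (i, j) := sum_comm
  have hcoe (j : Fin n) : ∑ x : (univ : Finset (Fin m)).offDiag,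
      (X (x.1.1, j) * X (x.1.2, j) : MvPolynomial (Fin m × Fin n) ℝ)
        = ∑ x ∈ univ.offDiag, X (x.1, j) * X (x.2, j) :=
    sum_coe_sort univ.offDiag fun x => X (x.1, j) * X (x.2, j)
  simp only [Fintype.sum_sum_type, Fintype.sum_prod_type, ML_phpCert_inl, ML_phpCert_inr,
    ML_phpCertSquare_sq, sum_neg_distrib, hcoe, sum_sub_distrib, sum_add_distrib, hcomm,
    sum_const, card_univ, Fintype.card_fin, nsmul_eq_mul, mul_one]
  ring

lemma totalDegree_ML_phpCert_le (t : PHPCertIndex m n) :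
    (ML (phpCertMultiplier m n t * phpCertAxiom m n t)).totalDegree ≤ 2 := by
  rw [← mem_restrictTotalDegree]
  rcases t with i | ⟨j, x⟩
  · rw [ML_phpCert_inl]
    exact sub_mem (sum_mem fun j _ => X_mem_restrictTotalDegree _ one_le_two)
      (one_mem_restrictTotalDegree 2)
  · rw [ML_phpCert_inr]
    exact neg_mem (X_mul_X_mem_restrictTotalDegree _ _)

lemma totalDegree_ML_phpCertSquare_sq_le (j : Fin n) :
    (ML (phpCertSquare m n j ^ 2)).totalDegree ≤ 2 := by
  rw [← mem_restrictTotalDegree, ML_phpCertSquare_sq]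
  exact add_mem
    (sub_mem (one_mem_restrictTotalDegree 2)
      (sum_mem fun i _ => X_mem_restrictTotalDegree _ one_le_two))
    (sum_mem fun x _ => X_mul_X_mem_restrictTotalDegree _ _)

end Pigeonhole

lemma isSASquaresRefutation_phpCert (n : ℕ) :
    IsSASquaresRefutation (phpAxiom (n + 1) n) 2 (phpCertMultiplier (n + 1) n)
      (phpCertAxiom (n + 1) n) (phpCertSquare (n + 1) n) :=
  ⟨phpCertMultiplier_coeff_nonneg, phpAxiom_phpCertAxiom, totalDegree_ML_phpCert_le,
    totalDegree_ML_phpCertSquare_sq_le, by rw [sum_ML_phpCert]; push_cast; ring⟩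

theorem PHP_SAplusSquares_degree_two_general (n : ℕ) :
    ∃ (K L : ℕ) (p q : Fin K → MvPolynomial (Fin (n + 1) × Fin n) ℝ)
      (r : Fin L → MvPolynomial (Fin (n + 1) × Fin n) ℝ),
      (∀ t, ∀ s, 0 ≤ (p t).coeff s) ∧
      (∀ t, phpAxiom (n + 1) n (q t)) ∧
      (∀ t, (ML (p t * q t)).totalDegree ≤ 2) ∧
      (∀ s, (ML (r s ^ 2)).totalDegree ≤ 2) ∧
      (∑ t, ML (p t * q t)) + (∑ s, ML (r s ^ 2)) = -1 :=
  (isSASquaresRefutation_phpCert n).exists_fin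

/-- The unary pigeonhole principle `PHP^{n+1}_n` has an SA+Squares refutation of
degree 2: an identity `−1 = Σ_t ML(p_t q_t) + Σ_s ML(r_s²)` where each `p_t` has
nonnegative coefficients, each `q_t` is an axiom polynomial, and all the multilinearized
products have total degree at most 2. -/
theorem PHP_SAplusSquares_degree_two (n : ℕ) (hn : 1 ≤ n) :
    ∃ (K L : ℕ) (p q : Fin K → MvPolynomial (Fin (n + 1) × Fin n) ℝ)
      (r : Fin L → MvPolynomial (Fin (n + 1) × Fin n) ℝ),
      (∀ t, ∀ s, 0 ≤ (p t).coeff s) ∧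
      (∀ t, phpAxiom (n + 1) n (q t)) ∧
      (∀ t, (ML (p t * q t)).totalDegree ≤ 2) ∧
      (∀ s, (ML (r s ^ 2)).totalDegree ≤ 2) ∧
      (∑ t, ML (p t * q t)) + (∑ s, ML (r s ^ 2)) = -1 :=
  PHP_SAplusSquares_degree_two_general n
end

section
/- Let n ≥ 4. In the polynomial ring ℝ[P_{i,j}, S_{i,j} : i, j ∈ [n]], there do NOT exist finitely many pairs (p_t, q_t), where each p_t is a polynomial with nonnegative coefficients and each q_t is one of the axiom polynomials −P_{i,i} (i ∈ [n]), P_{i,k} − P_{i,j} − P_{j,k} + 1 (i, j, k ∈ [n]), P_{i,j} − S_{i,j} (i, j ∈ [n]), Σ_{i∈[n]} S_{i,j} − 1 (j ∈ [n]), x, or 1 − x (x any variable), together with finitely many polynomials r_s, such that every ML(p_t q_t) and every ML(r_s²) has degree at most (n−3)/2 and Σ_t ML(p_t q_t) + Σ_s ML(r_s²) = −1. That is, the unary Least Number Principle LNP_n has no SA+Squares refutation of degree at most (n−3)/2. -/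
open MvPolynomial in
/-- The axiom polynomials of the unary Least Number Principle `LNP_n`: `−P_{i,i}`
(self), `P_{i,k} − P_{i,j} − P_{j,k} + 1` (transitivity), `P_{i,j} − S_{i,j}`
(implication), `Σ_i S_{i,j} − 1` (lower), and the bounding axioms `x` and `1 − x` for
every variable `x`. Here `Sum.inl (i,j)` is `P_{i,j}` and `Sum.inr (i,j)` is
`S_{i,j}`. -/
def lnpAxiom (n : ℕ) (q : MvPolynomial ((Fin n × Fin n) ⊕ (Fin n × Fin n)) ℝ) : Prop :=
  (∃ i : Fin n, q = -X (Sum.inl (i, i))) ∨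
  (∃ i j k : Fin n,
    q = X (Sum.inl (i, k)) - X (Sum.inl (i, j)) - X (Sum.inl (j, k)) + 1) ∨
  (∃ i j : Fin n, q = X (Sum.inl (i, j)) - X (Sum.inr (i, j))) ∨
  (∃ j : Fin n, q = (∑ i : Fin n, X (Sum.inr (i, j))) - 1) ∨
  (∃ x, q = X x) ∨
  (∃ x, q = 1 - X x)

namespace MLAux
set_option linter.unusedSectionVars false
open MvPolynomial Finset
variable {σ : Type} [DecidableEq σ]

noncomputable def trunc (s : σ →₀ ℕ) : σ →₀ ℕ :=
  Finsupp.mapRange (fun e => min e 1) (by simp) s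

lemma ML_def (p : MvPolynomial σ ℝ) :
    ML p = ∑ s ∈ p.support, monomial (trunc s) (p.coeff s) := rfl

@[simp] lemma trunc_apply (s : σ →₀ ℕ) (v : σ) : trunc s v = min (s v) 1 :=
  Finsupp.mapRange_apply ..

lemma trunc_le_one (s : σ →₀ ℕ) (v : σ) : trunc s v ≤ 1 := by simp

lemma support_trunc (s : σ →₀ ℕ) : (trunc s).support = s.support := by
  ext v
  simp [Finsupp.mem_support_iff, Nat.min_eq_zero_iff]

lemma trunc_eq_self {s : σ →₀ ℕ} (h : ∀ v, s v ≤ 1) : trunc s = s := by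
  ext v
  simpa using Nat.min_eq_left (h v)

lemma trunc_add_single_mem {m : σ →₀ ℕ} (hm : ∀ v, m v ≤ 1) {v : σ}
    (hv : v ∈ m.support) : trunc (m + Finsupp.single v 1) = m := by
  ext w
  rcases eq_or_ne w v with rfl | hw
  · have h1 : m w = 1 := le_antisymm (hm w) (Finsupp.mem_support_iff.mp hv |> Nat.one_le_iff_ne_zero.mpr)
    simp [h1]
  · simp [Finsupp.single_apply, hw.symm, Ne.symm hw, Nat.min_eq_left (hm w)]

lemma trunc_add_single_notMem {m : σ →₀ ℕ} (hm : ∀ v, m v ≤ 1) {v : σ}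
    (hv : v ∉ m.support) : trunc (m + Finsupp.single v 1) = m + Finsupp.single v 1 := by
  apply trunc_eq_self
  intro w
  rcases eq_or_ne w v with rfl | hw
  · have : m w = 0 := Finsupp.notMem_support_iff.mp hv
    simp [this]
  · simp [Finsupp.single_apply, Ne.symm hw, hm w]

/-- general coefficient formula for ML over any superset of the support -/
lemma coeff_ML (f : MvPolynomial σ ℝ) (U : Finset (σ →₀ ℕ)) (hU : f.support ⊆ U)
    (M : σ →₀ ℕ) :
    coeff M (ML f) = ∑ u ∈ U, if trunc u = M then coeff u f else 0 := by
  classical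
  rw [ML_def, coeff_sum]
  have h1 : ∀ u ∈ f.support, coeff M (monomial (trunc u) (coeff u f))
      = if trunc u = M then coeff u f else 0 := by
    intro u _; rw [coeff_monomial]
  rw [Finset.sum_congr rfl h1]
  exact Finset.sum_subset hU (by
    intro u _ hu
    have : coeff u f = 0 := by simpa [MvPolynomial.mem_support_iff] using hu
    simp [this])

lemma coeff_ML_support (f : MvPolynomial σ ℝ) (M : σ →₀ ℕ) :
    coeff M (ML f) = ∑ u ∈ f.support, if trunc u = M then coeff u f else 0 :=
  coeff_ML f f.support subset_rfl M

lemma coeff_ML_nonneg {f : MvPolynomial σ ℝ} (hf : ∀ s, 0 ≤ coeff s f) (M : σ →₀ ℕ) :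
    0 ≤ coeff M (ML f) := by
  classical
  rw [coeff_ML_support]
  apply Finset.sum_nonneg
  intro u _
  split <;> simp [hf u]

/-- multilinearity predicate -/
def Multilinear (f : MvPolynomial σ ℝ) : Prop :=
  ∀ M ∈ f.support, ∀ v, M v ≤ 1

lemma multilinear_ML (f : MvPolynomial σ ℝ) : Multilinear (ML f) := by
  classical
  intro M hM v
  rw [MvPolynomial.mem_support_iff, coeff_ML_support] at hM
  obtain ⟨u, _, hu⟩ := Finset.exists_ne_zero_of_sum_ne_zero hM
  have : trunc u = M := by by_contra h; simp [h] at hu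
  rw [← this]
  exact trunc_le_one u v

lemma Multilinear.neg {f : MvPolynomial σ ℝ} (hf : Multilinear f) : Multilinear (-f) := by
  intro M hM
  exact hf M (by simpa using hM)

lemma Multilinear.add {f g : MvPolynomial σ ℝ} (hf : Multilinear f) (hg : Multilinear g) :
    Multilinear (f + g) := by
  intro M hM v
  have := MvPolynomial.support_add (p := f) (q := g) hM
  rcases Finset.mem_union.mp this with h | h
  · exact hf M h v
  · exact hg M h v

lemma Multilinear.sub {f g : MvPolynomial σ ℝ} (hf : Multilinear f) (hg : Multilinear g) :
    Multilinear (f - g) := by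
  rw [sub_eq_add_neg]; exact hf.add hg.neg

lemma Multilinear.sum {ι : Type*} (s : Finset ι) (f : ι → MvPolynomial σ ℝ)
    (hf : ∀ i ∈ s, Multilinear (f i)) : Multilinear (∑ i ∈ s, f i) := by
  classical
  induction s using Finset.induction_on with
  | empty => intro M hM; simp at hM
  | @insert a s ha ih =>
    rw [Finset.sum_insert ha]
    exact (hf a (by simp)).add (ih fun i hi => hf i (by simp [hi]))


/-- a boolean point -/
def IsBool (x : σ → ℝ) : Prop := ∀ v, x v = 0 ∨ x v = 1

lemma pow_eq_of_bool {a : ℝ} (ha : a = 0 ∨ a = 1) {k l : ℕ} (hk : 1 ≤ k) (hl : 1 ≤ l) :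
    a ^ k = a ^ l := by
  rcases ha with rfl | rfl
  · rw [zero_pow (by omega), zero_pow (by omega)]
  · simp

/-- evaluation of ML at a boolean point agrees with evaluation of the polynomial -/
lemma eval_ML {x : σ → ℝ} (hx : IsBool x) (f : MvPolynomial σ ℝ) :
    eval x (ML f) = eval x f := by
  rw [ML_def, map_sum, eval_eq]
  apply Finset.sum_congr rfl
  intro u _
  rw [eval_monomial]
  congr 1
  rw [Finsupp.prod, support_trunc]
  apply Finset.prod_congr rfl
  intro v hv
  have h1 : 1 ≤ u v := Nat.one_le_iff_ne_zero.mpr (Finsupp.mem_support_iff.mp hv)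
  rw [trunc_apply]
  exact pow_eq_of_bool (hx v) (by omega) h1

lemma eval_nonneg {x : σ → ℝ} (hx : ∀ v, 0 ≤ x v) {f : MvPolynomial σ ℝ}
    (hf : ∀ s, 0 ≤ coeff s f) : 0 ≤ eval x f := by
  rw [eval_eq]
  apply Finset.sum_nonneg
  intro u _
  exact mul_nonneg (hf u) (Finset.prod_nonneg fun v _ => pow_nonneg (hx v) _)

/-- interpolation: a multilinear polynomial vanishing on the cube is zero -/
lemma eq_zero_of_multilinear_of_eval_zero {f : MvPolynomial σ ℝ}
    (hml : Multilinear f) (h0 : ∀ x : σ → ℝ, IsBool x → eval x f = 0) : f = 0 := by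
  by_contra hf
  have hne : f.support.Nonempty := by
    rw [Finset.nonempty_iff_ne_empty, Ne, MvPolynomial.support_eq_empty]
    exact hf
  obtain ⟨m, hm, hmin⟩ := Finset.exists_min_image f.support (fun u => u.support.card) hne
  set x : σ → ℝ := fun v => if v ∈ m.support then 1 else 0 with hxdef
  have hxb : IsBool x := by
    intro v
    by_cases h : v ∈ m.support
    · right; simp only [hxdef]; rw [if_pos h]
    · left; simp only [hxdef]; rw [if_neg h]
  have hkey : eval x f = coeff m f := by
    rw [eval_eq]
    rw [Finset.sum_eq_single m]
    · have : ∀ v ∈ m.support, x v ^ m v = 1 := by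
        intro v hv
        rw [hxdef]; simp [hv]
      rw [Finset.prod_congr rfl this]
      simp
    · intro u hu hum
      by_cases hsub : u.support ⊆ m.support
      · exfalso
        have hcard := hmin u hu
        have heq : u.support = m.support :=
          Finset.eq_of_subset_of_card_le hsub (hmin u hu)
        apply hum
        ext v
        by_cases hv : v ∈ u.support
        · have hv' : v ∈ m.support := heq ▸ hv
          have h1 : u v = 1 := le_antisymm (hml u hu v)
            (Nat.one_le_iff_ne_zero.mpr (Finsupp.mem_support_iff.mp hv))
          have h2 : m v = 1 := le_antisymm (hml m hm v)
            (Nat.one_le_iff_ne_zero.mpr (Finsupp.mem_support_iff.mp hv'))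
          rw [h1, h2]
        · have hv' : v ∉ m.support := fun h => hv (heq ▸ h)
          rw [Finsupp.notMem_support_iff.mp hv, Finsupp.notMem_support_iff.mp hv']
      · obtain ⟨v, hvu, hvm⟩ := Finset.not_subset.mp hsub
        have : x v ^ u v = 0 := by
          rw [hxdef]
          simp only [hvm, if_false]
          exact zero_pow (Finsupp.mem_support_iff.mp hvu)
        rw [Finset.prod_eq_zero hvu this, mul_zero]
    · intro h; exact absurd hm h
  rw [h0 x hxb] at hkey
  exact (MvPolynomial.mem_support_iff.mp hm) hkey.symm


/-- two polynomials with equal boolean evaluations have equal ML -/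
lemma ML_cube_congr {f g : MvPolynomial σ ℝ}
    (h : ∀ x : σ → ℝ, IsBool x → eval x f = eval x g) : ML f = ML g := by
  have hml : Multilinear (ML f - ML g) := (multilinear_ML f).sub (multilinear_ML g)
  have := eq_zero_of_multilinear_of_eval_zero hml (by
    intro x hx
    rw [map_sub, eval_ML hx, eval_ML hx, h x hx, sub_self])
  exact sub_eq_zero.mp this


lemma ML_mul_X_ML (p : MvPolynomial σ ℝ) (v : σ) :
    ML (p * X v) = ML (ML p * X v) := by
  apply ML_cube_congr
  intro x hx
  rw [map_mul, map_mul, eval_ML hx]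

lemma coeff_ML_mul_X (f : MvPolynomial σ ℝ) (v : σ) (M : σ →₀ ℕ) :
    coeff M (ML (f * X v)) =
      ∑ u ∈ f.support, if trunc (u + Finsupp.single v 1) = M then coeff u f else 0 := by
  classical
  have hsub : (f * X v).support ⊆ f.support.image (· + Finsupp.single v 1) := by
    intro u' hu'
    rw [MvPolynomial.mem_support_iff, coeff_mul_X'] at hu'
    by_cases hv : v ∈ u'.support
    · rw [if_pos hv] at hu'
      refine Finset.mem_image.mpr ⟨u' - Finsupp.single v 1, MvPolynomial.mem_support_iff.mpr hu', ?_⟩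
      ext w
      rcases eq_or_ne w v with rfl | hw
      · have h1 : 1 ≤ u' w := Nat.one_le_iff_ne_zero.mpr (Finsupp.mem_support_iff.mp hv)
        simp only [Finsupp.add_apply, Finsupp.tsub_apply, Finsupp.single_apply, if_pos rfl,
          ite_true]
        omega
      · simp [Finsupp.single_apply, Ne.symm hw]
    · rw [if_neg hv] at hu'
      exact absurd rfl hu'
  rw [coeff_ML _ _ hsub]
  rw [Finset.sum_image (by intro a _ b _ h; exact add_right_cancel h)]
  apply Finset.sum_congr rfl
  intro u _
  rw [coeff_mul_X]

section LNP
open MvPolynomial Finset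

variable {n : ℕ}

/-- variable names -/
abbrev Vn (n : ℕ) := (Fin n × Fin n) ⊕ (Fin n × Fin n)

def pr : Vn n → Fin n × Fin n := Sum.elim id id

/-- the boolean point associated to a permutation -/
noncomputable def χ (π : Equiv.Perm (Fin n)) : Vn n → ℝ :=
  fun v => if π (pr v).1 < π (pr v).2 then 1 else 0

lemma χ_bool (π : Equiv.Perm (Fin n)) : IsBool (χ π) := by
  intro v; unfold χ; split <;> simp

lemma χ_nonneg (π : Equiv.Perm (Fin n)) : ∀ v, 0 ≤ χ π v := by
  intro v; unfold χ; split <;> norm_num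

/-- the lower axiom polynomial -/
noncomputable def qlow (j : Fin n) : MvPolynomial (Vn n) ℝ :=
  (∑ i : Fin n, X (Sum.inr (i, j))) - 1

/-- degree of an exponent vector -/
def degE (u : Vn n →₀ ℕ) : ℕ := u.sum fun _ e => e

lemma degE_eq_card {u : Vn n →₀ ℕ} (hu : ∀ v, u v ≤ 1) : degE u = u.support.card := by
  unfold degE Finsupp.sum
  rw [Finset.card_eq_sum_ones]
  apply Finset.sum_congr rfl
  intro v hv
  dsimp only
  have h1 := Finsupp.mem_support_iff.mp hv
  have h2 := hu v
  omega

lemma degE_add_single (u : Vn n →₀ ℕ) (v : Vn n) :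
    degE (u + Finsupp.single v 1) = degE u + 1 := by
  unfold degE
  rw [Finsupp.sum_add_index' (by simp) (by intros; rfl)]
  rw [Finsupp.sum_single_index (by rfl)]

lemma le_totalDegree_degE {f : MvPolynomial (Vn n) ℝ} {u : Vn n →₀ ℕ}
    (hu : u ∈ f.support) : degE u ≤ f.totalDegree :=
  MvPolynomial.le_totalDegree hu

lemma ML_qlow_expand (p : MvPolynomial (Vn n) ℝ) (j : Fin n) :
    ML (p * qlow j) = (∑ i : Fin n, ML (p * X (Sum.inr (i, j)))) - ML p := by
  have h1 : Multilinear ((∑ i : Fin n, ML (p * X (Sum.inr (i, j)))) - ML p) :=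
    (Multilinear.sum _ _ fun i _ => multilinear_ML _).sub (multilinear_ML p)
  have h2 : Multilinear (ML (p * qlow j) - ((∑ i : Fin n, ML (p * X (Sum.inr (i, j)))) - ML p)) :=
    (multilinear_ML _).sub h1
  have h3 := eq_zero_of_multilinear_of_eval_zero h2 (by
    intro x hx
    rw [map_sub, map_sub, map_sum, eval_ML hx, eval_ML hx]
    have : ∀ i ∈ (Finset.univ : Finset (Fin n)), eval x (ML (p * X (Sum.inr (i, j))))
        = eval x p * x (Sum.inr (i, j)) := by
      intro i _
      rw [eval_ML hx, map_mul, eval_X]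
    rw [Finset.sum_congr rfl this, ← Finset.mul_sum]
    unfold qlow
    rw [map_mul, map_sub, map_sum, map_one]
    simp only [eval_X]
    ring)
  exact sub_eq_zero.mp h3

/-- degree bound: every monomial of ML p is small -/
lemma deg_bound {p : MvPolynomial (Vn n) ℝ} (hp : ∀ s, 0 ≤ coeff s p) {j : Fin n}
    (htd : 2 * (ML (p * qlow j)).totalDegree + 3 ≤ n) :
    ∀ m ∈ (ML p).support, 2 * m.support.card + 5 ≤ n := by
  classical
  intro m hm
  obtain ⟨mx, hmx, hmax⟩ := Finset.exists_max_image (ML p).support degE ⟨m, hm⟩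
  set Q := ML p with hQ
  have hQml : Multilinear Q := multilinear_ML p
  have hQnn : ∀ M, 0 ≤ coeff M Q := fun M => coeff_ML_nonneg hp M
  have hcoeffF : ∀ M : Vn n →₀ ℕ, coeff M (ML (p * qlow j)) =
      (∑ i : Fin n, ∑ u ∈ Q.support,
        if trunc (u + Finsupp.single (Sum.inr (i, j)) 1) = M then coeff u Q else 0)
      - coeff M Q := by
    intro M
    rw [ML_qlow_expand, MvPolynomial.coeff_sub, coeff_sum]
    congr 1
    apply Finset.sum_congr rfl
    intro i _
    rw [ML_mul_X_ML, coeff_ML_mul_X]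
  have hpos : ∀ (i : Fin n) (M : Vn n →₀ ℕ),
      0 ≤ ∑ u ∈ Q.support,
        if trunc (u + Finsupp.single (Sum.inr (i, j)) 1) = M then coeff u Q else 0 := by
    intro i M
    apply Finset.sum_nonneg
    intro u _
    split
    · exact hQnn u
    · exact le_refl 0
  have hmxml : ∀ v, mx v ≤ 1 := hQml mx hmx
  have hmxne : coeff mx Q ≠ 0 := MvPolynomial.mem_support_iff.mp hmx
  have hmxpos : 0 < coeff mx Q := lt_of_le_of_ne (hQnn mx) (Ne.symm hmxne)
  have hmml : ∀ v, m v ≤ 1 := hQml m hm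
  have hmle : degE m ≤ degE mx := hmax m hm
  by_cases hcase : ∃ i : Fin n, Sum.inr (i, j) ∉ mx.support
  · obtain ⟨i₀, hi₀⟩ := hcase
    set v₀ : Vn n := Sum.inr (i₀, j) with hv₀
    set M := mx + Finsupp.single v₀ 1 with hM
    have htr : trunc (mx + Finsupp.single v₀ 1) = M := by
      rw [← hM, hM]; exact trunc_add_single_notMem hmxml hi₀
    have hMQ : coeff M Q = 0 := by
      by_contra h
      have h2 := hmax M (MvPolynomial.mem_support_iff.mpr h)
      rw [hM, degE_add_single] at h2; omega
    have hiterm : coeff mx Q ≤ ∑ u ∈ Q.support,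
        if trunc (u + Finsupp.single v₀ 1) = M then coeff u Q else 0 := by
      have h3 := Finset.single_le_sum (f := fun u => if trunc (u + Finsupp.single v₀ 1) = M
          then coeff u Q else 0)
        (fun u _ => by by_cases h : trunc (u + Finsupp.single v₀ 1) = M <;> simp [h, hQnn u]) hmx
      simpa [htr] using h3
    have houter : coeff mx Q ≤ ∑ i : Fin n, ∑ u ∈ Q.support,
        if trunc (u + Finsupp.single (Sum.inr (i, j)) 1) = M then coeff u Q else 0 := by
      refine le_trans hiterm ?_
      exact Finset.single_le_sum (f := fun i => ∑ u ∈ Q.support,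
        if trunc (u + Finsupp.single (Sum.inr (i, j)) 1) = M then coeff u Q else 0)
        (fun i _ => hpos i M) (Finset.mem_univ i₀)
    have hFpos : 0 < coeff M (ML (p * qlow j)) := by
      rw [hcoeffF M, hMQ, sub_zero]
      exact lt_of_lt_of_le hmxpos houter
    have hMS : M ∈ (ML (p * qlow j)).support := MvPolynomial.mem_support_iff.mpr (ne_of_gt hFpos)
    have h4 : degE M ≤ (ML (p * qlow j)).totalDegree := le_totalDegree_degE hMS
    have h5 : degE M = degE mx + 1 := by rw [hM]; exact degE_add_single _ _
    have h6 : degE m = m.support.card := degE_eq_card hmml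
    omega
  · push_neg at hcase
    have hinj : Function.Injective (fun i : Fin n => (Sum.inr (i, j) : Vn n)) := by
      intro a b h; simpa using h
    have hn_le : n ≤ mx.support.card := by
      have h7 : (Finset.univ.image (fun i : Fin n => (Sum.inr (i, j) : Vn n))) ⊆ mx.support := by
        intro v hv
        obtain ⟨i, _, rfl⟩ := Finset.mem_image.mp hv
        exact hcase i
      calc n = (Finset.univ : Finset (Fin n)).card := by simp
        _ = (Finset.univ.image (fun i : Fin n => (Sum.inr (i, j) : Vn n))).card :=
            (Finset.card_image_of_injective _ hinj).symm
        _ ≤ mx.support.card := Finset.card_le_card h7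
    have hiterm : ∀ i : Fin n, coeff mx Q ≤ ∑ u ∈ Q.support,
        if trunc (u + Finsupp.single (Sum.inr (i, j)) 1) = mx then coeff u Q else 0 := by
      intro i
      have htr : trunc (mx + Finsupp.single (Sum.inr (i, j)) 1) = mx :=
        trunc_add_single_mem hmxml (hcase i)
      have h3 := Finset.single_le_sum (f := fun u => if trunc (u + Finsupp.single (Sum.inr (i, j)) 1) = mx
          then coeff u Q else 0)
        (fun u _ => by by_cases h : trunc (u + Finsupp.single (Sum.inr (i, j)) 1) = mx <;>
          simp [h, hQnn u]) hmx
      simpa [htr] using h3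
    have houter : (n : ℝ) * coeff mx Q ≤ ∑ i : Fin n, ∑ u ∈ Q.support,
        if trunc (u + Finsupp.single (Sum.inr (i, j)) 1) = mx then coeff u Q else 0 := by
      calc (n : ℝ) * coeff mx Q = ∑ _i : Fin n, coeff mx Q := by
            rw [Finset.sum_const, Finset.card_univ, Fintype.card_fin, nsmul_eq_mul]
        _ ≤ _ := Finset.sum_le_sum fun i _ => hiterm i
    have hn3 : 3 ≤ n := by omega
    have hFpos : 0 < coeff mx (ML (p * qlow j)) := by
      rw [hcoeffF mx]
      have : (1 : ℝ) * coeff mx Q < (n : ℝ) * coeff mx Q := by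
        apply mul_lt_mul_of_pos_right _ hmxpos
        exact_mod_cast by omega
      nlinarith [houter]
    have hMS : mx ∈ (ML (p * qlow j)).support := MvPolynomial.mem_support_iff.mpr (ne_of_gt hFpos)
    have h4 : degE mx ≤ (ML (p * qlow j)).totalDegree := le_totalDegree_degE hMS
    have h5 : degE mx = mx.support.card := degE_eq_card hmxml
    omega

end LNP

section Comb
open Finset

variable {n : ℕ}

/-- closure under a set of constraint pairs -/
lemma closure_aux : ∀ (k : ℕ) (T : Finset (Fin n × Fin n)), T.card ≤ k →
    ∀ C₀ : Finset (Fin n), ∃ C, C₀ ⊆ C ∧ (∀ p ∈ T, (p.1 ∈ C ↔ p.2 ∈ C)) ∧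
      C.card ≤ C₀.card + T.card := by
  intro k
  induction k with
  | zero =>
    intro T hT C₀
    have hTe : T = ∅ := Finset.card_eq_zero.mp (Nat.le_zero.mp hT)
    subst hTe
    exact ⟨C₀, subset_rfl, by simp, by simp⟩
  | succ k ih =>
    intro T hT C₀
    by_cases hx : ∃ p ∈ T, ((p.1 ∈ C₀ ∧ p.2 ∉ C₀) ∨ (p.2 ∈ C₀ ∧ p.1 ∉ C₀))
    · obtain ⟨p, hpT, hp⟩ := hx
      have hTpos : 1 ≤ T.card := Finset.card_pos.mpr ⟨p, hpT⟩
      set C₁ := insert p.1 (insert p.2 C₀) with hC₁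
      have hc₁ : C₁.card ≤ C₀.card + 1 := by
        rcases hp with ⟨h1, _⟩ | ⟨h1, _⟩
        · rw [hC₁, Finset.insert_eq_self.mpr (Finset.mem_insert_of_mem h1)]
          exact Finset.card_insert_le _ _
        · rw [hC₁, Finset.insert_eq_self.mpr h1]
          exact Finset.card_insert_le _ _
      have hT' : (T.erase p).card ≤ k := by
        rw [Finset.card_erase_of_mem hpT]; omega
      obtain ⟨C, hsub, hpairs, hcard⟩ := ih (T.erase p) hT' C₁
      refine ⟨C, ?_, ?_, ?_⟩
      · exact subset_trans (subset_trans (Finset.subset_insert _ _) (Finset.subset_insert _ _)) hsub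
      · intro q hq
        by_cases hqp : q = p
        · subst hqp
          have h1 : q.1 ∈ C := hsub (Finset.mem_insert_self _ _)
          have h2 : q.2 ∈ C := hsub (Finset.mem_insert_of_mem (Finset.mem_insert_self _ _))
          exact iff_of_true h1 h2
        · exact hpairs q (Finset.mem_erase.mpr ⟨hqp, hq⟩)
      · rw [Finset.card_erase_of_mem hpT] at hcard
        omega
    · push_neg at hx
      refine ⟨C₀, subset_rfl, ?_, by omega⟩
      intro q hq
      have := hx q hq
      tauto

lemma exists_closed (T : Finset (Fin n × Fin n)) (j : Fin n) :
    ∃ C : Finset (Fin n), j ∈ C ∧ (∀ p ∈ T, (p.1 ∈ C ↔ p.2 ∈ C)) ∧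
      C.card ≤ T.card + 1 := by
  obtain ⟨C, hsub, hpairs, hcard⟩ := closure_aux T.card T le_rfl {j}
  refine ⟨C, hsub (Finset.mem_singleton_self j), hpairs, ?_⟩
  rw [Finset.card_singleton] at hcard
  omega

/-- the reinterleaving permutation: maps `S₁` monotonically onto `S₂` and the
complement of `S₁` monotonically onto the complement of `S₂`. -/
noncomputable def moveFun (S₁ S₂ : Finset (Fin n)) (h : S₁.card = S₂.card) : Fin n → Fin n :=
  fun x =>
    if hx : x ∈ S₁ then
      (S₂.orderIsoOfFin h.symm ((S₁.orderIsoOfFin rfl).symm ⟨x, hx⟩)).val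
    else
      (S₂ᶜ.orderIsoOfFin (by rw [Finset.card_compl, Finset.card_compl, h])
        ((S₁ᶜ.orderIsoOfFin rfl).symm ⟨x, Finset.mem_compl.mpr hx⟩)).val

lemma moveFun_mem {S₁ S₂ : Finset (Fin n)} (h : S₁.card = S₂.card) {x : Fin n}
    (hx : x ∈ S₁) : moveFun S₁ S₂ h x ∈ S₂ := by
  simp only [moveFun]
  rw [dif_pos hx]
  exact Finset.coe_mem _

lemma moveFun_notMem {S₁ S₂ : Finset (Fin n)} (h : S₁.card = S₂.card) {x : Fin n}
    (hx : x ∉ S₁) : moveFun S₁ S₂ h x ∉ S₂ := by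
  simp only [moveFun]
  rw [dif_neg hx]
  exact Finset.mem_compl.mp (Finset.coe_mem _)

lemma moveFun_lt_iff_mem {S₁ S₂ : Finset (Fin n)} (h : S₁.card = S₂.card) {x y : Fin n}
    (hx : x ∈ S₁) (hy : y ∈ S₁) :
    moveFun S₁ S₂ h x < moveFun S₁ S₂ h y ↔ x < y := by
  simp only [moveFun]
  rw [dif_pos hx, dif_pos hy, Subtype.coe_lt_coe, OrderIso.lt_iff_lt, OrderIso.lt_iff_lt,
    Subtype.mk_lt_mk]

lemma moveFun_lt_iff_notMem {S₁ S₂ : Finset (Fin n)} (h : S₁.card = S₂.card) {x y : Fin n}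
    (hx : x ∉ S₁) (hy : y ∉ S₁) :
    moveFun S₁ S₂ h x < moveFun S₁ S₂ h y ↔ x < y := by
  simp only [moveFun]
  rw [dif_neg hx, dif_neg hy, Subtype.coe_lt_coe, OrderIso.lt_iff_lt, OrderIso.lt_iff_lt,
    Subtype.mk_lt_mk]

lemma moveFun_injective {S₁ S₂ : Finset (Fin n)} (h : S₁.card = S₂.card) :
    Function.Injective (moveFun S₁ S₂ h) := by
  intro x y hxy
  by_cases hx : x ∈ S₁ <;> by_cases hy : y ∈ S₁
  · rcases lt_trichotomy x y with hlt | heq | hlt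
    · exact absurd ((moveFun_lt_iff_mem h hx hy).mpr hlt) (by rw [hxy]; exact lt_irrefl _)
    · exact heq
    · exact absurd ((moveFun_lt_iff_mem h hy hx).mpr hlt) (by rw [hxy]; exact lt_irrefl _)
  · exact absurd (hxy ▸ moveFun_mem h hx) (moveFun_notMem h hy)
  · exact absurd (hxy ▸ moveFun_notMem h hx) (fun hh => hh (moveFun_mem h hy))
  · rcases lt_trichotomy x y with hlt | heq | hlt
    · exact absurd ((moveFun_lt_iff_notMem h hx hy).mpr hlt) (by rw [hxy]; exact lt_irrefl _)
    · exact heq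
    · exact absurd ((moveFun_lt_iff_notMem h hy hx).mpr hlt) (by rw [hxy]; exact lt_irrefl _)

/-- the reinterleaving permutation -/
noncomputable def moveEquiv (S₁ S₂ : Finset (Fin n)) (h : S₁.card = S₂.card) :
    Equiv.Perm (Fin n) :=
  Equiv.ofBijective (moveFun S₁ S₂ h)
    (Finite.injective_iff_bijective.mp (moveFun_injective h))

@[simp] lemma moveEquiv_apply {S₁ S₂ : Finset (Fin n)} (h : S₁.card = S₂.card) (x : Fin n) :
    moveEquiv S₁ S₂ h x = moveFun S₁ S₂ h x := rfl

end Comb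

section CombMain
open Finset

variable {n : ℕ}

lemma comb (T : Finset (Fin n × Fin n)) (j : Fin n) (hT : 2 * T.card + 5 ≤ n) :
    ((Finset.univ : Finset (Equiv.Perm (Fin n))).filter
        (fun π => ∀ p ∈ T, π p.1 < π p.2)).card
      ≤ ∑ π ∈ (Finset.univ : Finset (Equiv.Perm (Fin n))).filter
          (fun π => ∀ p ∈ T, π p.1 < π p.2), (π j : ℕ) := by
  classical
  obtain ⟨C, hjC, hclosed, hCcard⟩ := exists_closed T j
  set α := C.card with hα
  have hα2 : 2 * α + 2 ≤ n := by omega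
  -- the embedding on subsets
  have hcard : Fintype.card ↥(Finset.powersetCard α (Finset.univ : Finset (Fin n)))
      ≤ Fintype.card ↥(Finset.powersetCard (α + 1) (Finset.univ : Finset (Fin n))) := by
    rw [Fintype.card_coe, Fintype.card_coe, Finset.card_powersetCard,
      Finset.card_powersetCard, Finset.card_univ, Fintype.card_fin]
    exact Nat.choose_le_succ_of_lt_half_left (by omega)
  obtain ⟨ι⟩ : Nonempty (↥(Finset.powersetCard α (Finset.univ : Finset (Fin n))) ↪
      ↥(Finset.powersetCard (α + 1) (Finset.univ : Finset (Fin n)))) :=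
    Function.Embedding.nonempty_of_card_le hcard
  set A := (Finset.univ : Finset (Equiv.Perm (Fin n))).filter
    (fun π => ∀ p ∈ T, π p.1 < π p.2) with hA
  -- basic facts about images of C
  have himgcard : ∀ π : Equiv.Perm (Fin n), (C.image π).card = α :=
    fun π => Finset.card_image_of_injective _ (Equiv.injective π)
  have himgmem : ∀ (π : Equiv.Perm (Fin n)) (x : Fin n), π x ∈ C.image π ↔ x ∈ C := by
    intro π x
    constructor
    · intro hx
      obtain ⟨y, hy, hyx⟩ := Finset.mem_image.mp hx
      rwa [← Equiv.injective π hyx]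
    · exact fun hx => Finset.mem_image_of_mem _ hx
  -- data for branch II, as functions of the subtype element
  set Rs : {s // s ∈ Finset.powersetCard α (Finset.univ : Finset (Fin n))} → Finset (Fin n) :=
    fun s => (ι s).val with hRs
  have hRcard : ∀ s, (Rs s).card = α + 1 :=
    fun s => Finset.mem_powersetCard_univ.mp (ι s).2
  have hRne : ∀ s, (Rs s).Nonempty := fun s => Finset.card_pos.mp (by rw [hRcard s]; omega)
  set ks : _ → Fin n := fun s => (Rs s).min' (hRne s) with hks
  set S2s : _ → Finset (Fin n) := fun s => (Rs s).erase (ks s) with hS2s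
  have hS2card : ∀ s, (S2s s).card = α := by
    intro s
    rw [hS2s]
    rw [Finset.card_erase_of_mem (Finset.min'_mem _ _), hRcard s]
    omega
  set ψs : {s // s ∈ Finset.powersetCard α (Finset.univ : Finset (Fin n))} → Equiv.Perm (Fin n) :=
    fun s => moveEquiv s.val (S2s s) (by
      rw [hS2card s]
      exact Finset.mem_powersetCard_univ.mp s.2) with hψs
  -- the subtype element associated with a permutation
  set sOf : Equiv.Perm (Fin n) → {s // s ∈ Finset.powersetCard α (Finset.univ : Finset (Fin n))} :=
    fun π => ⟨C.image π, Finset.mem_powersetCard_univ.mpr (himgcard π)⟩ with hsOf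
  -- branch I: some element of C lies below j
  have hfilterne : ∀ π : Equiv.Perm (Fin n), (∃ x ∈ C, π x < π j) →
      ((C.image π).filter (· < π j)).Nonempty := by
    rintro π ⟨x, hx, hlt⟩
    exact ⟨π x, Finset.mem_filter.mpr ⟨Finset.mem_image_of_mem _ hx, hlt⟩⟩
  -- the injection
  set J : Equiv.Perm (Fin n) → ((_ : Equiv.Perm (Fin n)) × Fin n) :=
    fun π =>
      if h : ∃ x ∈ C, π x < π j then
        ⟨π, ((C.image π).filter (· < π j)).max' (hfilterne π h)⟩
      else
        ⟨π.trans (ψs (sOf π)), ks (sOf π)⟩ with hJ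
  set B : Finset ((_ : Equiv.Perm (Fin n)) × Fin n) :=
    A.sigma (fun π => Finset.Iio (π j)) with hB
  have hBcard : B.card = ∑ π ∈ A, (π j : ℕ) := by
    rw [hB, Finset.card_sigma]
    exact Finset.sum_congr rfl fun π _ => Fin.card_Iio _
  -- key: membership of transported permutations in A, and position facts
  have htransA : ∀ π ∈ A, (¬ ∃ x ∈ C, π x < π j) → π.trans (ψs (sOf π)) ∈ A := by
    intro π hπ _
    rw [hA, Finset.mem_filter] at hπ ⊢
    refine ⟨Finset.mem_univ _, ?_⟩
    intro p hp
    have hπp := hπ.2 p hp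
    have hmemiff := hclosed p hp
    simp only [Equiv.trans_apply, hψs, moveEquiv_apply]
    by_cases hc : p.1 ∈ C
    · have hc2 : p.2 ∈ C := hmemiff.mp hc
      rw [moveFun_lt_iff_mem _ ((himgmem π p.1).mpr hc) ((himgmem π p.2).mpr hc2)]
      exact hπp
    · have hc2 : p.2 ∉ C := fun h => hc (hmemiff.mpr h)
      rw [moveFun_lt_iff_notMem _ (fun h => hc ((himgmem π p.1).mp h))
        (fun h => hc2 ((himgmem π p.2).mp h))]
      exact hπp
  have hkbelow : ∀ π : Equiv.Perm (Fin n), ks (sOf π) < (π.trans (ψs (sOf π))) j := by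
    intro π
    have h1 : (π.trans (ψs (sOf π))) j ∈ S2s (sOf π) := by
      simp only [Equiv.trans_apply, hψs, moveEquiv_apply]
      exact moveFun_mem _ ((himgmem π j).mpr hjC)
    have h2 : (π.trans (ψs (sOf π))) j ∈ Rs (sOf π) := Finset.mem_of_mem_erase h1
    have h3 : (π.trans (ψs (sOf π))) j ≠ ks (sOf π) := Finset.ne_of_mem_erase h1
    exact lt_of_le_of_ne (Finset.min'_le _ _ h2) (Ne.symm h3)
  -- J maps A into B
  have hmaps : ∀ π ∈ A, J π ∈ B := by
    intro π hπ
    simp only [hJ]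
    by_cases h : ∃ x ∈ C, π x < π j
    · rw [dif_pos h]
      rw [hB, Finset.mem_sigma]
      refine ⟨hπ, ?_⟩
      rw [Finset.mem_Iio]
      have := ((C.image π).filter (· < π j)).max'_mem (hfilterne π h)
      exact (Finset.mem_filter.mp this).2
    · rw [dif_neg h]
      rw [hB, Finset.mem_sigma]
      exact ⟨htransA π hπ h, Finset.mem_Iio.mpr (hkbelow π)⟩
  -- transported permutations have no C-element below j
  have hLtrans : ∀ π : Equiv.Perm (Fin n), (¬ ∃ x ∈ C, π x < π j) →
      ¬ ∃ x ∈ C, (π.trans (ψs (sOf π))) x < (π.trans (ψs (sOf π))) j := by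
    rintro π hL ⟨x, hx, hlt⟩
    apply hL
    refine ⟨x, hx, ?_⟩
    simp only [Equiv.trans_apply, hψs, moveEquiv_apply] at hlt
    rwa [moveFun_lt_iff_mem _ ((himgmem π x).mpr hx) ((himgmem π j).mpr hjC)] at hlt
  -- recovery of the image set for transported permutations
  have himgtrans : ∀ π : Equiv.Perm (Fin n), C.image (π.trans (ψs (sOf π))) = S2s (sOf π) := by
    intro π
    apply Finset.eq_of_subset_of_card_le
    · intro x hx
      obtain ⟨y, hy, rfl⟩ := Finset.mem_image.mp hx
      simp only [Equiv.trans_apply, hψs, moveEquiv_apply]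
      exact moveFun_mem _ ((himgmem π y).mpr hy)
    · rw [hS2card, himgcard]
  -- injectivity
  have hinj : Set.InjOn J A := by
    intro π₁ hπ₁ π₂ hπ₂ heq
    simp only [hJ] at heq
    by_cases h1 : ∃ x ∈ C, π₁ x < π₁ j <;> by_cases h2 : ∃ x ∈ C, π₂ x < π₂ j
    · rw [dif_pos h1, dif_pos h2] at heq
      exact (Sigma.mk.inj_iff.mp heq).1
    · rw [dif_pos h1, dif_neg h2] at heq
      have hfst : π₁ = π₂.trans (ψs (sOf π₂)) := (Sigma.mk.inj_iff.mp heq).1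
      exact absurd (hfst ▸ h1) (hLtrans π₂ h2)
    · rw [dif_neg h1, dif_pos h2] at heq
      have hfst : π₁.trans (ψs (sOf π₁)) = π₂ := (Sigma.mk.inj_iff.mp heq).1
      exact absurd (hfst ▸ (hLtrans π₁ h1)) (by simpa using h2)
    · rw [dif_neg h1, dif_neg h2] at heq
      have hfst : π₁.trans (ψs (sOf π₁)) = π₂.trans (ψs (sOf π₂)) :=
        (Sigma.mk.inj_iff.mp heq).1
      have hsnd : ks (sOf π₁) = ks (sOf π₂) := by
        have := (Sigma.mk.inj_iff.mp heq).2
        exact eq_of_heq this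
      have hS2eq : S2s (sOf π₁) = S2s (sOf π₂) := by
        rw [← himgtrans π₁, ← himgtrans π₂, hfst]
      have hReq : Rs (sOf π₁) = Rs (sOf π₂) := by
        have e1 : Rs (sOf π₁) = insert (ks (sOf π₁)) (S2s (sOf π₁)) := by
          rw [hS2s]
          rw [Finset.insert_erase (Finset.min'_mem _ _)]
        have e2 : Rs (sOf π₂) = insert (ks (sOf π₂)) (S2s (sOf π₂)) := by
          rw [hS2s]
          rw [Finset.insert_erase (Finset.min'_mem _ _)]
        rw [e1, e2, hsnd, hS2eq]
      have hseq : sOf π₁ = sOf π₂ := by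
        apply ι.injective
        apply Subtype.ext
        exact hReq
      have hψeq : ψs (sOf π₁) = ψs (sOf π₂) := by rw [hseq]
      rw [hψeq] at hfst
      ext x
      have := congrArg (fun e : Equiv.Perm (Fin n) => (ψs (sOf π₂)).symm (e x)) hfst
      exact congrArg Fin.val (by simpa using this)
  calc A.card ≤ B.card := Finset.card_le_card_of_injOn J hmaps hinj
    _ = _ := hBcard

end CombMain

section Lower
open MvPolynomial Finset

variable {n : ℕ}

lemma filter_lt_card (π : Equiv.Perm (Fin n)) (j : Fin n) :
    ((Finset.univ : Finset (Fin n)).filter (fun i => π i < π j)).card = (π j : ℕ) := by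
  classical
  have h1 : ((Finset.univ : Finset (Fin n)).filter (fun i => π i < π j)).card
      = ((Finset.univ : Finset (Fin n)).filter (fun k => k < π j)).card := by
    apply Finset.card_bij (fun i _ => π i)
    · intro a ha
      simp only [Finset.mem_filter, Finset.mem_univ, true_and] at ha ⊢
      exact ha
    · intro a _ b _ hab
      exact π.injective hab
    · intro b hb
      refine ⟨π.symm b, ?_, by simp⟩
      simp only [Finset.mem_filter, Finset.mem_univ, true_and] at hb ⊢
      simpa using hb
  rw [h1]
  have h2 : (Finset.univ : Finset (Fin n)).filter (fun k => k < π j) = Finset.Iio (π j) := by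
    ext k; simp [Finset.mem_Iio]
  rw [h2, Fin.card_Iio]

lemma eval_qlow (π : Equiv.Perm (Fin n)) (j : Fin n) :
    eval (χ π) (qlow j) = (π j : ℝ) - 1 := by
  unfold qlow
  rw [map_sub, map_sum, map_one]
  congr 1
  have h1 : ∀ i ∈ (Finset.univ : Finset (Fin n)),
      eval (χ π) (X (Sum.inr (i, j)) : MvPolynomial (Vn n) ℝ)
        = if π i < π j then (1 : ℝ) else 0 := by
    intro i _
    rw [eval_X]
    rfl
  rw [Finset.sum_congr rfl h1, Finset.sum_boole, filter_lt_card]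

lemma indicator_prod (π : Equiv.Perm (Fin n)) (m : Vn n →₀ ℕ) :
    (∏ v ∈ m.support, χ π v ^ m v)
      = if ∀ w ∈ m.support.image pr, π w.1 < π w.2 then (1 : ℝ) else 0 := by
  classical
  by_cases h : ∀ w ∈ m.support.image pr, π w.1 < π w.2
  · rw [if_pos h]
    apply Finset.prod_eq_one
    intro v hv
    have : π (pr v).1 < π (pr v).2 := h (pr v) (Finset.mem_image_of_mem pr hv)
    rw [show χ π v = 1 from by unfold χ; rw [if_pos this]]
    exact one_pow _
  · rw [if_neg h]
    push_neg at h
    obtain ⟨w, hw, hlt⟩ := h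
    obtain ⟨v, hv, rfl⟩ := Finset.mem_image.mp hw
    apply Finset.prod_eq_zero hv
    rw [show χ π v = 0 from by unfold χ; rw [if_neg (not_lt.mpr hlt)]]
    exact zero_pow (Finsupp.mem_support_iff.mp hv)

lemma lower_nonneg {p : MvPolynomial (Vn n) ℝ} (hp : ∀ s, 0 ≤ coeff s p) {j : Fin n}
    (htd : 2 * (ML (p * qlow j)).totalDegree + 3 ≤ n) :
    0 ≤ ∑ π : Equiv.Perm (Fin n), eval (χ π) (p * qlow j) := by
  classical
  have hdeg := deg_bound hp htd
  have hstep : ∀ π : Equiv.Perm (Fin n), eval (χ π) (p * qlow j)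
      = ∑ m ∈ (ML p).support,
          coeff m (ML p) * ((if ∀ w ∈ m.support.image pr, π w.1 < π w.2 then (1 : ℝ) else 0)
            * ((π j : ℝ) - 1)) := by
    intro π
    rw [map_mul, eval_qlow, ← eval_ML (χ_bool π) p, eval_eq]
    rw [Finset.sum_mul]
    apply Finset.sum_congr rfl
    intro m hm
    rw [indicator_prod, mul_assoc]
  rw [Finset.sum_congr rfl fun π _ => hstep π]
  rw [Finset.sum_comm]
  apply Finset.sum_nonneg
  intro m hm
  rw [← Finset.mul_sum]
  apply mul_nonneg (coeff_ML_nonneg hp m)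
  -- the inner sum over permutations
  set T := m.support.image pr with hTdef
  have hT : 2 * T.card + 5 ≤ n := by
    have h1 : T.card ≤ m.support.card := Finset.card_image_le
    have h2 := hdeg m hm
    omega
  have hsum : ∑ π : Equiv.Perm (Fin n),
      (if ∀ w ∈ T, π w.1 < π w.2 then (1 : ℝ) else 0) * ((π j : ℝ) - 1)
      = ∑ π ∈ (Finset.univ : Finset (Equiv.Perm (Fin n))).filter
          (fun π => ∀ w ∈ T, π w.1 < π w.2), ((π j : ℝ) - 1) := by
    rw [Finset.sum_filter]
    apply Finset.sum_congr rfl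
    intro π _
    by_cases h : ∀ w ∈ T, π w.1 < π w.2
    · rw [if_pos h, if_pos h, one_mul]
    · rw [if_neg h, if_neg h, zero_mul]
  rw [hsum, Finset.sum_sub_distrib]
  rw [Finset.sum_const]
  have hcomb := comb T j hT
  have : ((Finset.univ.filter (fun π : Equiv.Perm (Fin n) => ∀ w ∈ T, π w.1 < π w.2)).card : ℝ)
      ≤ ∑ π ∈ Finset.univ.filter (fun π : Equiv.Perm (Fin n) => ∀ w ∈ T, π w.1 < π w.2),
          ((π j : ℕ) : ℝ) := by
    rw [← Nat.cast_sum]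
    exact_mod_cast hcomb
  simp only [nsmul_eq_mul, mul_one]
  linarith [this]

end Lower

section Final
open MvPolynomial Finset

variable {n : ℕ}

lemma axiom_term_nonneg {K : ℕ} (hn : 4 ≤ n) (p q : Fin K → MvPolynomial (Vn n) ℝ)
    (h1 : ∀ t, ∀ s, 0 ≤ (p t).coeff s)
    (h2 : ∀ t, lnpAxiom n (q t))
    (h3 : ∀ t, ((ML (p t * q t)).totalDegree : ℝ) ≤ ((n : ℝ) - 3) / 2) (t : Fin K) :
    0 ≤ ∑ π : Equiv.Perm (Fin n), eval (χ π) (p t * q t) := by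
  classical
  have hpnn : ∀ π : Equiv.Perm (Fin n), 0 ≤ eval (χ π) (p t) :=
    fun π => eval_nonneg (χ_nonneg π) (h1 t)
  rcases h2 t with ⟨i, hq⟩ | ⟨i, j, k, hq⟩ | ⟨i, j, hq⟩ | ⟨j, hq⟩ | ⟨x, hq⟩ | ⟨x, hq⟩
  · -- self
    rw [hq]
    apply Finset.sum_nonneg
    intro π _
    rw [map_mul, map_neg, eval_X]
    have hz : χ π (Sum.inl (i, i)) = 0 := by
      unfold χ
      exact if_neg (lt_irrefl _)
    rw [hz, neg_zero, mul_zero]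
  · -- transitivity
    rw [hq]
    apply Finset.sum_nonneg
    intro π _
    rw [map_mul]
    apply mul_nonneg (hpnn π)
    rw [map_add, map_sub, map_sub, eval_X, eval_X, eval_X, map_one]
    show (0:ℝ) ≤ χ π (Sum.inl (i, k)) - χ π (Sum.inl (i, j)) - χ π (Sum.inl (j, k)) + 1
    unfold χ
    show (0:ℝ) ≤ (if π i < π k then (1:ℝ) else 0) - (if π i < π j then (1:ℝ) else 0)
      - (if π j < π k then (1:ℝ) else 0) + 1
    by_cases hij : π i < π j <;> by_cases hjk : π j < π k
    · have hik : π i < π k := hij.trans hjk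
      rw [if_pos hij, if_pos hjk, if_pos hik]
      norm_num
    · rw [if_pos hij, if_neg hjk]
      split_ifs <;> norm_num
    · rw [if_neg hij, if_pos hjk]
      split_ifs <;> norm_num
    · rw [if_neg hij, if_neg hjk]
      split_ifs <;> norm_num
  · -- implication
    rw [hq]
    apply Finset.sum_nonneg
    intro π _
    rw [map_mul, map_sub, eval_X, eval_X]
    have hz : χ π (Sum.inl (i, j)) = χ π (Sum.inr (i, j)) := rfl
    rw [hz, sub_self, mul_zero]
  · -- lower
    rw [hq]
    have htd : 2 * (ML (p t * qlow j)).totalDegree + 3 ≤ n := by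
      have h := h3 t
      rw [hq] at h
      have h' : ((ML (p t * qlow j)).totalDegree : ℝ) ≤ ((n : ℝ) - 3) / 2 := by
        simpa [qlow] using h
      have : 2 * ((ML (p t * qlow j)).totalDegree : ℝ) + 3 ≤ (n : ℝ) := by linarith
      exact_mod_cast this
    have := lower_nonneg (h1 t) htd
    simpa [qlow] using this
  · -- X
    rw [hq]
    apply Finset.sum_nonneg
    intro π _
    rw [map_mul, eval_X]
    apply mul_nonneg (hpnn π) (χ_nonneg π x)
  · -- 1 - X
    rw [hq]
    apply Finset.sum_nonneg
    intro π _
    rw [map_mul, map_sub, map_one, eval_X]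
    apply mul_nonneg (hpnn π)
    rcases χ_bool π x with h | h <;> rw [h] <;> norm_num

end Final

end MLAux

open MvPolynomial MLAux in
/-- For `n ≥ 4`, the unary Least Number Principle `LNP_n` has no SA+Squares refutation
of degree at most `(n−3)/2`: there is no identity `−1 = Σ_t ML(p_t q_t) + Σ_s ML(r_s²)`
with the `p_t` having nonnegative coefficients, the `q_t` axiom polynomials, and all the
multilinearized summands of total degree at most `(n−3)/2`. -/
theorem LNP_no_SAplusSquares_refutation (n : ℕ) (hn : 4 ≤ n) :
    ¬ ∃ (K L : ℕ) (p q : Fin K → MvPolynomial ((Fin n × Fin n) ⊕ (Fin n × Fin n)) ℝ)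
        (r : Fin L → MvPolynomial ((Fin n × Fin n) ⊕ (Fin n × Fin n)) ℝ),
        (∀ t, ∀ s, 0 ≤ (p t).coeff s) ∧
        (∀ t, lnpAxiom n (q t)) ∧
        (∀ t, ((ML (p t * q t)).totalDegree : ℝ) ≤ ((n : ℝ) - 3) / 2) ∧
        (∀ s, ((ML (r s ^ 2)).totalDegree : ℝ) ≤ ((n : ℝ) - 3) / 2) ∧
        (∑ t, ML (p t * q t)) + (∑ s, ML (r s ^ 2)) = -1 := by
  classical
  rintro ⟨K, L, p, q, r, h1, h2, h3, h4, h5⟩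
  have hfun := congrArg (fun f : MvPolynomial (Vn n) ℝ =>
    ∑ π : Equiv.Perm (Fin n), eval (χ π) f) h5
  have hL : ∑ π : Equiv.Perm (Fin n),
      eval (χ π) ((∑ t, ML (p t * q t)) + (∑ s, ML (r s ^ 2)))
      = (∑ t, ∑ π : Equiv.Perm (Fin n), eval (χ π) (p t * q t))
        + (∑ s, ∑ π : Equiv.Perm (Fin n), (eval (χ π) (r s)) ^ 2) := by
    have hπ : ∀ π : Equiv.Perm (Fin n),
        eval (χ π) ((∑ t, ML (p t * q t)) + (∑ s, ML (r s ^ 2)))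
        = (∑ t, eval (χ π) (p t * q t)) + (∑ s, (eval (χ π) (r s)) ^ 2) := by
      intro π
      rw [map_add, map_sum, map_sum]
      congr 1
      · exact Finset.sum_congr rfl fun t _ => eval_ML (χ_bool π) _
      · refine Finset.sum_congr rfl fun s _ => ?_
        rw [eval_ML (χ_bool π), map_pow]
    rw [Finset.sum_congr rfl fun π _ => hπ π, Finset.sum_add_distrib]
    congr 1
    · exact Finset.sum_comm
    · exact Finset.sum_comm
  have hR : ∑ π : Equiv.Perm (Fin n), eval (χ π) (-1 : MvPolynomial (Vn n) ℝ)
      = -(Fintype.card (Equiv.Perm (Fin n)) : ℝ) := by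
    have : ∀ π : Equiv.Perm (Fin n), eval (χ π) (-1 : MvPolynomial (Vn n) ℝ) = -1 := by
      intro π; rw [map_neg, map_one]
    rw [Finset.sum_congr rfl fun π _ => this π, Finset.sum_const, Finset.card_univ]
    simp
  rw [hL, hR] at hfun
  have hts : 0 ≤ ∑ t, ∑ π : Equiv.Perm (Fin n), eval (χ π) (p t * q t) :=
    Finset.sum_nonneg fun t _ => axiom_term_nonneg hn p q h1 h2 h3 t
  have hss : 0 ≤ ∑ s, ∑ π : Equiv.Perm (Fin n), (eval (χ π) (r s)) ^ 2 :=
    Finset.sum_nonneg fun s _ => Finset.sum_nonneg fun π _ => sq_nonneg _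
  have hcard : (0 : ℝ) < (Fintype.card (Equiv.Perm (Fin n)) : ℝ) := by
    exact_mod_cast Fintype.card_pos
  linarith
end

section
/- Let n ≥ 2, let Φ be a partial injective function from [n] to [n−1], let i ∈ [n] with i not in the domain of Φ, and let j ∈ [n−1] with j not in the range of Φ. Then the number of bijections σ from [n]∖{i} onto [n−1] that extend Φ equals the number of bijections τ from [n]∖{k} onto [n−1], taken over all k ∈ [n] with k ≠ i, that extend Φ and satisfy τ(i) = j. -/
/-!
Send a matching `σ` that leaves pigeon `i` unmatched to the matching in which `i` takes hole
`j` and the pigeon `k` that held `j` under `σ` (it exists by pigeonhole) becomes the unmatched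
one. The inverse unmatches `i` and gives hole `j` back to the unmatched pigeon. Since `i` is
outside the domain of `Φ` and `j` outside its range, both maps preserve extending `Φ`.
-/

/-- `P` is a maximal partial matching of the `n` pigeons into the `n−1` holes leaving
exactly pigeon `i` unmatched: `P i = none`, every other pigeon is matched, and no two
pigeons share a hole. -/
def MatchExcept (n : ℕ) (P : Fin n → Option (Fin (n - 1))) (i : Fin n) : Prop :=
  P i = none ∧ (∀ x, x ≠ i → (P x).isSome) ∧
    ∀ x y a, P x = some a → P y = some a → x = y

/-- `P` extends the partial injective function `Φ`. -/
def ExtendsFn (n : ℕ) (Φ P : Fin n → Option (Fin (n - 1))) : Prop :=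
  ∀ x a, Φ x = some a → P x = some a

section

variable {α β : Type*} [DecidableEq α] [DecidableEq β]

def reassignHole (i : α) (j : β) (P : α → Option β) : α → Option β :=
  fun x => if x = i then some j else if P x = some j then none else P x

def releaseHole (i : α) (j : β) (Q : α → Option β) : α → Option β :=
  fun x => if x = i then none else if Q x = none then some j else Q x

end

section

variable {n : ℕ} {P Q Φ : Fin n → Option (Fin (n - 1))} {i k : Fin n} {j : Fin (n - 1)}

theorem MatchExcept.exists_eq_some (hP : MatchExcept n P i) (j : Fin (n - 1)) :
    ∃ k, k ≠ i ∧ P k = some j := by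
  obtain ⟨-, hsome, hinj⟩ := hP
  let e : {x // x ≠ i} → Fin (n - 1) := fun x => (P x).get (hsome x x.2)
  have he (x : {x // x ≠ i}) : P x = some (e x) := Option.eq_some_of_isSome (hsome x x.2)
  have e_inj : e.Injective := fun x y hxy => Subtype.ext (hinj x y _ (he x) (hxy ▸ he y))
  have card_eq : Fintype.card {x // x ≠ i} = Fintype.card (Fin (n - 1)) := by
    simp [Fintype.card_subtype_compl]
  have e_surj : e.Surjective :=
    ((Fintype.bijective_iff_injective_and_card e).2 ⟨e_inj, card_eq⟩).2
  obtain ⟨x, rfl⟩ := e_surj j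
  exact ⟨x, x.2, he x⟩

theorem MatchExcept.reassignHole (hP : MatchExcept n P i) (hk : P k = some j) :
    MatchExcept n (reassignHole i j P) k := by
  obtain ⟨hPi, hsome, hinj⟩ := hP
  have hki : k ≠ i := by rintro rfl; simp_all
  refine ⟨by simp [_root_.reassignHole, hki, hk], fun x hxk => ?_, fun x y a hx hy => ?_⟩ <;>
    grind [_root_.reassignHole]

theorem MatchExcept.releaseHole (hQ : MatchExcept n Q k) (hQi : Q i = some j) :
    MatchExcept n (releaseHole i j Q) i := by
  obtain ⟨hQk, hsome, hinj⟩ := hQ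
  refine ⟨by simp [_root_.releaseHole], fun x hxi => ?_, fun x y a hx hy => ?_⟩ <;>
    grind [_root_.releaseHole]

theorem ExtendsFn.reassignHole (hΦi : Φ i = none) (hΦj : ∀ x, Φ x ≠ some j)
    (hP : ExtendsFn n Φ P) : ExtendsFn n Φ (reassignHole i j P) := by
  intro x a hx
  have hxi : x ≠ i := by rintro rfl; simp_all
  have haj : a ≠ j := by rintro rfl; exact hΦj x hx
  simp [_root_.reassignHole, hxi, hP x a hx, haj]

theorem ExtendsFn.releaseHole (hΦi : Φ i = none) (hQ : ExtendsFn n Φ Q) :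
    ExtendsFn n Φ (releaseHole i j Q) := by
  intro x a hx
  have hxi : x ≠ i := by rintro rfl; simp_all
  simp [_root_.releaseHole, hxi, hQ x a hx]

theorem releaseHole_reassignHole (hP : MatchExcept n P i) :
    releaseHole i j (reassignHole i j P) = P := by
  obtain ⟨hPi, hsome, -⟩ := hP
  funext x
  grind [releaseHole, reassignHole]

theorem reassignHole_releaseHole (hQ : MatchExcept n Q k) (hQi : Q i = some j) :
    reassignHole i j (releaseHole i j Q) = Q := by
  have holder (x : Fin n) (hx : Q x = some j) : x = i := hQ.2.2 x i j hx hQi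
  funext x
  grind [releaseHole, reassignHole]

end

theorem matchings_bijection_count_general (n : ℕ)
    (Φ : Fin n → Option (Fin (n - 1)))
    (i : Fin n) (hi : Φ i = none) (j : Fin (n - 1)) (hj : ∀ x, Φ x ≠ some j) :
    {P : Fin n → Option (Fin (n - 1)) | MatchExcept n P i ∧ ExtendsFn n Φ P}.ncard =
    {P : Fin n → Option (Fin (n - 1)) |
        (∃ k, k ≠ i ∧ MatchExcept n P k) ∧ ExtendsFn n Φ P ∧ P i = some j}.ncard := by
  refine Set.BijOn.ncard_eq (f := reassignHole i j)
    (Set.InvOn.bijOn (f' := releaseHole i j) ⟨?_, ?_⟩ ?_ ?_)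
  · rintro P ⟨hP, -⟩
    exact releaseHole_reassignHole hP
  · rintro Q ⟨⟨k, -, hQ⟩, -, hQi⟩
    exact reassignHole_releaseHole hQ hQi
  · rintro P ⟨hP, hΦP⟩
    obtain ⟨k, hki, hk⟩ := hP.exists_eq_some j
    exact ⟨⟨k, hki, hP.reassignHole hk⟩, hΦP.reassignHole hi hj, if_pos rfl⟩
  · rintro Q ⟨⟨k, -, hQ⟩, hΦQ, hQi⟩
    exact ⟨hQ.releaseHole hQi, hΦQ.releaseHole hi⟩

/-- Let `Φ` be a partial injective function from `[n]` to `[n−1]`, let `i` be outside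
the domain of `Φ` and `j` outside its range. Then the number of bijections from
`[n]∖{i}` onto `[n−1]` extending `Φ` equals the number of bijections from `[n]∖{k}`
onto `[n−1]` (over all `k ≠ i`) extending `Φ` and sending `i` to `j`. -/
theorem matchings_bijection_count (n : ℕ) (hn : 2 ≤ n)
    (Φ : Fin n → Option (Fin (n - 1)))
    (hΦ : ∀ x y a, Φ x = some a → Φ y = some a → x = y)
    (i : Fin n) (hi : Φ i = none) (j : Fin (n - 1)) (hj : ∀ x, Φ x ≠ some j) :
    {P : Fin n → Option (Fin (n - 1)) | MatchExcept n P i ∧ ExtendsFn n Φ P}.ncard =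
    {P : Fin n → Option (Fin (n - 1)) |
        (∃ k, k ≠ i ∧ MatchExcept n P k) ∧ ExtendsFn n Φ P ∧ P i = some j}.ncard :=
  matchings_bijection_count_general n Φ i hi j hj
end

section
/- Let n ≥ 3. There exists a function v from terms of at most n−2 literals over the variables {P_{i,j} : i ∈ [n], j ∈ [n−1]} to ℝ such that v(⊤) = 1 and, for every term D of at most n−3 literals: (i) for every variable P_{i,j} not occurring in D, v(D∧P_{i,j}) + v(D∧¬P_{i,j}) = v(D); (ii) for every literal l, 0 ≤ v(D∧l) ≤ v(D); (iii) for all distinct pigeons i ≠ i' ∈ [n] and every hole j ∈ [n−1], v(D∧¬P_{i,j}) + v(D∧¬P_{i',j}) ≥ v(D); and (iv) for every pigeon i ∈ [n], Σ_{j=1}^{n−1} v(D∧P_{i,j}) = v(D). In other words, the SA rank of the unary pigeonhole principle PHP^n_{n−1} with equalities is at least n−2. -/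
namespace SATerm

variable {V : Type}

def SatisfiedBy (T : SATerm V) (σ : V → Bool) : Prop :=
  ∀ x b, T x = some b → σ x = b

theorem satisfiedBy_congr {T : SATerm V} {σ τ : V → Bool} (h : ∀ x ∈ T.vars, σ x = τ x) :
    T.SatisfiedBy σ ↔ T.SatisfiedBy τ := by
  refine forall_congr' fun x => forall_congr' fun b => imp_congr_right fun hx => ?_
  rw [h x (by simp [vars, hx])]

theorem satisfiedBy_extend_iff [DecidableEq V] {D : SATerm V} {x : V} {b : Bool}
    {σ : V → Bool} (h : D x ≠ some (!b)) :
    (D.extend x b).SatisfiedBy σ ↔ D.SatisfiedBy σ ∧ σ x = b := by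
  constructor
  · intro hσ
    have hx : σ x = b := hσ x b (by simp [extend])
    refine ⟨fun y c hy => ?_, hx⟩
    by_cases hyx : y = x
    · subst hyx
      cases b <;> cases c <;> simp_all
    · exact hσ y c (by simp [extend, hyx, hy])
  · rintro ⟨hσ, hx⟩ y c hy
    by_cases hyx : y = x
    · subst hyx
      simp_all [extend]
    · exact hσ y c (by simpa [extend, hyx] using hy)

end SATerm

namespace PHP

open Finset Function

variable {α β : Type}

def assignment [DecidableEq β] (f : α → β) : α × β → Bool := fun x => decide (f x.1 = x.2)

@[simp]
theorem assignment_apply [DecidableEq β] (f : α → β) (x : α × β) :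
    assignment f x = decide (f x.1 = x.2) :=
  rfl

variable [Fintype α] [Fintype β] [DecidableEq α]

def pigeons (T : SATerm (α × β)) : Finset α :=
  ({x | (T x).isSome} : Finset (α × β)).image Prod.fst

theorem fst_mem_pigeons {T : SATerm (α × β)} {x : α × β} (hx : x ∈ T.vars) :
    x.1 ∈ pigeons T :=
  mem_image_of_mem _ (by simpa [SATerm.vars, Option.isSome_iff_ne_none] using hx)

@[simp]
theorem pigeons_top : pigeons (fun _ => none : SATerm (α × β)) = ∅ := by
  simp [pigeons]

theorem card_pigeons_le_size (T : SATerm (α × β)) : #(pigeons T) ≤ T.size := by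
  have hvars : T.vars = ↑({x | (T x).isSome} : Finset (α × β)) := by
    ext x; simp [SATerm.vars, Option.isSome_iff_ne_none]
  rw [SATerm.size, hvars, Set.ncard_coe_finset]
  exact card_image_le

variable [DecidableEq β]

theorem pigeons_extend_subset (D : SATerm (α × β)) (x : α × β) (b : Bool) :
    pigeons (D.extend x b) ⊆ insert x.1 (pigeons D) := by
  intro i hi
  obtain ⟨y, hy, rfl⟩ := mem_image.1 hi
  by_cases hyx : y = x
  · simp [hyx]
  · rw [mem_filter, SATerm.extend, if_neg hyx] at hy
    exact mem_insert_of_mem (mem_image_of_mem _ (mem_filter.2 hy))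

open Classical in
/-- Values off `S` are unconstrained, so when `pigeons T ⊆ S` every injection of `S` into `β`
satisfying `T` is counted `card β ^ (card α - #S)` times, a factor that cancels in `weight`. -/
noncomputable def matchings (S : Finset α) (T : SATerm (α × β)) : Finset (α → β) :=
  {f | Set.InjOn f S ∧ T.SatisfiedBy (assignment f)}

theorem mem_matchings {S : Finset α} {T : SATerm (α × β)} {f : α → β} :
    f ∈ matchings S T ↔ Set.InjOn f S ∧ T.SatisfiedBy (assignment f) := by
  classical
  simp [matchings]

theorem matchings_extend {S : Finset α} {D : SATerm (α × β)} {x : α × β} {b : Bool}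
    (h : D x ≠ some (!b)) :
    matchings S (D.extend x b) = {f ∈ matchings S D | assignment f x = b} := by
  ext f
  simp only [mem_filter, mem_matchings, SATerm.satisfiedBy_extend_iff h, and_assoc]

theorem mem_matchings_congr {S : Finset α} {T : SATerm (α × β)} (hT : pigeons T ⊆ S)
    {f g : α → β} (hfg : Set.EqOn f g S) : f ∈ matchings S T ↔ g ∈ matchings S T := by
  rw [mem_matchings, mem_matchings, hfg.injOn_iff]
  refine and_congr_right' (SATerm.satisfiedBy_congr fun x hx => ?_)
  simp [hfg (hT (fst_mem_pigeons hx))]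

theorem mem_matchings_insert {S : Finset α} {T : SATerm (α × β)} {a : α} (ha : a ∉ S)
    {f : α → β} :
    f ∈ matchings (insert a S) T ↔ f ∈ matchings S T ∧ f a ∉ S.image f := by
  rw [mem_matchings, mem_matchings, coe_insert, Set.injOn_insert (by simpa using ha),
    ← coe_image, mem_coe]
  tauto

theorem card_matchings_insert_mul {S : Finset α} {T : SATerm (α × β)} {a : α} (ha : a ∉ S)
    (hT : pigeons T ⊆ S) :
    #(matchings (insert a S) T) * Fintype.card β = #(matchings S T) * (Fintype.card β - #S) := by
  have hfree : #((matchings S T).sigma fun f => (S.image f)ᶜ) =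
      #(matchings S T) * (Fintype.card β - #S) := by
    rw [card_sigma, ← smul_eq_mul, ← sum_const]
    refine sum_congr rfl fun f hf => ?_
    rw [card_compl, card_image_of_injOn (mem_matchings.1 hf).1]
  have hupdate : ∀ (f : α → β) c, Set.EqOn (update f a c) f S := fun f c i hi =>
    update_of_ne (ne_of_mem_of_not_mem hi ha) c f
  rw [← hfree, ← card_univ, ← card_product]
  -- `(f, c) ↦ (update f a c, f a)` trades the value at `a` for a free hole.
  refine card_nbij' (fun p => ⟨update p.1 a p.2, p.1 a⟩) (fun q => (update q.1 a q.2, q.1 a))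
    ?_ ?_ ?_ ?_
  · rintro ⟨f, c⟩ hp
    obtain ⟨hf, hfa⟩ := (mem_matchings_insert ha).1 (mem_product.1 hp).1
    simp only [coe_sigma, Set.mem_sigma_iff, mem_coe, mem_compl]
    rw [mem_matchings_congr hT (hupdate f c), image_congr (hupdate f c)]
    exact ⟨hf, hfa⟩
  · rintro ⟨g, d⟩ hq
    simp only [coe_sigma, Set.mem_sigma_iff, mem_coe, mem_compl] at hq
    simp only [coe_product, Set.mem_prod, mem_coe, mem_univ, and_true]
    rw [mem_matchings_insert ha, mem_matchings_congr hT (hupdate g d), image_congr (hupdate g d),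
      update_self]
    exact hq
  · rintro ⟨f, c⟩ -
    simp
  · rintro ⟨g, d⟩ -
    simp

/-- For `pigeons T ⊆ S`: the probability that a uniformly random injection of `S` into `β`
satisfies `T`. -/
noncomputable def weight (S : Finset α) (T : SATerm (α × β)) : ℝ :=
  #(matchings S T) / #(matchings S (fun _ => none : SATerm (α × β)))

theorem weight_insert {S : Finset α} {T : SATerm (α × β)} {a : α} (hS : #S < Fintype.card β)
    (ha : a ∉ S) (hT : pigeons T ⊆ S) : weight (insert a S) T = weight S T := by
  set c : ℝ := ((Fintype.card β - #S : ℕ) : ℝ) / Fintype.card β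
  have hc : c ≠ 0 := div_ne_zero (Nat.cast_ne_zero.2 (by omega)) (Nat.cast_ne_zero.2 (by omega))
  have hscale : ∀ T' : SATerm (α × β), pigeons T' ⊆ S →
      (#(matchings (insert a S) T') : ℝ) = #(matchings S T') * c := by
    intro T' hT'
    rw [← mul_div_assoc, eq_div_iff (Nat.cast_ne_zero.2 (by omega))]
    exact_mod_cast card_matchings_insert_mul ha hT'
  rw [weight, weight, hscale T hT, hscale (fun _ => none) (by simp), mul_div_mul_right _ _ hc]

noncomputable def phpValue (T : SATerm (α × β)) : ℝ := weight (pigeons T) T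

theorem weight_eq_phpValue {S : Finset α} {T : SATerm (α × β)} (hT : pigeons T ⊆ S)
    (hS : #S ≤ Fintype.card β) : weight S T = phpValue T := by
  induction S using Finset.strongInduction with
  | H S ih =>
    obtain rfl | hlt := hT.eq_or_ssubset
    · rfl
    obtain ⟨a, haS, haT⟩ := exists_of_ssubset hlt
    have herase : S.erase a ⊂ S := erase_ssubset haS
    have hT' : pigeons T ⊆ S.erase a := subset_erase.2 ⟨hT, haT⟩
    rw [← insert_erase haS, weight_insert ((card_erase_lt_of_mem haS).trans_le hS)
      (notMem_erase a S) hT', ih _ herase hT' ((card_le_card herase.subset).trans hS)]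

theorem phpValue_eq_div {S : Finset α} {T : SATerm (α × β)} (hT : pigeons T ⊆ S)
    (hS : #S ≤ Fintype.card β) :
    phpValue T = #(matchings S T) / #(matchings S (fun _ => none : SATerm (α × β))) :=
  (weight_eq_phpValue hT hS).symm

theorem evalLit_phpValue_eq_div {S : Finset α} {D : SATerm (α × β)} {x : α × β}
    (hD : pigeons D ⊆ S) (hx : x.1 ∈ S) (hS : #S ≤ Fintype.card β) (b : Bool) :
    evalLit phpValue D x b =
      #{f ∈ matchings S D | assignment f x = b} /
        #(matchings S (fun _ => none : SATerm (α × β))) := by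
  unfold evalLit
  split_ifs with h
  · rw [filter_false_of_mem, card_empty, Nat.cast_zero, zero_div]
    intro f hf hfx
    have := (mem_matchings.1 hf).2 x _ h
    cases b <;> simp_all
  · rw [← matchings_extend h]
    exact phpValue_eq_div ((pigeons_extend_subset D x b).trans (insert_subset hx hD)) hS

theorem phpValue_top [Nonempty β] : phpValue (fun _ => none : SATerm (α × β)) = 1 := by
  have hne : (matchings ∅ (fun _ => none : SATerm (α × β))).Nonempty :=
    ⟨fun _ => Classical.arbitrary β, mem_matchings.2 ⟨by simp, by simp [SATerm.SatisfiedBy]⟩⟩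
  unfold phpValue
  rw [pigeons_top]
  exact div_self (by exact_mod_cast hne.card_pos.ne')

theorem phpValue_extend_add {D : SATerm (α × β)} (hD : #(pigeons D) < Fintype.card β)
    {x : α × β} (hx : D x = none) :
    phpValue (D.extend x true) + phpValue (D.extend x false) = phpValue D := by
  have hS : #(insert x.1 (pigeons D)) ≤ Fintype.card β := (card_insert_le _ _).trans hD
  have hlit := evalLit_phpValue_eq_div (subset_insert x.1 _) (mem_insert_self _ _) hS
  have htrue := hlit true
  have hfalse := hlit false
  simp only [evalLit, hx, reduceCtorEq, if_false] at htrue hfalse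
  rw [htrue, hfalse, phpValue_eq_div (subset_insert x.1 _) hS, ← add_div]
  congr 1
  rw [← Nat.cast_add, ← Fintype.sum_bool fun b => #{f ∈ matchings _ D | assignment f x = b},
    ← card_eq_sum_card_fiberwise fun f _ => mem_univ (assignment f x)]

theorem evalLit_phpValue_nonneg (D : SATerm (α × β)) (x : α × β) (b : Bool) :
    0 ≤ evalLit phpValue D x b := by
  unfold evalLit phpValue weight
  split_ifs <;> positivity

theorem evalLit_phpValue_le {D : SATerm (α × β)} (hD : #(pigeons D) < Fintype.card β)
    (x : α × β) (b : Bool) : evalLit phpValue D x b ≤ phpValue D := by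
  have hS : #(insert x.1 (pigeons D)) ≤ Fintype.card β := (card_insert_le _ _).trans hD
  rw [evalLit_phpValue_eq_div (subset_insert x.1 _) (mem_insert_self _ _) hS,
    phpValue_eq_div (subset_insert x.1 _) hS]
  gcongr
  exact filter_subset _ _

theorem phpValue_le_evalLit_add {D : SATerm (α × β)} (hD : #(pigeons D) + 2 ≤ Fintype.card β)
    {i i' : α} (hii' : i ≠ i') (j : β) :
    phpValue D ≤ evalLit phpValue D (i, j) false + evalLit phpValue D (i', j) false := by
  set S := insert i (insert i' (pigeons D))
  have hS : #S ≤ Fintype.card β :=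
    (card_insert_le _ _).trans (Nat.succ_le_succ (card_insert_le _ _)) |>.trans hD
  have hDS : pigeons D ⊆ S := (subset_insert _ _).trans (subset_insert _ _)
  have hiS : i ∈ S := mem_insert_self _ _
  have hi'S : i' ∈ S := mem_insert_of_mem (mem_insert_self _ _)
  rw [evalLit_phpValue_eq_div hDS hiS hS, evalLit_phpValue_eq_div hDS hi'S hS,
    phpValue_eq_div hDS hS, ← add_div]
  gcongr
  norm_cast
  refine (card_le_card fun f hf => ?_).trans (card_union_le _ _)
  have hinj := (mem_matchings.1 hf).1
  by_cases hfi : f i = j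
  · have hfi' : f i' ≠ j := fun h => hii' (hinj hiS hi'S (hfi.trans h.symm))
    simp [hf, hfi']
  · simp [hf, hfi]

theorem sum_evalLit_phpValue {D : SATerm (α × β)} (hD : #(pigeons D) < Fintype.card β)
    (i : α) : ∑ j, evalLit phpValue D (i, j) true = phpValue D := by
  have hS : #(insert i (pigeons D)) ≤ Fintype.card β := (card_insert_le _ _).trans hD
  rw [sum_congr rfl fun j _ =>
    evalLit_phpValue_eq_div (x := (i, j)) (subset_insert i _) (mem_insert_self i _) hS true]
  simp only [assignment_apply, decide_eq_true_eq]
  rw [← sum_div, phpValue_eq_div (subset_insert i _) hS, ← Nat.cast_sum,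
    ← card_eq_sum_card_fiberwise fun f _ => mem_univ (f i)]

end PHP

open Finset PHP in
/-- The SA rank of the unary pigeonhole principle `PHP^n_{n−1}` with equalities is at
least `n−2`: there is a function `v` on terms over the variables `P_{i,j}`
(`i ∈ [n]`, `j ∈ [n−1]`) with `v(⊤) = 1` satisfying, for every term `D` of at most
`n−3` literals, the lifted negation equalities, bounding inequalities, hole axioms
`¬P_{i,j} ∨ ¬P_{i',j}`, and pigeon equalities `Σ_j P_{i,j} = 1`. -/
theorem PHPeq_SA_rank_lower_bound (n : ℕ) (hn : 3 ≤ n) :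
    ∃ v : SATerm (Fin n × Fin (n - 1)) → ℝ,
      v (fun _ => none) = 1 ∧
      ∀ D : SATerm (Fin n × Fin (n - 1)), D.size ≤ n - 3 →
        (∀ x, D x = none → v (D.extend x true) + v (D.extend x false) = v D) ∧
        (∀ x b, 0 ≤ evalLit v D x b ∧ evalLit v D x b ≤ v D) ∧
        (∀ (i i' : Fin n) (j : Fin (n - 1)), i ≠ i' →
          v D ≤ evalLit v D (i, j) false + evalLit v D (i', j) false) ∧
        (∀ i : Fin n, ∑ j : Fin (n - 1), evalLit v D (i, j) true = v D) := by
  have : Nonempty (Fin (n - 1)) := ⟨⟨0, by omega⟩⟩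
  refine ⟨phpValue, phpValue_top, fun D hD => ?_⟩
  have hD₂ : #(pigeons D) + 2 ≤ Fintype.card (Fin (n - 1)) := by
    have := card_pigeons_le_size D
    rw [Fintype.card_fin]
    omega
  have hD₁ : #(pigeons D) < Fintype.card (Fin (n - 1)) := by omega
  exact ⟨fun x hx => phpValue_extend_add hD₁ hx,
    fun x b => ⟨evalLit_phpValue_nonneg D x b, evalLit_phpValue_le hD₁ x b⟩,
    fun i i' j hii' => phpValue_le_evalLit_add hD₂ hii' j,
    fun i => sum_evalLit_phpValue hD₁ i⟩
end
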